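/- arXiv:2109.07214 — 3 statements merged into one kernel-verified Lean document; each statement's English description precedes it below -/
import Mathlib

section
/- Let A be a set, B ⊊ A a proper subset, and C the Cantor set. Let P_B, K_B ⊆ C^B be closed, set P = P_B × C^{A∖B} and K = K_B × C^{A∖B} (as subsets of C^A = C^B × C^{A∖B}), and let f : P → K be a homeomorphism. Suppose there is a homeomorphism f_B : P_B → K_B with f_B ∘ π_B = π_B ∘ f, and f_B extends to a homeomorphism F_B of C^B. Then f extends to a homeomorphism F of C^A. -/
/-- The Cantor set. -/
abbrev Cantor : Type := ℕ → Bool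

open Set Topology



noncomputable section ExtHelp

/-- Equality set of two continuous maps into a discrete space is clopen. -/
lemma isClopen_eqSet {Z W : Type*} [TopologicalSpace Z] [TopologicalSpace W] [DiscreteTopology W]
    {f g : Z → W} (hf : Continuous f) (hg : Continuous g) :
    IsClopen {z | f z = g z} := by
  have h : {z | f z = g z} = (fun z => (f z, g z)) ⁻¹' {p : W × W | p.1 = p.2} := rfl
  rw [h]
  exact (isClopen_discrete _).preimage (hf.prodMk hg)

/-- If `S` is clopen in `Y × M` with `M` compact, the set of `y` whose whole fiber is in `S`
is clopen. -/
lemma isClopen_forall_fiber {Y M : Type*} [TopologicalSpace Y] [TopologicalSpace M]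
    [CompactSpace M] {S : Set (Y × M)} (hS : IsClopen S) :
    IsClopen {y | ∀ m, (y, m) ∈ S} := by
  constructor
  · rw [← isOpen_compl_iff, isOpen_iff_forall_mem_open]
    intro y hy
    rw [mem_compl_iff, mem_setOf_eq, not_forall] at hy
    obtain ⟨m, hm⟩ := hy
    obtain ⟨w, v, hw, hv, hyw, hmv, hsub⟩ :=
      isOpen_prod_iff.mp hS.compl.isOpen y m hm
    refine ⟨w, fun y' hy' hmem => ?_, hw, hyw⟩
    exact hsub (mk_mem_prod hy' hmv) (hmem m)
  · rw [isOpen_iff_forall_mem_open]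
    intro y hy
    obtain ⟨w, v, hw, hv, hyw, hvv, hsub⟩ :=
      generalized_tube_lemma isCompact_singleton isCompact_univ hS.isOpen
        (fun z hz => by
          obtain ⟨z1, z2⟩ := z
          obtain ⟨h1, -⟩ := hz
          rcases h1 with rfl
          exact hy z2)
    exact ⟨w, fun y' hy' m => hsub (mk_mem_prod hy' (hvv (mem_univ m))), hw, hyw rfl⟩

/-- Uniform finite support for a continuous Boolean function on `Z × (ι → Bool)`,
`Z` compact. -/
lemma finite_support_of_continuous {Z ι : Type*} [TopologicalSpace Z] [CompactSpace Z]
    (F : Z × (ι → Bool) → Bool) (hF : Continuous F) :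
    ∃ s : Finset ι, ∀ z e e', (∀ i ∈ s, e i = e' i) → F (z, e) = F (z, e') := by
  classical
  have key : ∀ w : Z × (ι → Bool), ∃ (o : Set Z) (I : Finset ι), IsOpen o ∧ w.1 ∈ o ∧
      ∀ z e, z ∈ o → (∀ i ∈ I, e i = w.2 i) → F (z, e) = F w := by
    intro w
    have h1 : IsOpen (F ⁻¹' {F w}) := (isOpen_discrete _).preimage hF
    obtain ⟨o, v, ho, hv, h1o, h2v, hsub⟩ := isOpen_prod_iff.mp h1 w.1 w.2 rfl
    obtain ⟨I, t, hIt, hpi⟩ := isOpen_pi_iff.mp hv w.2 h2v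
    refine ⟨o, I, ho, h1o, fun z e hz he => ?_⟩
    have hev : e ∈ v := hpi (fun i hi => by rw [he i hi]; exact (hIt i hi).2)
    exact hsub (mk_mem_prod hz hev)
  choose o I ho hmem hconst using key
  have hcov : (univ : Set (Z × (ι → Bool))) ⊆
      ⋃ w, o w ×ˢ {e | ∀ i ∈ I w, e i = w.2 i} := by
    intro w _
    exact mem_iUnion.mpr ⟨w, mk_mem_prod (hmem w) (fun i _ => rfl)⟩
  obtain ⟨T, hT⟩ := isCompact_univ.elim_finite_subcover
    (fun w => o w ×ˢ {e : ι → Bool | ∀ i ∈ I w, e i = w.2 i})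
    (fun w => (ho w).prod (by
      have : {e : ι → Bool | ∀ i ∈ I w, e i = w.2 i} = (↑(I w) : Set ι).pi
          (fun i => {w.2 i}) := by
        ext e; simp [Set.mem_pi]
      rw [this]
      exact isOpen_set_pi (I w).finite_toSet (fun i _ => isOpen_discrete _)))
    hcov
  refine ⟨T.biUnion I, fun z e e' h => ?_⟩
  obtain ⟨w, hw, hze⟩ := mem_iUnion₂.mp (hT (mem_univ (z, e)))
  obtain ⟨hz, he⟩ := hze
  have h1 : F (z, e) = F w := hconst w z e hz he
  have h2 : F (z, e') = F w := hconst w z e' hz (fun i hi => by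
    rw [← h i (Finset.mem_biUnion.mpr ⟨w, hw, hi⟩)]; exact he i hi)
  rw [h1, h2]

/-- Gluing continuous functions along a continuous (locally constant) index map. -/
lemma continuous_glue {Z W I : Type*} [TopologicalSpace Z] [TopologicalSpace W]
    [TopologicalSpace I] [DiscreteTopology I] {κ : Z → I} (hκ : Continuous κ)
    {f : I → Z → W} (hf : ∀ i, Continuous (f i)) : Continuous fun z => f (κ z) z := by
  rw [continuous_iff_continuousAt]
  intro z
  have hn : κ ⁻¹' {κ z} ∈ nhds z :=
    ((isOpen_discrete _).preimage hκ).mem_nhds rfl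
  have hev : (fun z' => f (κ z') z') =ᶠ[nhds z] (fun z' => f (κ z) z') := by
    filter_upwards [hn] with z' hz'
    rw [show κ z' = κ z from hz']
  exact ContinuousAt.congr ((hf (κ z)).continuousAt) hev.symm

/-- Points separated by continuous Boolean functions. -/
def BoolSep (Z : Type*) [TopologicalSpace Z] : Prop :=
  ∀ z z' : Z, z ≠ z' → ∃ F : Z → Bool, Continuous F ∧ F z ≠ F z'

lemma boolSep_bool : BoolSep Bool := fun z z' h => ⟨id, continuous_id, h⟩

lemma boolSep_pi {γ M : Type*} [TopologicalSpace M] (h : BoolSep M) : BoolSep (γ → M) := by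
  intro z z' hne
  have : ∃ c, z c ≠ z' c := by
    by_contra hc
    push_neg at hc
    exact hne (funext hc)
  obtain ⟨c, hc⟩ := this
  obtain ⟨F, hF, hFne⟩ := h (z c) (z' c) hc
  exact ⟨fun w => F (w c), hF.comp (continuous_apply c), hFne⟩

lemma boolSep_prod {X Y : Type*} [TopologicalSpace X] [TopologicalSpace Y]
    (hX : BoolSep X) (hY : BoolSep Y) : BoolSep (X × Y) := by
  intro z z' hne
  by_cases h1 : z.1 = z'.1
  · have h2 : z.2 ≠ z'.2 := fun h => hne (Prod.ext h1 h)
    obtain ⟨F, hF, hFne⟩ := hY z.2 z'.2 h2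
    exact ⟨fun w => F w.2, hF.comp continuous_snd, hFne⟩
  · obtain ⟨F, hF, hFne⟩ := hX z.1 z'.1 h1
    exact ⟨fun w => F w.1, hF.comp continuous_fst, hFne⟩

lemma isClopen_biInter_finset' {Z α : Type*} [TopologicalSpace Z] {s : Finset α}
    {f : α → Set Z} (h : ∀ i ∈ s, IsClopen (f i)) : IsClopen (⋂ i ∈ s, f i) := by
  classical
  induction s using Finset.induction_on with
  | empty => simp [isClopen_univ]
  | @insert a s hx ih =>
    rw [Finset.set_biInter_insert]
    exact (h a (Finset.mem_insert_self a s)).inter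
      (ih (fun i hi => h i (Finset.mem_insert_of_mem hi)))

/-- Clopen separation of disjoint closed sets in a compact space with Boolean separation. -/
lemma exists_clopen_sep {Z : Type*} [TopologicalSpace Z] [CompactSpace Z]
    (hsep : BoolSep Z) {C D : Set Z} (hC : IsClosed C) (hD : IsClosed D)
    (hCD : Disjoint C D) : ∃ U : Set Z, IsClopen U ∧ C ⊆ U ∧ Disjoint U D := by
  classical
  have step1 : ∀ z ∉ D, ∃ V : Set Z, IsClopen V ∧ z ∈ V ∧ Disjoint V D := by
    intro z hz
    have h1 : ∀ w : ↥D, ∃ V : Set Z, IsClopen V ∧ z ∈ V ∧ (w : Z) ∉ V := by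
      intro w
      obtain ⟨F, hF, hne⟩ := hsep z w (fun h => hz (h ▸ w.2))
      refine ⟨F ⁻¹' {F z}, (isClopen_discrete _).preimage hF, rfl, fun h => hne ?_⟩
      exact (mem_singleton_iff.mp h).symm
    choose V hV hzV hwV using h1
    have hcov : D ⊆ ⋃ w : ↥D, (V w)ᶜ := by
      intro w hw
      exact mem_iUnion.mpr ⟨⟨w, hw⟩, hwV ⟨w, hw⟩⟩
    obtain ⟨t, ht⟩ := (hD.isCompact).elim_finite_subcover (fun w : ↥D => (V w)ᶜ)
      (fun w => (hV w).compl.isOpen) hcov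
    refine ⟨⋂ w ∈ t, V w, isClopen_biInter_finset' (fun w _ => hV w), ?_, ?_⟩
    · exact mem_iInter₂.mpr (fun w _ => hzV w)
    · rw [Set.disjoint_right]
      intro w hw hmem
      obtain ⟨w', hw', hww'⟩ := mem_iUnion₂.mp (ht hw)
      exact hww' (mem_iInter₂.mp hmem w' hw')
  have h2 : ∀ z : ↥C, ∃ V : Set Z, IsClopen V ∧ (z : Z) ∈ V ∧ Disjoint V D :=
    fun z => step1 z (fun h => (Set.disjoint_left.mp hCD) z.2 h)
  choose V hV hzV hVD using h2
  have hcov : C ⊆ ⋃ z : ↥C, V z := fun z hz => mem_iUnion.mpr ⟨⟨z, hz⟩, hzV ⟨z, hz⟩⟩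
  obtain ⟨t, ht⟩ := (hC.isCompact).elim_finite_subcover (fun z : ↥C => V z)
    (fun z => (hV z).isOpen) hcov
  classical
  refine ⟨⋃ z ∈ t, V z, ?_, ht, ?_⟩
  · -- finite union of clopens
    have : (⋃ z ∈ t, V z) = (⋂ z ∈ t, (V z)ᶜ)ᶜ := by
      simp [Set.compl_iInter]
    rw [this]
    exact (isClopen_biInter_finset' (fun z _ => (hV z).compl)).compl
  · rw [Set.disjoint_left]
    intro w hw hwD
    obtain ⟨z, hz, hzw⟩ := mem_iUnion₂.mp hw
    exact Set.disjoint_left.mp (hVD z) hzw hwD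

/-- Extension of a continuous Boolean function from a closed subset. -/
lemma exists_bool_extension {Z : Type*} [TopologicalSpace Z] [CompactSpace Z] [T2Space Z]
    (hsep : BoolSep Z) {Q : Set Z} (hQ : IsClosed Q)
    (G : ↥Q → Bool) (hG : Continuous G) :
    ∃ F : Z → Bool, Continuous F ∧ ∀ q : ↥Q, F ↑q = G q := by
  classical
  haveI : CompactSpace ↥Q := isCompact_iff_compactSpace.mp hQ.isCompact
  have hCc : IsClosed (Subtype.val '' (G ⁻¹' {true}) : Set Z) :=
    (((isClosed_discrete _).preimage hG).isCompact.image continuous_subtype_val).isClosed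
  have hDc : IsClosed (Subtype.val '' (G ⁻¹' {false}) : Set Z) :=
    (((isClosed_discrete _).preimage hG).isCompact.image continuous_subtype_val).isClosed
  have hdisj : Disjoint (Subtype.val '' (G ⁻¹' {true}) : Set Z)
      (Subtype.val '' (G ⁻¹' {false})) := by
    rw [Set.disjoint_left]
    rintro z ⟨q, hq, rfl⟩ ⟨q', hq', hval⟩
    have : q = q' := Subtype.val_injective hval.symm
    rw [this] at hq
    rw [mem_preimage, mem_singleton_iff] at hq hq'
    rw [hq'] at hq
    exact Bool.false_ne_true hq
  obtain ⟨U, hU, hCU, hUD⟩ := exists_clopen_sep hsep hCc hDc hdisj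
  refine ⟨fun z => if z ∈ U then true else false, ?_, ?_⟩
  · have heq : (fun z : Z => if z ∈ U then true else false) = (fun z : Z => decide (z ∈ U)) := by
      funext z; by_cases h : z ∈ U <;> simp [h]
    rw [heq, continuous_discrete_rng]
    intro b
    cases b
    · have : (fun z : Z => decide (z ∈ U)) ⁻¹' {false} = Uᶜ := by
        ext z; by_cases h : z ∈ U <;> simp [h]
      rw [this]; exact hU.compl.isOpen
    · have : (fun z : Z => decide (z ∈ U)) ⁻¹' {true} = U := by
        ext z; by_cases h : z ∈ U <;> simp [h]
      rw [this]; exact hU.isOpen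
  · intro q
    cases hGq : G q
    · have hmem : (q : Z) ∈ Subtype.val '' (G ⁻¹' {false}) := ⟨q, by simp [hGq], rfl⟩
      have : (q : Z) ∉ U := fun h => Set.disjoint_left.mp hUD h hmem
      simp [this]
    · have hmem : (q : Z) ∈ Subtype.val '' (G ⁻¹' {true}) := ⟨q, by simp [hGq], rfl⟩
      simp [hCU hmem]

/-- Extension of a continuous map into a Cantor cube from a closed subset. -/
lemma exists_pi_extension {Z ι : Type*} [TopologicalSpace Z] [CompactSpace Z] [T2Space Z]
    (hsep : BoolSep Z) {Q : Set Z} (hQ : IsClosed Q)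
    (G : ↥Q → (ι → Bool)) (hG : Continuous G) :
    ∃ F : Z → ι → Bool, Continuous F ∧ ∀ q : ↥Q, F ↑q = G q := by
  choose F hF hFq using fun i =>
    exists_bool_extension hsep hQ (fun q => G q i) ((continuous_apply i).comp hG)
  exact ⟨fun z i => F i z, continuous_pi hF, fun q => funext (fun i => hFq i q)⟩

end ExtHelp

noncomputable section CantorComb


def resm (m : ℕ) (e : Cantor) : Fin m → Bool := fun i => e ↑i

lemma continuous_resm (m : ℕ) : Continuous (resm m) :=
  continuous_pi (fun i => continuous_apply _)

def cons' (b : Bool) (e : Cantor) : Cantor := fun n => Nat.casesOn n b (fun k => e k)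

lemma cons'_zero (b e) : cons' b e 0 = b := rfl
lemma cons'_succ (b e k) : cons' b e (k+1) = e k := rfl

def tl (e : Cantor) : Cantor := fun n => e (n+1)

lemma tl_cons' (b e) : tl (cons' b e) = e := rfl

lemma cons'_hd_tl (c : Cantor) : cons' (c 0) (tl c) = c := by
  funext n; cases n <;> rfl

lemma continuous_cons' (b : Bool) : Continuous (cons' b) := by
  apply continuous_pi
  intro n
  cases n with
  | zero => exact continuous_const
  | succ k => exact continuous_apply k

lemma continuous_tl : Continuous tl := continuous_pi (fun n => continuous_apply _)

/-- `Fin (k+1) × Cantor` is homeomorphic to `Cantor`, as a pair of mutually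
inverse continuous maps. -/
lemma finProdCantor : ∀ k : ℕ, ∃ (α : Fin (k+1) × Cantor → Cantor)
    (β : Cantor → Fin (k+1) × Cantor), Continuous α ∧ Continuous β ∧
    (∀ x, β (α x) = x) ∧ (∀ c, α (β c) = c) := by
  intro k
  induction k with
  | zero =>
    refine ⟨fun x => x.2, fun c => (0, c), continuous_snd,
      Continuous.prodMk continuous_const continuous_id, fun x => ?_, fun c => rfl⟩
    refine Prod.ext (Fin.ext ?_) rfl
    have := x.1.isLt
    omega
  | succ k ih =>
    obtain ⟨α, β, hαc, hβc, hβα, hαβ⟩ := ih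
    set g : Fin (k+2) → Fin (k+2) × Cantor → Cantor := fun i x =>
      if h : (i : ℕ) < k+1 then cons' true (α (⟨(i : ℕ), h⟩, x.2)) else cons' false x.2
      with hg
    set f : Bool → Cantor → Fin (k+2) × Cantor := fun b c =>
      cond b ((⟨((β (tl c)).1 : ℕ), Nat.lt_succ_of_lt (β (tl c)).1.isLt⟩ : Fin (k+2)),
          (β (tl c)).2)
        ((⟨k+1, Nat.lt_succ_self _⟩ : Fin (k+2)), tl c)
      with hf
    refine ⟨fun x => g x.1 x, fun c => f (c 0) c, ?_, ?_, ?_, ?_⟩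
    · exact continuous_glue continuous_fst (fun i => by
        by_cases h : (i : ℕ) < k+1
        · simp only [hg, dif_pos h]
          exact (continuous_cons' true).comp
            (hαc.comp (Continuous.prodMk continuous_const continuous_snd))
        · simp only [hg, dif_neg h]
          exact (continuous_cons' false).comp continuous_snd)
    · exact continuous_glue (continuous_apply 0) (fun b => by
        cases b
        · simp only [hf, Bool.cond_false]
          exact Continuous.prodMk continuous_const continuous_tl
        · simp only [hf, Bool.cond_true]
          refine Continuous.prodMk ?_ (continuous_snd.comp (hβc.comp continuous_tl))
          exact (continuous_of_discreteTopology
            (f := fun j : Fin (k+1) => (⟨(j : ℕ), Nat.lt_succ_of_lt j.isLt⟩ : Fin (k+2)))).comp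
            (continuous_fst.comp (hβc.comp continuous_tl)))
    · rintro ⟨i, e⟩
      by_cases h : (i : ℕ) < k+1
      · simp only [hg, dif_pos h, hf, cons'_zero, tl_cons', hβα, Bool.cond_true]
      · simp only [hg, dif_neg h, hf, cons'_zero, tl_cons', Bool.cond_false]
        refine Prod.ext (Fin.ext ?_) rfl
        have := i.isLt
        simp only []
        omega
    · intro c
      show g (f (c 0) c).1 (f (c 0) c) = c
      by_cases h0 : c 0 = true
      · rw [h0]
        simp only [hf, Bool.cond_true, hg]
        rw [dif_pos (show (((⟨((β (tl c)).1 : ℕ), Nat.lt_succ_of_lt (β (tl c)).1.isLt⟩ :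
            Fin (k+2))) : ℕ) < k+1 from (β (tl c)).1.isLt)]
        have h1 : (⟨(((⟨((β (tl c)).1 : ℕ), Nat.lt_succ_of_lt (β (tl c)).1.isLt⟩ :
            Fin (k+2))) : ℕ), (β (tl c)).1.isLt⟩ : Fin (k+1)) = (β (tl c)).1 :=
          Fin.ext rfl
        rw [h1]
        have h2 : ((β (tl c)).1, (β (tl c)).2) = β (tl c) := rfl
        rw [h2, hαβ, ← h0]
        exact cons'_hd_tl c
      · rw [Bool.not_eq_true] at h0
        rw [h0]
        simp only [hf, Bool.cond_false, hg]
        rw [dif_neg (by simp)]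
        rw [← h0]
        exact cons'_hd_tl c

def joinm (m : ℕ) (v : Fin m → Bool) (t : Cantor) : Cantor :=
  fun j => if h : j < m then v ⟨j, h⟩ else t (j - m)

def tailm (m : ℕ) (e : Cantor) : Cantor := fun n => e (n + m)

lemma tailm_joinm (m v t) : tailm m (joinm m v t) = t := by
  funext n
  simp only [tailm, joinm]
  rw [dif_neg (by omega)]
  congr 1
  omega

lemma resm_joinm (m v t) : resm m (joinm m v t) = v := by
  funext i
  simp only [resm, joinm]
  rw [dif_pos i.isLt]

lemma joinm_resm_tailm (m e) : joinm m (resm m e) (tailm m e) = e := by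
  funext j
  simp only [joinm, resm, tailm]
  by_cases h : j < m
  · rw [dif_pos h]
  · rw [dif_neg h]
    congr 1
    omega

lemma continuous_joinm (m : ℕ) : Continuous (fun p : (Fin m → Bool) × Cantor =>
    joinm m p.1 p.2) := by
  apply continuous_pi
  intro j
  by_cases h : j < m
  · simp only [joinm, dif_pos h]
    exact (continuous_apply _).comp continuous_fst
  · simp only [joinm, dif_neg h]
    exact (continuous_apply _).comp continuous_snd

lemma continuous_tailm (m : ℕ) : Continuous (tailm m) :=
  continuous_pi (fun n => continuous_apply _)

/-- A clopen subset of Cantor space has finite support. -/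
lemma clopen_support {A : Set Cantor} (hA : IsClopen A) :
    ∃ m : ℕ, ∀ e e', (∀ i < m, e i = e' i) → (e ∈ A ↔ e' ∈ A) := by
  classical
  have hdec : Continuous (fun z : PUnit.{1} × Cantor => decide (z.2 ∈ A)) := by
    rw [continuous_discrete_rng]
    intro b
    cases b
    · have : (fun z : PUnit.{1} × Cantor => decide (z.2 ∈ A)) ⁻¹' {false} = Prod.snd ⁻¹' Aᶜ := by
        ext z; by_cases h : z.2 ∈ A <;> simp [h]
      rw [this]; exact hA.compl.isOpen.preimage continuous_snd
    · have : (fun z : PUnit.{1} × Cantor => decide (z.2 ∈ A)) ⁻¹' {true} = Prod.snd ⁻¹' A := by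
        ext z; by_cases h : z.2 ∈ A <;> simp [h]
      rw [this]; exact hA.isOpen.preimage continuous_snd
  obtain ⟨s, hs⟩ := finite_support_of_continuous (Z := PUnit.{1}) _ hdec
  refine ⟨s.sup id + 1, fun e e' h => ?_⟩
  have := hs PUnit.unit e e' (fun i hi => h i (by
    have : i ≤ s.sup id := Finset.le_sup (f := id) hi
    omega))
  simpa using this

noncomputable section ClopenPair

/-- Mutually inverse continuous transfer maps between two nonempty clopen
subsets of Cantor space. -/
lemma clopen_pair {A B : Set Cantor} (hA : IsClopen A) (hB : IsClopen B)
    (hAne : A.Nonempty) (hBne : B.Nonempty) :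
    ∃ φ φ' : Cantor → Cantor, Continuous φ ∧ Continuous φ' ∧
      (∀ e ∈ A, φ e ∈ B) ∧ (∀ e ∈ B, φ' e ∈ A) ∧
      (∀ e ∈ A, φ' (φ e) = e) ∧ (∀ e ∈ B, φ (φ' e) = e) := by
  classical
  obtain ⟨mA, hmA⟩ := clopen_support hA
  obtain ⟨mB, hmB⟩ := clopen_support hB
  set m := max mA mB with hm
  have hA' : ∀ e e', (∀ i < m, e i = e' i) → (e ∈ A ↔ e' ∈ A) := fun e e' h =>
    hmA e e' (fun i hi => h i (lt_of_lt_of_le hi (le_max_left _ _)))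
  have hB' : ∀ e e', (∀ i < m, e i = e' i) → (e ∈ B ↔ e' ∈ B) := fun e e' h =>
    hmB e e' (fun i hi => h i (lt_of_lt_of_le hi (le_max_right _ _)))
  set extm : (Fin m → Bool) → Cantor := fun v j => if h : j < m then v ⟨j, h⟩ else false
    with hextm
  have hres_ext : ∀ e, ∀ i < m, e i = extm (resm m e) i := by
    intro e i hi
    simp only [hextm, dif_pos hi, resm]
  have hextresA : ∀ e, e ∈ A ↔ extm (resm m e) ∈ A := fun e => hA' _ _ (hres_ext e)
  have hextresB : ∀ e, e ∈ B ↔ extm (resm m e) ∈ B := fun e => hB' _ _ (hres_ext e)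
  have hext_id : ∀ v : Fin m → Bool, resm m (extm v) = v := by
    intro v; funext i; simp only [resm, hextm, dif_pos i.isLt]
  -- pattern subtypes
  haveI : Fintype {v : Fin m → Bool // extm v ∈ A} := Fintype.ofFinite _
  haveI : Fintype {v : Fin m → Bool // extm v ∈ B} := Fintype.ofFinite _
  set kA := Fintype.card {v : Fin m → Bool // extm v ∈ A} with hkAdef
  set kB := Fintype.card {v : Fin m → Bool // extm v ∈ B} with hkBdef
  have hkA : 0 < kA := Fintype.card_pos_iff.mpr
    ⟨⟨resm m hAne.choose, (hextresA _).mp hAne.choose_spec⟩⟩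
  have hkB : 0 < kB := Fintype.card_pos_iff.mpr
    ⟨⟨resm m hBne.choose, (hextresB _).mp hBne.choose_spec⟩⟩
  set eA := Fintype.equivFin {v : Fin m → Bool // extm v ∈ A} with heA
  set eB := Fintype.equivFin {v : Fin m → Bool // extm v ∈ B} with heB
  obtain ⟨kA', hkA'⟩ : ∃ k, kA = k + 1 := ⟨kA - 1, by omega⟩
  obtain ⟨kB', hkB'⟩ : ∃ k, kB = k + 1 := ⟨kB - 1, by omega⟩
  obtain ⟨αA, βA, hαAc, hβAc, hβαA, hαβA⟩ := finProdCantor kA'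
  obtain ⟨αB, βB, hαBc, hβBc, hβαB, hαβB⟩ := finProdCantor kB'
  -- index coding
  set cA : (Fin m → Bool) → Fin (kA' + 1) := fun v =>
    if h : extm v ∈ A then Fin.cast hkA' (eA ⟨v, h⟩) else ⟨0, Nat.succ_pos _⟩ with hcA
  set dA : Fin (kA' + 1) → (Fin m → Bool) := fun i => (eA.symm (Fin.cast hkA'.symm i)).1
    with hdA
  set cB : (Fin m → Bool) → Fin (kB' + 1) := fun v =>
    if h : extm v ∈ B then Fin.cast hkB' (eB ⟨v, h⟩) else ⟨0, Nat.succ_pos _⟩ with hcB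
  set dB : Fin (kB' + 1) → (Fin m → Bool) := fun i => (eB.symm (Fin.cast hkB'.symm i)).1
    with hdB
  have hdcA : ∀ v (h : extm v ∈ A), dA (cA v) = v := by
    intro v h
    simp only [hcA, hdA, dif_pos h, Fin.cast_cast, Fin.cast_eq_self]
    rw [Equiv.symm_apply_apply]
  have hcdA : ∀ i, cA (dA i) = i := by
    intro i
    simp only [hcA, hdA, dif_pos (eA.symm (Fin.cast hkA'.symm i)).2]
    rw [Subtype.coe_eta, Equiv.apply_symm_apply, Fin.cast_cast, Fin.cast_eq_self]
  have hdcB : ∀ v (h : extm v ∈ B), dB (cB v) = v := by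
    intro v h
    simp only [hcB, hdB, dif_pos h, Fin.cast_cast, Fin.cast_eq_self]
    rw [Equiv.symm_apply_apply]
  have hcdB : ∀ i, cB (dB i) = i := by
    intro i
    simp only [hcB, hdB, dif_pos (eB.symm (Fin.cast hkB'.symm i)).2]
    rw [Subtype.coe_eta, Equiv.apply_symm_apply, Fin.cast_cast, Fin.cast_eq_self]
  have hdAmem : ∀ i, extm (dA i) ∈ A := fun i => (eA.symm (Fin.cast hkA'.symm i)).2
  have hdBmem : ∀ i, extm (dB i) ∈ B := fun i => (eB.symm (Fin.cast hkB'.symm i)).2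
  -- transfer maps
  set τ : Fin (kA' + 1) × Cantor → Fin (kB' + 1) × Cantor := fun x => βB (αA x) with hτ
  set τ' : Fin (kB' + 1) × Cantor → Fin (kA' + 1) × Cantor := fun x => βA (αB x) with hτ'
  have hττ' : ∀ x, τ' (τ x) = x := by
    intro x; simp only [hτ, hτ', hαβB, hβαA]
  have hτ'τ : ∀ x, τ (τ' x) = x := by
    intro x; simp only [hτ, hτ', hαβA, hβαB]
  set φ : Cantor → Cantor := fun e =>
    joinm m (dB (τ (cA (resm m e), tailm m e)).1) (τ (cA (resm m e), tailm m e)).2 with hφ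
  set φ' : Cantor → Cantor := fun e =>
    joinm m (dA (τ' (cB (resm m e), tailm m e)).1) (τ' (cB (resm m e), tailm m e)).2 with hφ'
  have hφc : Continuous φ := by
    rw [hφ]
    refine Continuous.comp (continuous_joinm m) (Continuous.prodMk ?_ ?_)
    · exact (continuous_of_discreteTopology (f := dB)).comp
        (continuous_fst.comp ((hβBc.comp hαAc).comp
          (Continuous.prodMk ((continuous_of_discreteTopology (f := cA)).comp
            (continuous_resm m)) (continuous_tailm m))))
    · exact continuous_snd.comp ((hβBc.comp hαAc).comp
        (Continuous.prodMk ((continuous_of_discreteTopology (f := cA)).comp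
          (continuous_resm m)) (continuous_tailm m)))
  have hφ'c : Continuous φ' := by
    rw [hφ']
    refine Continuous.comp (continuous_joinm m) (Continuous.prodMk ?_ ?_)
    · exact (continuous_of_discreteTopology (f := dA)).comp
        (continuous_fst.comp ((hβAc.comp hαBc).comp
          (Continuous.prodMk ((continuous_of_discreteTopology (f := cB)).comp
            (continuous_resm m)) (continuous_tailm m))))
    · exact continuous_snd.comp ((hβAc.comp hαBc).comp
        (Continuous.prodMk ((continuous_of_discreteTopology (f := cB)).comp
          (continuous_resm m)) (continuous_tailm m)))
  have hmemB : ∀ e ∈ A, φ e ∈ B := by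
    intro e _
    rw [hextresB, hφ]
    simp only []
    rw [resm_joinm]
    exact hdBmem _
  have hmemA : ∀ e ∈ B, φ' e ∈ A := by
    intro e _
    rw [hextresA, hφ']
    simp only []
    rw [resm_joinm]
    exact hdAmem _
  refine ⟨φ, φ', hφc, hφ'c, hmemB, hmemA, ?_, ?_⟩
  · intro e he
    simp only [hφ, hφ']
    rw [resm_joinm, tailm_joinm, hcdB]
    have h2 : ((τ (cA (resm m e), tailm m e)).1, (τ (cA (resm m e), tailm m e)).2)
        = τ (cA (resm m e), tailm m e) := rfl
    rw [h2, hττ']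
    rw [hdcA _ ((hextresA e).mp he)]
    exact joinm_resm_tailm m e
  · intro e he
    simp only [hφ, hφ']
    rw [resm_joinm, tailm_joinm, hcdA]
    have h2 : ((τ' (cB (resm m e), tailm m e)).1, (τ' (cB (resm m e), tailm m e)).2)
        = τ' (cB (resm m e), tailm m e) := rfl
    rw [h2, hτ'τ]
    rw [hdcB _ ((hextresB e).mp he)]
    exact joinm_resm_tailm m e

end ClopenPair

noncomputable section Realizer

/-- Given compatible jet data `(p, q)` at level `n`, there is a self-homeomorphism `(h, h')`
of Cantor space whose first `n` coordinates behave like `p`, and whose inverse behaves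
like `q`. -/
lemma realizer (n : ℕ) (p q : Cantor → (Fin n → Bool)) (hp : Continuous p) (hq : Continuous q)
    (hm : ∀ s t, (∃ e, p e = s ∧ resm n e = t) ↔ (∃ e, resm n e = s ∧ q e = t)) :
    ∃ h h' : Cantor → Cantor, Continuous h ∧ Continuous h' ∧
      (∀ e, h' (h e) = e) ∧ (∀ e, h (h' e) = e) ∧
      (∀ e, resm n (h e) = p e) ∧ (∀ e, resm n (h' e) = q e) := by
  classical
  set Ac : (Fin n → Bool) → (Fin n → Bool) → Set Cantor :=
    fun s t => {e | p e = s ∧ resm n e = t} with hAcdef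
  set Bc : (Fin n → Bool) → (Fin n → Bool) → Set Cantor :=
    fun s t => {e | resm n e = s ∧ q e = t} with hBcdef
  have hAclo : ∀ s t, IsClopen (Ac s t) := fun s t =>
    (isClopen_eqSet hp continuous_const).inter
      (isClopen_eqSet (continuous_resm n) continuous_const)
  have hBclo : ∀ s t, IsClopen (Bc s t) := fun s t =>
    (isClopen_eqSet (continuous_resm n) continuous_const).inter
      (isClopen_eqSet hq continuous_const)
  have hiff : ∀ s t, (Ac s t).Nonempty ↔ (Bc s t).Nonempty := by
    intro s t
    constructor
    · rintro ⟨e, he1, he2⟩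
      obtain ⟨e', h1, h2⟩ := (hm s t).mp ⟨e, he1, he2⟩
      exact ⟨e', h1, h2⟩
    · rintro ⟨e, he1, he2⟩
      obtain ⟨e', h1, h2⟩ := (hm s t).mpr ⟨e, he1, he2⟩
      exact ⟨e', h1, h2⟩
  have key : ∀ s t, ∃ pr : (Cantor → Cantor) × (Cantor → Cantor),
      Continuous pr.1 ∧ Continuous pr.2 ∧
      ((Ac s t).Nonempty → ((∀ e ∈ Ac s t, pr.1 e ∈ Bc s t) ∧ (∀ e ∈ Bc s t, pr.2 e ∈ Ac s t) ∧
        (∀ e ∈ Ac s t, pr.2 (pr.1 e) = e) ∧ (∀ e ∈ Bc s t, pr.1 (pr.2 e) = e))) := by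
    intro s t
    by_cases hne : (Ac s t).Nonempty
    · obtain ⟨φ, φ', h1, h2, h3, h4, h5, h6⟩ :=
        clopen_pair (hAclo s t) (hBclo s t) hne ((hiff s t).mp hne)
      exact ⟨(φ, φ'), h1, h2, fun _ => ⟨h3, h4, h5, h6⟩⟩
    · exact ⟨(id, id), continuous_id, continuous_id, fun h => absurd h hne⟩
  choose pr hc1 hc2 hspec using key
  have hAmem : ∀ e, e ∈ Ac (p e) (resm n e) := fun e => ⟨rfl, rfl⟩
  have hBmem : ∀ e, e ∈ Bc (resm n e) (q e) := fun e => ⟨rfl, rfl⟩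
  refine ⟨fun e => (pr (p e) (resm n e)).1 e, fun e => (pr (resm n e) (q e)).2 e,
    ?_, ?_, ?_, ?_, ?_, ?_⟩
  · exact continuous_glue hp (fun s => continuous_glue (continuous_resm n)
      (fun t => hc1 s t))
  · exact continuous_glue (continuous_resm n) (fun s => continuous_glue hq
      (fun t => hc2 s t))
  · intro e
    obtain ⟨hmB, hmA, hBA, hAB⟩ := hspec (p e) (resm n e) ⟨e, hAmem e⟩
    have hin : (pr (p e) (resm n e)).1 e ∈ Bc (p e) (resm n e) := hmB e (hAmem e)
    have hb1 : resm n ((pr (p e) (resm n e)).1 e) = p e := hin.1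
    have hb2 : q ((pr (p e) (resm n e)).1 e) = resm n e := hin.2
    beta_reduce
    rw [hb1, hb2]
    exact hBA e (hAmem e)
  · intro e
    obtain ⟨hmB, hmA, hBA, hAB⟩ := hspec (resm n e) (q e) ((hiff _ _).mpr ⟨e, hBmem e⟩)
    have hin : (pr (resm n e) (q e)).2 e ∈ Ac (resm n e) (q e) := hmA e (hBmem e)
    have hb1 : p ((pr (resm n e) (q e)).2 e) = resm n e := hin.1
    have hb2 : resm n ((pr (resm n e) (q e)).2 e) = q e := hin.2
    beta_reduce
    rw [hb1, hb2]
    exact hAB e (hBmem e)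
  · intro e
    obtain ⟨hmB, hmA, hBA, hAB⟩ := hspec (p e) (resm n e) ⟨e, hAmem e⟩
    exact (hmB e (hAmem e)).1
  · intro e
    obtain ⟨hmB, hmA, hBA, hAB⟩ := hspec (resm n e) (q e) ((hiff _ _).mpr ⟨e, hBmem e⟩)
    exact (hmA e (hBmem e)).2

end Realizer

noncomputable section Shell

lemma resm_mono {a b : ℕ} (h : a ≤ b) {x y : Cantor} (hxy : resm b x = resm b y) :
    resm a x = resm a y := by
  funext i
  exact congrFun hxy ⟨(i : ℕ), lt_of_lt_of_le i.isLt h⟩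

/-- The shell extension lemma: a fiberwise mutually inverse pair on a subset `Q` of the base
extends to a globally fiberwise mutually inverse pair (fiber: Cantor space). -/
lemma shell_ext {Y : Type*} [TopologicalSpace Y] (Q : Set Y) (u v : Y × Cantor → Cantor)
    (hu : Continuous u) (hv : Continuous v)
    (h1 : ∀ y ∈ Q, ∀ m, v (y, u (y, m)) = m) (h2 : ∀ y ∈ Q, ∀ m, u (y, v (y, m)) = m) :
    ∃ L L' : Y × Cantor → Cantor, Continuous L ∧ Continuous L' ∧
      (∀ y m, L' (y, L (y, m)) = m) ∧ (∀ y m, L (y, L' (y, m)) = m) ∧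
      (∀ y ∈ Q, ∀ m, L (y, m) = u (y, m)) ∧ (∀ y ∈ Q, ∀ m, L' (y, m) = v (y, m)) := by
  classical
  set G : ℕ → Set Y := fun n => {y | ∀ m : Cantor,
    resm n (v (y, u (y, m))) = resm n m ∧ resm n (u (y, v (y, m))) = resm n m} with hGdef
  have hGclo : ∀ n, IsClopen (G n) := by
    intro n
    have hS : IsClopen {z : Y × Cantor |
        ((fun z : Y × Cantor => (resm n (v (z.1, u z)), resm n (u (z.1, v z)))) z =
         (fun z : Y × Cantor => (resm n z.2, resm n z.2)) z)} :=
      isClopen_eqSet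
        (Continuous.prodMk
          ((continuous_resm n).comp (hv.comp (Continuous.prodMk continuous_fst hu)))
          ((continuous_resm n).comp (hu.comp (Continuous.prodMk continuous_fst hv))))
        (Continuous.prodMk ((continuous_resm n).comp continuous_snd)
          ((continuous_resm n).comp continuous_snd))
    have heq : G n = {y | ∀ m, (y, m) ∈ {z : Y × Cantor |
        ((fun z : Y × Cantor => (resm n (v (z.1, u z)), resm n (u (z.1, v z)))) z =
         (fun z : Y × Cantor => (resm n z.2, resm n z.2)) z)}} := by
      ext y
      simp only [hGdef, mem_setOf_eq, Prod.mk.injEq]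
    rw [heq]
    exact isClopen_forall_fiber hS
  have hmono : ∀ {a b : ℕ}, a ≤ b → G b ⊆ G a := by
    intro a b hab y hy m
    exact ⟨resm_mono hab (hy m).1, resm_mono hab (hy m).2⟩
  have hG0 : ∀ y, y ∈ G 0 := by
    intro y m
    constructor <;> (funext i; exact absurd i.isLt (by omega))
  have hQG : ∀ n, Q ⊆ G n := by
    intro n y hy m
    rw [h1 y hy m, h2 y hy m]
    exact ⟨rfl, rfl⟩
  set Winf : Set Y := ⋂ n, G n with hWinf
  have hQW : Q ⊆ Winf := fun y hy => mem_iInter.mpr (fun n => hQG n hy)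
  have hWG : ∀ n, Winf ⊆ G n := fun n y hy => mem_iInter.mp hy n
  -- inverse property on Winf
  have hWinv1 : ∀ y ∈ Winf, ∀ m, v (y, u (y, m)) = m := by
    intro y hy m
    funext i
    have := congrFun ((hWG (i+1) hy m).1) ⟨i, Nat.lt_succ_self i⟩
    exact this
  have hWinv2 : ∀ y ∈ Winf, ∀ m, u (y, v (y, m)) = m := by
    intro y hy m
    funext i
    have := congrFun ((hWG (i+1) hy m).2) ⟨i, Nat.lt_succ_self i⟩
    exact this
  -- level function
  set lvl : Y → ℕ := fun y => if h : ∃ n, y ∉ G n then Nat.find h - 1 else 0 with hlvl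
  have hlvl_spec : ∀ y, y ∉ Winf → (y ∈ G (lvl y) ∧ y ∉ G (lvl y + 1)) := by
    intro y hy
    have h : ∃ n, y ∉ G n := by
      by_contra hc
      push_neg at hc
      exact hy (mem_iInter.mpr hc)
    have hfind := Nat.find_spec h
    have hpos : 0 < Nat.find h := by
      rcases Nat.eq_zero_or_pos (Nat.find h) with h0 | h0
      · exact absurd (hG0 y) (h0 ▸ hfind)
      · exact h0
    rw [hlvl]
    simp only [dif_pos h]
    constructor
    · have hlt : Nat.find h - 1 < Nat.find h := by omega
      have := Nat.find_min h hlt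
      rw [not_not] at this
      exact this
    · have : Nat.find h - 1 + 1 = Nat.find h := by omega
      rw [this]
      exact hfind
  have hlvl_unique : ∀ y n, y ∈ G n → y ∉ G (n + 1) → lvl y = n := by
    intro y n hyn hyn1
    have h : ∃ k, y ∉ G k := ⟨n + 1, hyn1⟩
    rw [hlvl]
    simp only [dif_pos h]
    have h1' : Nat.find h ≤ n + 1 := Nat.find_min' h hyn1
    have h2' : n < Nat.find h := by
      by_contra hc
      push_neg at hc
      exact (Nat.find_spec h) (hmono hc hyn)
    omega
  -- realizer package
  have key : ∀ (n : ℕ) (pq : (Cantor → Fin n → Bool) × (Cantor → Fin n → Bool)),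
      ∃ pr : (Cantor → Cantor) × (Cantor → Cantor),
      (Continuous pq.1 → Continuous pq.2 →
        (∀ s t, (∃ e, pq.1 e = s ∧ resm n e = t) ↔ (∃ e, resm n e = s ∧ pq.2 e = t)) →
        (Continuous pr.1 ∧ Continuous pr.2 ∧ (∀ e, pr.2 (pr.1 e) = e) ∧
         (∀ e, pr.1 (pr.2 e) = e) ∧ (∀ e, resm n (pr.1 e) = pq.1 e) ∧
         (∀ e, resm n (pr.2 e) = pq.2 e))) := by
    intro n pq
    by_cases h : Continuous pq.1 ∧ Continuous pq.2 ∧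
      (∀ s t, (∃ e, pq.1 e = s ∧ resm n e = t) ↔ (∃ e, resm n e = s ∧ pq.2 e = t))
    · obtain ⟨hh, hh', c1, c2, i1, i2, r1, r2⟩ := realizer n pq.1 pq.2 h.1 h.2.1 h.2.2
      exact ⟨(hh, hh'), fun _ _ _ => ⟨c1, c2, i1, i2, r1, r2⟩⟩
    · exact ⟨(id, id), fun hp hq hm => absurd ⟨hp, hq, hm⟩ h⟩
  choose real hreal using key
  -- the match condition holds at any point of G n
  have hmatch : ∀ n, ∀ y ∈ G n, ∀ s t,
      (∃ e, (fun e => resm n (u (y, e))) e = s ∧ resm n e = t) ↔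
      (∃ e, resm n e = s ∧ (fun e => resm n (v (y, e))) e = t) := by
    intro n y hy s t
    constructor
    · rintro ⟨e, he1, he2⟩
      exact ⟨u (y, e), he1, by show resm n (v (y, u (y, e))) = t; rw [(hy e).1]; exact he2⟩
    · rintro ⟨e, he1, he2⟩
      exact ⟨v (y, e), by show resm n (u (y, v (y, e))) = s; rw [(hy e).2]; exact he1, he2⟩
  have hrealY : ∀ n, ∀ y ∈ G n,
      Continuous (real n (fun e => resm n (u (y, e)), fun e => resm n (v (y, e)))).1 ∧
      Continuous (real n (fun e => resm n (u (y, e)), fun e => resm n (v (y, e)))).2 ∧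
      (∀ e, (real n (fun e => resm n (u (y, e)), fun e => resm n (v (y, e)))).2
        ((real n (fun e => resm n (u (y, e)), fun e => resm n (v (y, e)))).1 e) = e) ∧
      (∀ e, (real n (fun e => resm n (u (y, e)), fun e => resm n (v (y, e)))).1
        ((real n (fun e => resm n (u (y, e)), fun e => resm n (v (y, e)))).2 e) = e) ∧
      (∀ e, resm n ((real n (fun e => resm n (u (y, e)), fun e => resm n (v (y, e)))).1 e)
        = resm n (u (y, e))) ∧
      (∀ e, resm n ((real n (fun e => resm n (u (y, e)), fun e => resm n (v (y, e)))).2 e)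
        = resm n (v (y, e))) := by
    intro n y hy
    exact hreal n (fun e => resm n (u (y, e)), fun e => resm n (v (y, e)))
      ((continuous_resm n).comp (hu.comp (Continuous.prodMk continuous_const continuous_id)))
      ((continuous_resm n).comp (hv.comp (Continuous.prodMk continuous_const continuous_id)))
      (hmatch n y hy)
  -- definitions of the extension
  set L : Y × Cantor → Cantor := fun z =>
    if z.1 ∈ Winf then u z
    else (real (lvl z.1) (fun e => resm (lvl z.1) (u (z.1, e)),
      fun e => resm (lvl z.1) (v (z.1, e)))).1 z.2 with hL
  set L' : Y × Cantor → Cantor := fun z =>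
    if z.1 ∈ Winf then v z
    else (real (lvl z.1) (fun e => resm (lvl z.1) (u (z.1, e)),
      fun e => resm (lvl z.1) (v (z.1, e)))).2 z.2 with hL'
  have hLQ : ∀ y ∈ Q, ∀ m, L (y, m) = u (y, m) := by
    intro y hy m
    simp only [hL, if_pos (hQW hy)]
  have hLQ' : ∀ y ∈ Q, ∀ m, L' (y, m) = v (y, m) := by
    intro y hy m
    simp only [hL', if_pos (hQW hy)]
  have hinv1 : ∀ y m, L' (y, L (y, m)) = m := by
    intro y m
    by_cases hy : y ∈ Winf
    · simp only [hL, hL', if_pos hy]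
      exact hWinv1 y hy m
    · simp only [hL, hL', if_neg hy]
      exact ((hrealY (lvl y) y (hlvl_spec y hy).1).2.2.1) m
  have hinv2 : ∀ y m, L (y, L' (y, m)) = m := by
    intro y m
    by_cases hy : y ∈ Winf
    · simp only [hL, hL', if_pos hy]
      exact hWinv2 y hy m
    · simp only [hL, hL', if_neg hy]
      exact ((hrealY (lvl y) y (hlvl_spec y hy).1).2.2.2.1) m
  -- key coordinate agreement: on G (i+1), the i-th coordinate of L is that of u
  have hagree : ∀ i : ℕ, ∀ z : Y × Cantor, z.1 ∈ G (i + 1) → L z i = u z i := by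
    intro i z hz
    by_cases hzW : z.1 ∈ Winf
    · simp only [hL, if_pos hzW]
    · simp only [hL, if_neg hzW]
      have hlv := hlvl_spec z.1 hzW
      have hge : i + 1 ≤ lvl z.1 := by
        by_contra hc
        push_neg at hc
        exact hlv.2 (hmono hc hz)
      have := congrFun (((hrealY (lvl z.1) z.1 hlv.1).2.2.2.2.1) z.2)
        ⟨i, lt_of_lt_of_le (Nat.lt_succ_self i) hge⟩
      simpa [resm] using this
  have hagree' : ∀ i : ℕ, ∀ z : Y × Cantor, z.1 ∈ G (i + 1) → L' z i = v z i := by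
    intro i z hz
    by_cases hzW : z.1 ∈ Winf
    · simp only [hL', if_pos hzW]
    · simp only [hL', if_neg hzW]
      have hlv := hlvl_spec z.1 hzW
      have hge : i + 1 ≤ lvl z.1 := by
        by_contra hc
        push_neg at hc
        exact hlv.2 (hmono hc hz)
      have := congrFun (((hrealY (lvl z.1) z.1 hlv.1).2.2.2.2.2) z.2)
        ⟨i, lt_of_lt_of_le (Nat.lt_succ_self i) hge⟩
      simpa [resm] using this
  -- piece sets for continuity off Winf
  have hNclo : ∀ (n₀ : ℕ) (y₀ : Y), IsClopen {y : Y | y ∈ G n₀ ∧ y ∉ G (n₀+1) ∧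
      (∀ e, resm n₀ (u (y, e)) = resm n₀ (u (y₀, e))) ∧
      (∀ e, resm n₀ (v (y, e)) = resm n₀ (v (y₀, e)))} := by
    intro n₀ y₀
    have hc1 : IsClopen {y : Y | ∀ e, resm n₀ (u (y, e)) = resm n₀ (u (y₀, e))} := by
      have hS : IsClopen {z : Y × Cantor |
          (fun z : Y × Cantor => resm n₀ (u z)) z =
          (fun z : Y × Cantor => resm n₀ (u (y₀, z.2))) z} :=
        isClopen_eqSet ((continuous_resm n₀).comp hu)
          ((continuous_resm n₀).comp (hu.comp (Continuous.prodMk continuous_const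
            continuous_snd)))
      exact isClopen_forall_fiber hS
    have hc2 : IsClopen {y : Y | ∀ e, resm n₀ (v (y, e)) = resm n₀ (v (y₀, e))} := by
      have hS : IsClopen {z : Y × Cantor |
          (fun z : Y × Cantor => resm n₀ (v z)) z =
          (fun z : Y × Cantor => resm n₀ (v (y₀, z.2))) z} :=
        isClopen_eqSet ((continuous_resm n₀).comp hv)
          ((continuous_resm n₀).comp (hv.comp (Continuous.prodMk continuous_const
            continuous_snd)))
      exact isClopen_forall_fiber hS
    have heq : {y : Y | y ∈ G n₀ ∧ y ∉ G (n₀+1) ∧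
        (∀ e, resm n₀ (u (y, e)) = resm n₀ (u (y₀, e))) ∧
        (∀ e, resm n₀ (v (y, e)) = resm n₀ (v (y₀, e)))} =
        G n₀ ∩ ((G (n₀+1))ᶜ ∩ ({y : Y | ∀ e, resm n₀ (u (y, e)) = resm n₀ (u (y₀, e))} ∩
          {y : Y | ∀ e, resm n₀ (v (y, e)) = resm n₀ (v (y₀, e))})) := rfl
    rw [heq]
    exact (hGclo n₀).inter ((hGclo (n₀+1)).compl.inter (hc1.inter hc2))
  -- continuity of L
  have hLcont : Continuous L := by
    rw [continuous_pi_iff]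
    intro i
    rw [continuous_iff_continuousAt]
    intro z₀
    by_cases hy : z₀.1 ∈ G (i+1)
    · have hmem : (G (i+1)) ×ˢ (univ : Set Cantor) ∈ nhds z₀ :=
        ((hGclo (i+1)).isOpen.prod isOpen_univ).mem_nhds ⟨hy, mem_univ _⟩
      have hev : (fun z => L z i) =ᶠ[nhds z₀] (fun z => u z i) := by
        filter_upwards [hmem] with z hz
        exact hagree i z hz.1
      exact (((continuous_apply i).comp hu).continuousAt).congr hev.symm
    · have hyW : z₀.1 ∉ Winf := fun h => hy (hWG (i+1) h)
      have hlv := hlvl_spec z₀.1 hyW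
      have hmemN : z₀.1 ∈ {y : Y | y ∈ G (lvl z₀.1) ∧ y ∉ G (lvl z₀.1 + 1) ∧
          (∀ e, resm (lvl z₀.1) (u (y, e)) = resm (lvl z₀.1) (u (z₀.1, e))) ∧
          (∀ e, resm (lvl z₀.1) (v (y, e)) = resm (lvl z₀.1) (v (z₀.1, e)))} :=
        ⟨hlv.1, hlv.2, fun e => rfl, fun e => rfl⟩
      have hmem : ({y : Y | y ∈ G (lvl z₀.1) ∧ y ∉ G (lvl z₀.1 + 1) ∧
          (∀ e, resm (lvl z₀.1) (u (y, e)) = resm (lvl z₀.1) (u (z₀.1, e))) ∧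
          (∀ e, resm (lvl z₀.1) (v (y, e)) = resm (lvl z₀.1) (v (z₀.1, e)))}) ×ˢ
          (univ : Set Cantor) ∈ nhds z₀ :=
        (((hNclo (lvl z₀.1) z₀.1).isOpen).prod isOpen_univ).mem_nhds ⟨hmemN, mem_univ _⟩
      have hev : (fun z => L z i) =ᶠ[nhds z₀]
          (fun z => (real (lvl z₀.1) (fun e => resm (lvl z₀.1) (u (z₀.1, e)),
            fun e => resm (lvl z₀.1) (v (z₀.1, e)))).1 z.2 i) := by
        filter_upwards [hmem] with z hz
        obtain ⟨hz1, hz2, hz3, hz4⟩ := hz.1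
        have hlz : lvl z.1 = lvl z₀.1 := hlvl_unique z.1 (lvl z₀.1) hz1 hz2
        have hne : z.1 ∉ Winf := fun h => hz2 (hWG (lvl z₀.1 + 1) h)
        simp only [hL, if_neg hne]
        rw [hlz]
        have harg : (fun e => resm (lvl z₀.1) (u (z.1, e)),
            fun e => resm (lvl z₀.1) (v (z.1, e)))
            = (fun e => resm (lvl z₀.1) (u (z₀.1, e)),
              fun e => resm (lvl z₀.1) (v (z₀.1, e))) :=
          Prod.ext (funext hz3) (funext hz4)
        rw [harg]
      refine ContinuousAt.congr ?_ hev.symm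
      exact ((continuous_apply i).comp
        (((hrealY (lvl z₀.1) z₀.1 hlv.1).1).comp continuous_snd)).continuousAt
  have hLcont' : Continuous L' := by
    rw [continuous_pi_iff]
    intro i
    rw [continuous_iff_continuousAt]
    intro z₀
    by_cases hy : z₀.1 ∈ G (i+1)
    · have hmem : (G (i+1)) ×ˢ (univ : Set Cantor) ∈ nhds z₀ :=
        ((hGclo (i+1)).isOpen.prod isOpen_univ).mem_nhds ⟨hy, mem_univ _⟩
      have hev : (fun z => L' z i) =ᶠ[nhds z₀] (fun z => v z i) := by
        filter_upwards [hmem] with z hz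
        exact hagree' i z hz.1
      exact (((continuous_apply i).comp hv).continuousAt).congr hev.symm
    · have hyW : z₀.1 ∉ Winf := fun h => hy (hWG (i+1) h)
      have hlv := hlvl_spec z₀.1 hyW
      have hmemN : z₀.1 ∈ {y : Y | y ∈ G (lvl z₀.1) ∧ y ∉ G (lvl z₀.1 + 1) ∧
          (∀ e, resm (lvl z₀.1) (u (y, e)) = resm (lvl z₀.1) (u (z₀.1, e))) ∧
          (∀ e, resm (lvl z₀.1) (v (y, e)) = resm (lvl z₀.1) (v (z₀.1, e)))} :=
        ⟨hlv.1, hlv.2, fun e => rfl, fun e => rfl⟩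
      have hmem : ({y : Y | y ∈ G (lvl z₀.1) ∧ y ∉ G (lvl z₀.1 + 1) ∧
          (∀ e, resm (lvl z₀.1) (u (y, e)) = resm (lvl z₀.1) (u (z₀.1, e))) ∧
          (∀ e, resm (lvl z₀.1) (v (y, e)) = resm (lvl z₀.1) (v (z₀.1, e)))}) ×ˢ
          (univ : Set Cantor) ∈ nhds z₀ :=
        (((hNclo (lvl z₀.1) z₀.1).isOpen).prod isOpen_univ).mem_nhds ⟨hmemN, mem_univ _⟩
      have hev : (fun z => L' z i) =ᶠ[nhds z₀]
          (fun z => (real (lvl z₀.1) (fun e => resm (lvl z₀.1) (u (z₀.1, e)),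
            fun e => resm (lvl z₀.1) (v (z₀.1, e)))).2 z.2 i) := by
        filter_upwards [hmem] with z hz
        obtain ⟨hz1, hz2, hz3, hz4⟩ := hz.1
        have hlz : lvl z.1 = lvl z₀.1 := hlvl_unique z.1 (lvl z₀.1) hz1 hz2
        have hne : z.1 ∉ Winf := fun h => hz2 (hWG (lvl z₀.1 + 1) h)
        simp only [hL', if_neg hne]
        rw [hlz]
        have harg : (fun e => resm (lvl z₀.1) (u (z.1, e)),
            fun e => resm (lvl z₀.1) (v (z.1, e)))
            = (fun e => resm (lvl z₀.1) (u (z₀.1, e)),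
              fun e => resm (lvl z₀.1) (v (z₀.1, e))) :=
          Prod.ext (funext hz3) (funext hz4)
        rw [harg]
      refine ContinuousAt.congr ?_ hev.symm
      exact ((continuous_apply i).comp
        (((hrealY (lvl z₀.1) z₀.1 hlv.1).2.1).comp continuous_snd)).continuousAt
  exact ⟨L, L', hLcont, hLcont', hinv1, hinv2, hLQ, hLQ'⟩

end Shell

noncomputable section CountFiber

lemma finite_fiber_ext {Y M : Type*} [TopologicalSpace Y] [TopologicalSpace M] [Finite M]
    [DiscreteTopology M] (Q : Set Y) (u v : Y × M → M) (hu : Continuous u) (hv : Continuous v)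
    (h1 : ∀ y ∈ Q, ∀ m, v (y, u (y, m)) = m) (h2 : ∀ y ∈ Q, ∀ m, u (y, v (y, m)) = m) :
    ∃ L L' : Y × M → M, Continuous L ∧ Continuous L' ∧
      (∀ y m, L' (y, L (y, m)) = m) ∧ (∀ y m, L (y, L' (y, m)) = m) ∧
      (∀ y ∈ Q, ∀ m, L (y, m) = u (y, m)) ∧ (∀ y ∈ Q, ∀ m, L' (y, m) = v (y, m)) := by
  classical
  haveI : CompactSpace M := Finite.compactSpace
  set W : Set Y := {y | ∀ m, (y, m) ∈ {z : Y × M |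
    (fun z : Y × M => (v (z.1, u z), u (z.1, v z))) z = (fun z : Y × M => (z.2, z.2)) z}}
    with hW
  have hWclo : IsClopen W :=
    isClopen_forall_fiber (isClopen_eqSet
      (Continuous.prodMk (hv.comp (Continuous.prodMk continuous_fst hu))
        (hu.comp (Continuous.prodMk continuous_fst hv)))
      (Continuous.prodMk continuous_snd continuous_snd))
  have hQW : Q ⊆ W := by
    intro y hy
    intro m
    show (v (y, u (y, m)), u (y, v (y, m))) = (m, m)
    rw [h1 y hy m, h2 y hy m]
  have hWspec : ∀ y ∈ W, ∀ m, v (y, u (y, m)) = m ∧ u (y, v (y, m)) = m := by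
    intro y hy m
    have := hy m
    simp only [mem_setOf_eq, Prod.mk.injEq] at this
    exact this
  set L : Y × M → M := fun z => if z.1 ∈ W then u z else z.2 with hL
  set L' : Y × M → M := fun z => if z.1 ∈ W then v z else z.2 with hL'
  have hLc : Continuous L := by
    rw [continuous_iff_continuousAt]
    intro z₀
    by_cases hy : z₀.1 ∈ W
    · have hmem : W ×ˢ (univ : Set M) ∈ nhds z₀ :=
        (hWclo.isOpen.prod isOpen_univ).mem_nhds ⟨hy, mem_univ _⟩
      have hev : L =ᶠ[nhds z₀] u := by
        filter_upwards [hmem] with z hz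
        simp only [hL, if_pos hz.1]
      exact (hu.continuousAt).congr hev.symm
    · have hmem : Wᶜ ×ˢ (univ : Set M) ∈ nhds z₀ :=
        (hWclo.compl.isOpen.prod isOpen_univ).mem_nhds ⟨hy, mem_univ _⟩
      have hev : L =ᶠ[nhds z₀] Prod.snd := by
        filter_upwards [hmem] with z hz
        simp only [hL, if_neg hz.1]
      exact (continuous_snd.continuousAt).congr hev.symm
  have hLc' : Continuous L' := by
    rw [continuous_iff_continuousAt]
    intro z₀
    by_cases hy : z₀.1 ∈ W
    · have hmem : W ×ˢ (univ : Set M) ∈ nhds z₀ :=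
        (hWclo.isOpen.prod isOpen_univ).mem_nhds ⟨hy, mem_univ _⟩
      have hev : L' =ᶠ[nhds z₀] v := by
        filter_upwards [hmem] with z hz
        simp only [hL', if_pos hz.1]
      exact (hv.continuousAt).congr hev.symm
    · have hmem : Wᶜ ×ˢ (univ : Set M) ∈ nhds z₀ :=
        (hWclo.compl.isOpen.prod isOpen_univ).mem_nhds ⟨hy, mem_univ _⟩
      have hev : L' =ᶠ[nhds z₀] Prod.snd := by
        filter_upwards [hmem] with z hz
        simp only [hL', if_neg hz.1]
      exact (continuous_snd.continuousAt).congr hev.symm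
  refine ⟨L, L', hLc, hLc', ?_, ?_, ?_, ?_⟩
  · intro y m
    by_cases hy : y ∈ W
    · simp only [hL, hL', if_pos hy]
      exact (hWspec y hy m).1
    · simp only [hL, hL', if_neg hy]
  · intro y m
    by_cases hy : y ∈ W
    · simp only [hL, hL', if_pos hy]
      exact (hWspec y hy m).2
    · simp only [hL, hL', if_neg hy]
  · intro y hy m
    simp only [hL, if_pos (hQW hy)]
  · intro y hy m
    simp only [hL', if_pos (hQW hy)]

/-- Extension lemma with countable Boolean-cube fiber. -/
lemma countable_fiber_ext {Y D : Type*} [TopologicalSpace Y] [Countable D] (Q : Set Y)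
    (u v : Y × (D → Bool) → (D → Bool)) (hu : Continuous u) (hv : Continuous v)
    (h1 : ∀ y ∈ Q, ∀ m, v (y, u (y, m)) = m) (h2 : ∀ y ∈ Q, ∀ m, u (y, v (y, m)) = m) :
    ∃ L L' : Y × (D → Bool) → (D → Bool), Continuous L ∧ Continuous L' ∧
      (∀ y m, L' (y, L (y, m)) = m) ∧ (∀ y m, L (y, L' (y, m)) = m) ∧
      (∀ y ∈ Q, ∀ m, L (y, m) = u (y, m)) ∧ (∀ y ∈ Q, ∀ m, L' (y, m) = v (y, m)) := by
  classical
  cases finite_or_infinite D with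
  | inl hfin =>
    exact finite_fiber_ext Q u v hu hv h1 h2
  | inr hinf =>
    obtain ⟨den⟩ := nonempty_denumerable D
    letI := den
    set eqv : D ≃ ℕ := Denumerable.eqv D with heqv
    set toC : (D → Bool) → Cantor := fun m n => m (eqv.symm n) with htoC
    set toD : Cantor → (D → Bool) := fun c d => c (eqv d) with htoD
    have hCD : ∀ c, toC (toD c) = c := by
      intro c; funext n; simp only [htoC, htoD, Equiv.apply_symm_apply]
    have hDC : ∀ m, toD (toC m) = m := by
      intro m; funext d; simp only [htoC, htoD, Equiv.symm_apply_apply]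
    have hcC : Continuous toC := continuous_pi (fun n => continuous_apply _)
    have hcD : Continuous toD := continuous_pi (fun d => continuous_apply _)
    obtain ⟨L, L', hLc, hLc', hi1, hi2, hm1, hm2⟩ := shell_ext Q
      (fun z => toC (u (z.1, toD z.2))) (fun z => toC (v (z.1, toD z.2)))
      (hcC.comp (hu.comp (Continuous.prodMk continuous_fst (hcD.comp continuous_snd))))
      (hcC.comp (hv.comp (Continuous.prodMk continuous_fst (hcD.comp continuous_snd))))
      (by
        intro y hy m
        show toC (v (y, toD (toC (u (y, toD m))))) = m
        rw [hDC, h1 y hy, hCD])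
      (by
        intro y hy m
        show toC (u (y, toD (toC (v (y, toD m))))) = m
        rw [hDC, h2 y hy, hCD])
    refine ⟨fun z => toD (L (z.1, toC z.2)), fun z => toD (L' (z.1, toC z.2)),
      hcD.comp (hLc.comp (Continuous.prodMk continuous_fst (hcC.comp continuous_snd))),
      hcD.comp (hLc'.comp (Continuous.prodMk continuous_fst (hcC.comp continuous_snd))),
      ?_, ?_, ?_, ?_⟩
    · intro y m
      show toD (L' (y, toC (toD (L (y, toC m))))) = m
      rw [hCD, hi1, hDC]
    · intro y m
      show toD (L (y, toC (toD (L' (y, toC m))))) = m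
      rw [hCD, hi2, hDC]
    · intro y hy m
      show toD (L (y, toC m)) = u (y, m)
      rw [hm1 y hy]
      show toD (toC (u (y, toD (toC m)))) = u (y, m)
      rw [hDC, hDC]
    · intro y hy m
      show toD (L' (y, toC m)) = v (y, m)
      rw [hm2 y hy]
      show toD (toC (v (y, toD (toC m)))) = v (y, m)
      rw [hDC, hDC]

end CountFiber

noncomputable section Skew

/-- A partial skew-product extension, defined on the coordinates in `U`. -/
structure PartialSol {X ι : Type*} [TopologicalSpace X]
    (P : Set X) (u v : X × (ι → Bool) → ι → Bool) (sup : ι → Finset ι) where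
  U : Set ι
  Φ : X × (ι → Bool) → ι → Bool
  Φ' : X × (ι → Bool) → ι → Bool
  hcl : ∀ j ∈ U, ∀ i ∈ sup j, i ∈ U
  hc : Continuous Φ
  hc' : Continuous Φ'
  hid : ∀ z j, j ∉ U → Φ z j = z.2 j
  hid' : ∀ z j, j ∉ U → Φ' z j = z.2 j
  hdep : ∀ x e e', (∀ i ∈ U, e i = e' i) → ∀ j ∈ U, Φ (x, e) j = Φ (x, e') j
  hdep' : ∀ x e e', (∀ i ∈ U, e i = e' i) → ∀ j ∈ U, Φ' (x, e) j = Φ' (x, e') j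
  hinv : ∀ z, Φ' (z.1, Φ z) = z.2
  hinv' : ∀ z, Φ (z.1, Φ' z) = z.2
  hmatch : ∀ x ∈ P, ∀ e, ∀ j ∈ U, Φ (x, e) j = u (x, e) j
  hmatch' : ∀ x ∈ P, ∀ e, ∀ j ∈ U, Φ' (x, e) j = v (x, e) j

variable {X ι : Type*} [TopologicalSpace X]
  {P : Set X} {u v : X × (ι → Bool) → ι → Bool} {sup : ι → Finset ι}

def PLE (a b : PartialSol P u v sup) : Prop :=
  a.U ⊆ b.U ∧ (∀ z, ∀ j ∈ a.U, b.Φ z j = a.Φ z j) ∧ (∀ z, ∀ j ∈ a.U, b.Φ' z j = a.Φ' z j)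

instance : IsRefl (PartialSol P u v sup) PLE :=
  ⟨fun _ => ⟨subset_rfl, fun _ _ _ => rfl, fun _ _ _ => rfl⟩⟩

lemma PLE_trans {a b c : PartialSol P u v sup} (hab : PLE a b) (hbc : PLE b c) : PLE a c :=
  ⟨hab.1.trans hbc.1, fun z j hj => (hbc.2.1 z j (hab.1 hj)).trans (hab.2.1 z j hj),
    fun z j hj => (hbc.2.2 z j (hab.1 hj)).trans (hab.2.2 z j hj)⟩

lemma PLE_chain_bound (c : Set (PartialSol P u v sup)) (hc : IsChain PLE c) :
    ∃ ub, ∀ a ∈ c, PLE a ub := by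
  classical
  set Φc : X × (ι → Bool) → ι → Bool := fun z j =>
    if h : ∃ a, a ∈ c ∧ j ∈ a.U then (h.choose).Φ z j else z.2 j with hΦc
  set Φc' : X × (ι → Bool) → ι → Bool := fun z j =>
    if h : ∃ a, a ∈ c ∧ j ∈ a.U then (h.choose).Φ' z j else z.2 j with hΦc'
  have hcoh : ∀ (a : PartialSol P u v sup), a ∈ c → ∀ j ∈ a.U,
      ∀ (b : PartialSol P u v sup), b ∈ c → j ∈ b.U →
      ∀ z, b.Φ z j = a.Φ z j ∧ b.Φ' z j = a.Φ' z j := by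
    intro a ha j hja b hb hjb z
    rcases eq_or_ne a b with rfl | hne
    · exact ⟨rfl, rfl⟩
    · rcases hc.total ha hb with h | h
      · exact ⟨h.2.1 z j hja, h.2.2 z j hja⟩
      · exact ⟨(h.2.1 z j hjb).symm, (h.2.2 z j hjb).symm⟩
  have hΦc_eq : ∀ (a : PartialSol P u v sup), a ∈ c → ∀ j ∈ a.U, ∀ z,
      Φc z j = a.Φ z j := by
    intro a ha j hj z
    have h : ∃ b, b ∈ c ∧ j ∈ b.U := ⟨a, ha, hj⟩
    simp only [hΦc, dif_pos h]
    exact (hcoh a ha j hj h.choose h.choose_spec.1 h.choose_spec.2 z).1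
  have hΦc'_eq : ∀ (a : PartialSol P u v sup), a ∈ c → ∀ j ∈ a.U, ∀ z,
      Φc' z j = a.Φ' z j := by
    intro a ha j hj z
    have h : ∃ b, b ∈ c ∧ j ∈ b.U := ⟨a, ha, hj⟩
    simp only [hΦc', dif_pos h]
    exact (hcoh a ha j hj h.choose h.choose_spec.1 h.choose_spec.2 z).2
  refine ⟨⟨{j | ∃ a, a ∈ c ∧ j ∈ a.U}, Φc, Φc', ?_, ?_, ?_, ?_, ?_, ?_, ?_, ?_, ?_, ?_, ?_⟩,
    ?_⟩
  · rintro j ⟨a, ha, hja⟩ i hi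
    exact ⟨a, ha, a.hcl j hja i hi⟩
  · apply continuous_pi
    intro j
    by_cases h : ∃ a, a ∈ c ∧ j ∈ a.U
    · have : (fun z => Φc z j) = fun z => (h.choose).Φ z j := by
        funext z; simp only [hΦc, dif_pos h]
      rw [this]
      exact (continuous_apply j).comp h.choose.hc
    · have : (fun z => Φc z j) = fun z => z.2 j := by
        funext z; simp only [hΦc, dif_neg h]
      rw [this]
      exact (continuous_apply j).comp continuous_snd
  · apply continuous_pi
    intro j
    by_cases h : ∃ a, a ∈ c ∧ j ∈ a.U
    · have : (fun z => Φc' z j) = fun z => (h.choose).Φ' z j := by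
        funext z; simp only [hΦc', dif_pos h]
      rw [this]
      exact (continuous_apply j).comp h.choose.hc'
    · have : (fun z => Φc' z j) = fun z => z.2 j := by
        funext z; simp only [hΦc', dif_neg h]
      rw [this]
      exact (continuous_apply j).comp continuous_snd
  · intro z j hj
    exact dif_neg hj
  · intro z j hj
    exact dif_neg hj
  · rintro x e e' hee j ⟨a, ha, hja⟩
    rw [hΦc_eq a ha j hja (x, e), hΦc_eq a ha j hja (x, e')]
    exact a.hdep x e e' (fun i hi => hee i ⟨a, ha, hi⟩) j hja
  · rintro x e e' hee j ⟨a, ha, hja⟩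
    rw [hΦc'_eq a ha j hja (x, e), hΦc'_eq a ha j hja (x, e')]
    exact a.hdep' x e e' (fun i hi => hee i ⟨a, ha, hi⟩) j hja
  · intro z
    funext j
    by_cases hj : ∃ a, a ∈ c ∧ j ∈ a.U
    · obtain ⟨a, ha, hja⟩ := hj
      rw [hΦc'_eq a ha j hja (z.1, Φc z)]
      have hstep : a.Φ' (z.1, Φc z) j = a.Φ' (z.1, a.Φ z) j :=
        a.hdep' z.1 (Φc z) (a.Φ z) (fun i hi => hΦc_eq a ha i hi z) j hja
      rw [hstep]
      exact congrFun (a.hinv z) j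
    · show Φc' (z.1, Φc z) j = z.2 j
      have h1 : Φc' (z.1, Φc z) j = Φc z j := by simp only [hΦc', dif_neg hj]
      have h2 : Φc z j = z.2 j := by simp only [hΦc, dif_neg hj]
      rw [h1, h2]
  · intro z
    funext j
    by_cases hj : ∃ a, a ∈ c ∧ j ∈ a.U
    · obtain ⟨a, ha, hja⟩ := hj
      rw [hΦc_eq a ha j hja (z.1, Φc' z)]
      have hstep : a.Φ (z.1, Φc' z) j = a.Φ (z.1, a.Φ' z) j :=
        a.hdep z.1 (Φc' z) (a.Φ' z) (fun i hi => hΦc'_eq a ha i hi z) j hja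
      rw [hstep]
      exact congrFun (a.hinv' z) j
    · show Φc (z.1, Φc' z) j = z.2 j
      have h1 : Φc (z.1, Φc' z) j = Φc' z j := by simp only [hΦc, dif_neg hj]
      have h2 : Φc' z j = z.2 j := by simp only [hΦc', dif_neg hj]
      rw [h1, h2]
  · rintro x hx e j ⟨a, ha, hja⟩
    rw [hΦc_eq a ha j hja (x, e)]
    exact a.hmatch x hx e j hja
  · rintro x hx e j ⟨a, ha, hja⟩
    rw [hΦc'_eq a ha j hja (x, e)]
    exact a.hmatch' x hx e j hja
  · intro a ha
    exact ⟨fun j hj => ⟨a, ha, hj⟩, fun z j hj => hΦc_eq a ha j hj z,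
      fun z j hj => hΦc'_eq a ha j hj z⟩

end Skew

/-- The skew-product extension theorem: a continuous fiberwise mutually inverse pair over a
subset `P` of a compact base extends to a global continuous fiberwise mutually inverse pair. -/
theorem skew_extend {X ι : Type*} [TopologicalSpace X] [CompactSpace X]
    (P : Set X) (u v : X × (ι → Bool) → (ι → Bool))
    (hu : Continuous u) (hv : Continuous v)
    (huv : ∀ x ∈ P, ∀ e, v (x, u (x, e)) = e) (hvu : ∀ x ∈ P, ∀ e, u (x, v (x, e)) = e) :
    ∃ Ψ Ψ' : X × (ι → Bool) → (ι → Bool), Continuous Ψ ∧ Continuous Ψ' ∧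
      (∀ z : X × (ι → Bool), Ψ' (z.1, Ψ z) = z.2) ∧
      (∀ z : X × (ι → Bool), Ψ (z.1, Ψ' z) = z.2) ∧
      (∀ x ∈ P, ∀ e, Ψ (x, e) = u (x, e)) ∧ (∀ x ∈ P, ∀ e, Ψ' (x, e) = v (x, e)) := by
  classical
  choose su hsu using fun j : ι =>
    finite_support_of_continuous (fun z => u z j) ((continuous_apply j).comp hu)
  choose sv hsv using fun j : ι =>
    finite_support_of_continuous (fun z => v z j) ((continuous_apply j).comp hv)
  set sup : ι → Finset ι := fun j => su j ∪ sv j with hsupdef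
  have hsupu : ∀ (j : ι) (x : X) (e e' : ι → Bool), (∀ i ∈ sup j, e i = e' i) →
      u (x, e) j = u (x, e') j := fun j x e e' h =>
    hsu j x e e' (fun i hi => h i (Finset.mem_union_left _ hi))
  have hsupv : ∀ (j : ι) (x : X) (e e' : ι → Bool), (∀ i ∈ sup j, e i = e' i) →
      v (x, e) j = v (x, e') j := fun j x e e' h =>
    hsv j x e e' (fun i hi => h i (Finset.mem_union_right _ hi))
  obtain ⟨M, hM⟩ := exists_maximal_of_chains_bounded
    (r := PLE (P := P) (u := u) (v := v) (sup := sup))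
    (PLE_chain_bound) (fun {a b c} hab hbc => PLE_trans hab hbc)
  have hMU : M.U = Set.univ := by
    by_contra hMne
    have hex : ∃ j₀, j₀ ∉ M.U := by
      by_contra hall
      push_neg at hall
      exact hMne (Set.eq_univ_of_forall hall)
    obtain ⟨j₀, hj₀⟩ := hex
    -- support closure of {j₀}
    set itr : ℕ → Set ι := fun n => Nat.rec ({j₀} : Set ι)
      (fun _ S => S ∪ ⋃ j ∈ S, ↑(sup j)) n with hitr
    have hitr0 : itr 0 = {j₀} := rfl
    have hitrS : ∀ n, itr (n+1) = itr n ∪ ⋃ j ∈ itr n, ↑(sup j) := fun n => rfl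
    set CL : Set ι := ⋃ n, itr n with hCLdef
    have hitrcnt : ∀ n, (itr n).Countable := by
      intro n
      induction n with
      | zero => rw [hitr0]; exact Set.countable_singleton _
      | succ n ih =>
        rw [hitrS]
        exact ih.union (Set.Countable.biUnion ih (fun j _ => (sup j).countable_toSet))
    have hCLcnt : CL.Countable := Set.countable_iUnion hitrcnt
    have hCLsub : ∀ j ∈ CL, ∀ i ∈ sup j, i ∈ CL := by
      intro j hj i hi
      obtain ⟨n, hn⟩ := Set.mem_iUnion.mp hj
      refine Set.mem_iUnion.mpr ⟨n+1, ?_⟩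
      rw [hitrS]
      exact Or.inr (Set.mem_biUnion hn hi)
    have hj₀CL : j₀ ∈ CL := Set.mem_iUnion.mpr ⟨0, rfl⟩
    set D : Set ι := CL \ M.U with hDdef
    have hDM : ∀ i ∈ D, i ∉ M.U := fun i hi => hi.2
    set U2 : Set ι := M.U ∪ CL with hU2def
    have hU2cl : ∀ j ∈ U2, ∀ i ∈ sup j, i ∈ U2 := by
      rintro j (hj | hj) i hi
      · exact Or.inl (M.hcl j hj i hi)
      · exact Or.inr (hCLsub j hj i hi)
    have hMsubU2 : M.U ⊆ U2 := Set.subset_union_left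
    have hDU2 : D ⊆ U2 := fun i hi => Or.inr hi.1
    have hsplit : ∀ i ∈ U2, i ∉ D → i ∈ M.U := by
      rintro i (h | h) hiD
      · exact h
      · by_contra hM'
        exact hiD ⟨h, hM'⟩
    haveI : Countable ↥D := (hCLcnt.mono Set.diff_subset).to_subtype
    -- patch and selection maps
    set patch : (ι → Bool) → (↥D → Bool) → (ι → Bool) := fun w m j =>
      if h : j ∈ D then m ⟨j, h⟩ else w j with hpatch
    set sel : (ι → Bool) → (ι → Bool) := fun w j => if j ∈ M.U then w j else false with hsel
    have hpatchD : ∀ w m (d : ↥D), patch w m ↑d = m d := by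
      intro w m d
      simp only [hpatch, dif_pos d.2, Subtype.coe_eta]
    have hpatchN : ∀ w m i, i ∉ D → patch w m i = w i := by
      intro w m i hi
      simp only [hpatch, dif_neg hi]
    have hselM : ∀ w i, i ∈ M.U → sel w i = w i := by
      intro w i hi
      simp only [hsel, if_pos hi]
    have hpatchc : Continuous (fun zm : (X × (ι → Bool)) × (↥D → Bool) =>
        patch zm.1.2 zm.2) := by
      apply continuous_pi
      intro j
      by_cases hj : j ∈ D
      · have heq : (fun zm : (X × (ι → Bool)) × (↥D → Bool) => patch zm.1.2 zm.2 j)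
            = fun zm => zm.2 ⟨j, hj⟩ := by
          funext zm; simp only [hpatch, dif_pos hj]
        rw [heq]
        exact (continuous_apply _).comp continuous_snd
      · have heq : (fun zm : (X × (ι → Bool)) × (↥D → Bool) => patch zm.1.2 zm.2 j)
            = fun zm => zm.1.2 j := by
          funext zm; simp only [hpatch, dif_neg hj]
        rw [heq]
        exact (continuous_apply _).comp (continuous_snd.comp continuous_fst)
    set Q' : Set (X × (ι → Bool)) := {z | z.1 ∈ P} with hQ'def
    set uh : (X × (ι → Bool)) × (↥D → Bool) → (↥D → Bool) := fun zm d =>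
      u (zm.1.1, M.Φ' (zm.1.1, patch zm.1.2 zm.2)) ↑d with huhdef
    set vh : (X × (ι → Bool)) × (↥D → Bool) → (↥D → Bool) := fun zm d =>
      v (zm.1.1, patch zm.1.2 zm.2) ↑d with hvhdef
    have huhc : Continuous uh := by
      apply continuous_pi
      intro d
      exact (continuous_apply (↑d : ι)).comp (hu.comp (Continuous.prodMk
        (continuous_fst.comp continuous_fst)
        (M.hc'.comp (Continuous.prodMk (continuous_fst.comp continuous_fst) hpatchc))))
    have hvhc : Continuous vh := by
      apply continuous_pi
      intro d
      exact (continuous_apply (↑d : ι)).comp (hv.comp (Continuous.prodMk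
        (continuous_fst.comp continuous_fst) hpatchc))
    have hkey1 : ∀ z ∈ Q', ∀ m, vh (z, uh (z, m)) = m := by
      rintro ⟨x, w⟩ hx m
      funext d₀
      show v (x, patch w (fun d => u (x, M.Φ' (x, patch w m)) ↑d)) ↑d₀ = m d₀
      have hd₀U2 : (↑d₀ : ι) ∈ U2 := hDU2 d₀.2
      have hagree : ∀ i ∈ sup (↑d₀ : ι),
          patch w (fun d => u (x, M.Φ' (x, patch w m)) ↑d) i
            = u (x, M.Φ' (x, patch w m)) i := by
        intro i hi
        have hiU2 : i ∈ U2 := hU2cl _ hd₀U2 i hi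
        by_cases hiD : i ∈ D
        · exact hpatchD w (fun d => u (x, M.Φ' (x, patch w m)) ↑d) ⟨i, hiD⟩
        · have hiM : i ∈ M.U := hsplit i hiU2 hiD
          have e1 : patch w (fun d => u (x, M.Φ' (x, patch w m)) ↑d) i = w i :=
            hpatchN w (fun d => u (x, M.Φ' (x, patch w m)) ↑d) i hiD
          have e2 : u (x, M.Φ' (x, patch w m)) i = M.Φ (x, M.Φ' (x, patch w m)) i :=
            (M.hmatch x hx _ i hiM).symm
          have e3 : M.Φ (x, M.Φ' (x, patch w m)) i = patch w m i :=
            congrFun (M.hinv' (x, patch w m)) i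
          have e4 : patch w m i = w i := hpatchN w m i hiD
          exact e1.trans (e2.trans (e3.trans e4)).symm
      rw [hsupv (↑d₀ : ι) x _ _ hagree]
      rw [congrFun (huv x hx (M.Φ' (x, patch w m))) (↑d₀ : ι)]
      rw [M.hid' (x, patch w m) ↑d₀ (hDM ↑d₀ d₀.2)]
      exact hpatchD w m d₀
    have hkey2 : ∀ z ∈ Q', ∀ m, uh (z, vh (z, m)) = m := by
      rintro ⟨x, w⟩ hx m
      funext d₀
      show u (x, M.Φ' (x, patch w (fun d => v (x, patch w m) ↑d))) ↑d₀ = m d₀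
      have hd₀U2 : (↑d₀ : ι) ∈ U2 := hDU2 d₀.2
      have hagree : ∀ i ∈ sup (↑d₀ : ι),
          M.Φ' (x, patch w (fun d => v (x, patch w m) ↑d)) i = v (x, patch w m) i := by
        intro i hi
        have hiU2 : i ∈ U2 := hU2cl _ hd₀U2 i hi
        by_cases hiD : i ∈ D
        · rw [M.hid' _ i (hDM i hiD)]
          exact hpatchD w (fun d => v (x, patch w m) ↑d) ⟨i, hiD⟩
        · have hiM : i ∈ M.U := hsplit i hiU2 hiD
          rw [M.hmatch' x hx _ i hiM]
          apply hsupv i x _ _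
          intro i' hi'
          have hi'M : i' ∈ M.U := M.hcl i hiM i' hi'
          have hi'D : i' ∉ D := fun h => (hDM i' h) hi'M
          have e1 : patch w (fun d => v (x, patch w m) ↑d) i' = w i' :=
            hpatchN w (fun d => v (x, patch w m) ↑d) i' hi'D
          have e2 : patch w m i' = w i' := hpatchN w m i' hi'D
          rw [e1, e2]
      rw [hsupu (↑d₀ : ι) x _ _ hagree]
      rw [congrFun (hvu x hx (patch w m)) (↑d₀ : ι)]
      exact hpatchD w m d₀
    obtain ⟨Λ, Λ', hΛc, hΛc', hΛi1, hΛi2, hΛm1, hΛm2⟩ :=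
      countable_fiber_ext Q' uh vh huhc hvhc hkey1 hkey2
    -- successor partial solution
    set Φ₂ : X × (ι → Bool) → ι → Bool := fun z j =>
      if h : j ∈ D then Λ ((z.1, sel (M.Φ z)), fun d => z.2 ↑d) ⟨j, h⟩ else M.Φ z j
      with hΦ₂
    set Φ₂' : X × (ι → Bool) → ι → Bool := fun z j =>
      if h : j ∈ D then Λ' ((z.1, sel z.2), fun d => z.2 ↑d) ⟨j, h⟩ else M.Φ' z j
      with hΦ₂'
    have hΦ₂M : ∀ z, ∀ i ∈ M.U, Φ₂ z i = M.Φ z i := by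
      intro z i hi
      simp only [hΦ₂, dif_neg (fun h => hDM i h hi)]
    have hΦ₂'M : ∀ z, ∀ i ∈ M.U, Φ₂' z i = M.Φ' z i := by
      intro z i hi
      simp only [hΦ₂', dif_neg (fun h => hDM i h hi)]
    have hΦ₂D : ∀ z (d : ↥D), Φ₂ z ↑d = Λ ((z.1, sel (M.Φ z)), fun d' => z.2 ↑d') d := by
      intro z d
      simp only [hΦ₂, dif_pos d.2, Subtype.coe_eta]
    have hΦ₂'D : ∀ z (d : ↥D), Φ₂' z ↑d = Λ' ((z.1, sel z.2), fun d' => z.2 ↑d') d := by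
      intro z d
      simp only [hΦ₂', dif_pos d.2, Subtype.coe_eta]
    have hselc : ∀ (f : X × (ι → Bool) → ι → Bool), Continuous f →
        Continuous (fun z => sel (f z)) := by
      intro f hf
      apply continuous_pi
      intro j
      by_cases hj : j ∈ M.U
      · have heq : (fun z => sel (f z) j) = fun z => f z j := by
          funext z; simp only [hsel, if_pos hj]
        rw [heq]
        exact (continuous_apply j).comp hf
      · have heq : (fun z => sel (f z) j) = fun _ => false := by
          funext z; simp only [hsel, if_neg hj]
        rw [heq]
        exact continuous_const
    have hsndD : Continuous (fun z : X × (ι → Bool) => fun d : ↥D => z.2 ↑d) :=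
      continuous_pi (fun d => (continuous_apply _).comp continuous_snd)
    have hΦ₂c : Continuous Φ₂ := by
      apply continuous_pi
      intro j
      by_cases hj : j ∈ D
      · have heq : (fun z => Φ₂ z j) = fun z =>
            Λ ((z.1, sel (M.Φ z)), fun d => z.2 ↑d) ⟨j, hj⟩ := by
          funext z; simp only [hΦ₂, dif_pos hj]
        rw [heq]
        exact (continuous_apply _).comp (hΛc.comp (Continuous.prodMk
          (Continuous.prodMk continuous_fst (hselc _ M.hc)) hsndD))
      · have heq : (fun z => Φ₂ z j) = fun z => M.Φ z j := by
          funext z; simp only [hΦ₂, dif_neg hj]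
        rw [heq]
        exact (continuous_apply j).comp M.hc
    have hΦ₂'c : Continuous Φ₂' := by
      apply continuous_pi
      intro j
      by_cases hj : j ∈ D
      · have heq : (fun z => Φ₂' z j) = fun z =>
            Λ' ((z.1, sel z.2), fun d => z.2 ↑d) ⟨j, hj⟩ := by
          funext z; simp only [hΦ₂', dif_pos hj]
        rw [heq]
        exact (continuous_apply _).comp (hΛc'.comp (Continuous.prodMk
          (Continuous.prodMk continuous_fst (hselc _ continuous_snd)) hsndD))
      · have heq : (fun z => Φ₂' z j) = fun z => M.Φ' z j := by
          funext z; simp only [hΦ₂', dif_neg hj]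
        rw [heq]
        exact (continuous_apply j).comp M.hc'
    have hid₂ : ∀ z j, j ∉ U2 → Φ₂ z j = z.2 j := by
      intro z j hj
      have hjD : j ∉ D := fun h => hj (hDU2 h)
      have hjM : j ∉ M.U := fun h => hj (hMsubU2 h)
      simp only [hΦ₂, dif_neg hjD]
      exact M.hid z j hjM
    have hid₂' : ∀ z j, j ∉ U2 → Φ₂' z j = z.2 j := by
      intro z j hj
      have hjD : j ∉ D := fun h => hj (hDU2 h)
      have hjM : j ∉ M.U := fun h => hj (hMsubU2 h)
      simp only [hΦ₂', dif_neg hjD]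
      exact M.hid' z j hjM
    have hdep₂ : ∀ x e e', (∀ i ∈ U2, e i = e' i) → ∀ j ∈ U2,
        Φ₂ (x, e) j = Φ₂ (x, e') j := by
      intro x e e' h j hj
      have hMagree : ∀ i ∈ M.U, e i = e' i := fun i hi => h i (hMsubU2 hi)
      by_cases hjD : j ∈ D
      · simp only [hΦ₂, dif_pos hjD]
        have h1 : sel (M.Φ (x, e)) = sel (M.Φ (x, e')) := by
          funext i
          by_cases hi : i ∈ M.U
          · simp only [hsel, if_pos hi]
            exact M.hdep x e e' hMagree i hi
          · simp only [hsel, if_neg hi]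
        have h2 : (fun d : ↥D => e ↑d) = (fun d : ↥D => e' ↑d) := by
          funext d; exact h ↑d (hDU2 d.2)
        rw [h1, h2]
      · simp only [hΦ₂, dif_neg hjD]
        exact M.hdep x e e' hMagree j (hsplit j hj hjD)
    have hdep₂' : ∀ x e e', (∀ i ∈ U2, e i = e' i) → ∀ j ∈ U2,
        Φ₂' (x, e) j = Φ₂' (x, e') j := by
      intro x e e' h j hj
      have hMagree : ∀ i ∈ M.U, e i = e' i := fun i hi => h i (hMsubU2 hi)
      by_cases hjD : j ∈ D
      · simp only [hΦ₂', dif_pos hjD]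
        have h1 : sel e = sel e' := by
          funext i
          by_cases hi : i ∈ M.U
          · simp only [hsel, if_pos hi]
            exact hMagree i hi
          · simp only [hsel, if_neg hi]
        have h2 : (fun d : ↥D => e ↑d) = (fun d : ↥D => e' ↑d) := by
          funext d; exact h ↑d (hDU2 d.2)
        rw [h1, h2]
      · simp only [hΦ₂', dif_neg hjD]
        exact M.hdep' x e e' hMagree j (hsplit j hj hjD)
    have hinv₂ : ∀ z : X × (ι → Bool), Φ₂' (z.1, Φ₂ z) = z.2 := by
      rintro ⟨x, e⟩
      funext j
      have hmΦ : ∀ i ∈ M.U, Φ₂ (x, e) i = M.Φ (x, e) i := fun i hi => hΦ₂M (x, e) i hi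
      by_cases hj : j ∈ D
      · show Φ₂' (x, Φ₂ (x, e)) j = e j
        simp only [hΦ₂', dif_pos hj]
        have hselm : sel (Φ₂ (x, e)) = sel (M.Φ (x, e)) := by
          funext i
          by_cases hi : i ∈ M.U
          · simp only [hsel, if_pos hi]
            exact hmΦ i hi
          · simp only [hsel, if_neg hi]
        have hcoord : (fun d : ↥D => Φ₂ (x, e) ↑d)
            = Λ ((x, sel (M.Φ (x, e))), fun d => e ↑d) := by
          funext d
          exact hΦ₂D (x, e) d
        rw [hselm, hcoord, hΛi1 (x, sel (M.Φ (x, e))) (fun d => e ↑d)]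
      · show Φ₂' (x, Φ₂ (x, e)) j = e j
        simp only [hΦ₂', dif_neg hj]
        by_cases hjM : j ∈ M.U
        · have hstep : M.Φ' (x, Φ₂ (x, e)) j = M.Φ' (x, M.Φ (x, e)) j :=
            M.hdep' x _ _ hmΦ j hjM
          rw [hstep]
          exact congrFun (M.hinv (x, e)) j
        · rw [M.hid' _ j hjM]
          show Φ₂ (x, e) j = e j
          simp only [hΦ₂, dif_neg hj]
          exact M.hid (x, e) j hjM
    have hinv₂' : ∀ z : X × (ι → Bool), Φ₂ (z.1, Φ₂' z) = z.2 := by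
      rintro ⟨x, mm⟩
      funext j
      have he'M : ∀ i ∈ M.U, Φ₂' (x, mm) i = M.Φ' (x, mm) i := fun i hi => hΦ₂'M (x, mm) i hi
      by_cases hj : j ∈ D
      · show Φ₂ (x, Φ₂' (x, mm)) j = mm j
        simp only [hΦ₂, dif_pos hj]
        have hsel2 : sel (M.Φ (x, Φ₂' (x, mm))) = sel mm := by
          funext i
          by_cases hi : i ∈ M.U
          · simp only [hsel, if_pos hi]
            have hstep : M.Φ (x, Φ₂' (x, mm)) i = M.Φ (x, M.Φ' (x, mm)) i :=
              M.hdep x _ _ he'M i hi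
            rw [hstep]
            exact congrFun (M.hinv' (x, mm)) i
          · simp only [hsel, if_neg hi]
        have hcoord : (fun d : ↥D => Φ₂' (x, mm) ↑d)
            = Λ' ((x, sel mm), fun d => mm ↑d) := by
          funext d
          exact hΦ₂'D (x, mm) d
        rw [hsel2, hcoord, hΛi2 (x, sel mm) (fun d => mm ↑d)]
      · show Φ₂ (x, Φ₂' (x, mm)) j = mm j
        simp only [hΦ₂, dif_neg hj]
        by_cases hjM : j ∈ M.U
        · have hstep : M.Φ (x, Φ₂' (x, mm)) j = M.Φ (x, M.Φ' (x, mm)) j :=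
            M.hdep x _ _ he'M j hjM
          rw [hstep]
          exact congrFun (M.hinv' (x, mm)) j
        · rw [M.hid _ j hjM]
          show Φ₂' (x, mm) j = mm j
          simp only [hΦ₂', dif_neg hj]
          exact M.hid' (x, mm) j hjM
    have hmatch₂ : ∀ x ∈ P, ∀ e, ∀ j ∈ U2, Φ₂ (x, e) j = u (x, e) j := by
      intro x hx e j hj
      by_cases hjD : j ∈ D
      · simp only [hΦ₂, dif_pos hjD]
        rw [hΛm1 ((x : X), sel (M.Φ (x, e))) hx (fun d => e ↑d)]
        show u (x, M.Φ' (x, patch (sel (M.Φ (x, e))) (fun d => e ↑d))) j = u (x, e) j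
        apply hsupu j x
        intro i hi
        have hiU2 : i ∈ U2 := hU2cl j hj i hi
        by_cases hiD : i ∈ D
        · rw [M.hid' _ i (hDM i hiD)]
          exact hpatchD (sel (M.Φ (x, e))) (fun d => e ↑d) ⟨i, hiD⟩
        · have hiM := hsplit i hiU2 hiD
          have hagg : ∀ i' ∈ M.U, patch (sel (M.Φ (x, e))) (fun d => e ↑d) i'
              = M.Φ (x, e) i' := by
            intro i' hi'
            have hi'D : i' ∉ D := fun h => hDM i' h hi'
            have e1 : patch (sel (M.Φ (x, e))) (fun d => e ↑d) i' = sel (M.Φ (x, e)) i' :=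
              hpatchN (sel (M.Φ (x, e))) (fun d => e ↑d) i' hi'D
            rw [e1]
            exact hselM _ i' hi'
          have hstep : M.Φ' (x, patch (sel (M.Φ (x, e))) (fun d => e ↑d)) i
              = M.Φ' (x, M.Φ (x, e)) i := M.hdep' x _ _ hagg i hiM
          rw [hstep]
          exact congrFun (M.hinv (x, e)) i
      · simp only [hΦ₂, dif_neg hjD]
        exact M.hmatch x hx e j (hsplit j hj hjD)
    have hmatch₂' : ∀ x ∈ P, ∀ e, ∀ j ∈ U2, Φ₂' (x, e) j = v (x, e) j := by
      intro x hx e j hj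
      by_cases hjD : j ∈ D
      · simp only [hΦ₂', dif_pos hjD]
        rw [hΛm2 ((x : X), sel e) hx (fun d => e ↑d)]
        show v (x, patch (sel e) (fun d => e ↑d)) j = v (x, e) j
        apply hsupv j x
        intro i hi
        have hiU2 : i ∈ U2 := hU2cl j hj i hi
        by_cases hiD : i ∈ D
        · exact hpatchD (sel e) (fun d => e ↑d) ⟨i, hiD⟩
        · have e1 : patch (sel e) (fun d => e ↑d) i = sel e i :=
            hpatchN (sel e) (fun d => e ↑d) i hiD
          rw [e1]
          exact hselM e i (hsplit i hiU2 hiD)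
      · simp only [hΦ₂', dif_neg hjD]
        exact M.hmatch' x hx e j (hsplit j hj hjD)
    have hMb : PLE M (⟨U2, Φ₂, Φ₂', hU2cl, hΦ₂c, hΦ₂'c, hid₂, hid₂', hdep₂, hdep₂',
        hinv₂, hinv₂', hmatch₂, hmatch₂'⟩ : PartialSol P u v sup) :=
      ⟨hMsubU2, fun z j hj => hΦ₂M z j hj, fun z j hj => hΦ₂'M z j hj⟩
    have hbM := hM _ hMb
    exact hj₀ (hbM.1 (Or.inr hj₀CL))
  refine ⟨M.Φ, M.Φ', M.hc, M.hc', M.hinv, M.hinv', ?_, ?_⟩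
  · intro x hx e
    funext j
    exact M.hmatch x hx e j (hMU ▸ Set.mem_univ j)
  · intro x hx e
    funext j
    exact M.hmatch' x hx e j (hMU ▸ Set.mem_univ j)

theorem extend_from_factor
    {A : Type*} (B : Set A) (hB : B ≠ Set.univ)
    (PB KB : Set (B → Cantor)) (hPB : IsClosed PB) (hKB : IsClosed KB)
    (P : Set (A → Cantor)) (K : Set (A → Cantor))
    (hP : P = {x : A → Cantor | (fun b : B => x b) ∈ PB})
    (hK : K = {x : A → Cantor | (fun b : B => x b) ∈ KB})
    (f : P ≃ₜ K)
    (fB : PB ≃ₜ KB)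
    (hcomm : ∀ p : P,
      (fun b : B => (f p : A → Cantor) b) =
        ((fB ⟨fun b : B => (p : A → Cantor) b, hP ▸ p.2⟩ : KB) : B → Cantor))
    (FB : (B → Cantor) ≃ₜ (B → Cantor))
    (hFB : ∀ q : PB, FB (q : B → Cantor) = (fB q : B → Cantor)) :
    ∃ F : (A → Cantor) ≃ₜ (A → Cantor),
      ∀ p : P, F (p : A → Cantor) = (f p : A → Cantor) := by
  classical
  subst hP
  subst hK
  letI : DecidablePred (fun a : A => a ∈ B) := fun a => Classical.propDecidable _
  set S : (A → Cantor) ≃ₜ ((∀ _b : {a : A // a ∈ B}, Cantor) ×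
      (∀ _c : {a : A // ¬ a ∈ B}, Cantor)) :=
    Homeomorph.piEquivPiSubtypeProd (fun a : A => a ∈ B) (fun _ => Cantor) with hS
  -- fiber coordinates
  set ι : Type _ := {a : A // ¬ a ∈ B} × ℕ with hι
  set ρ : ({a : A // ¬ a ∈ B} → Cantor) ≃ₜ (ι → Bool) :=
    { toFun := fun g q => g q.1 q.2
      invFun := fun g c n => g (c, n)
      left_inv := fun g => rfl
      right_inv := fun g => rfl
      continuous_toFun := continuous_pi
        (fun q => (continuous_apply q.2).comp (continuous_apply q.1))
      continuous_invFun := continuous_pi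
        (fun c => continuous_pi (fun n => continuous_apply (c, n))) } with hρ
  -- basic projection computations for S
  have hproj : ∀ (x : {a : A // a ∈ B} → Cantor) (e2 : {a : A // ¬ a ∈ B} → Cantor)
      (b : {a : A // a ∈ B}), S.symm (x, e2) ↑b = x b := by
    intro x e2 b
    show (Equiv.piEquivPiSubtypeProd (fun a : A => a ∈ B) (fun _ => Cantor)).symm (x, e2) ↑b
      = x b
    simp only [Equiv.piEquivPiSubtypeProd, Equiv.coe_fn_symm_mk, dif_pos b.2,
      Subtype.coe_eta]
  have hprojC : ∀ (x : {a : A // a ∈ B} → Cantor) (e2 : {a : A // ¬ a ∈ B} → Cantor)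
      (c : {a : A // ¬ a ∈ B}), S.symm (x, e2) ↑c = e2 c := by
    intro x e2 c
    show (Equiv.piEquivPiSubtypeProd (fun a : A => a ∈ B) (fun _ => Cantor)).symm (x, e2) ↑c
      = e2 c
    simp only [Equiv.piEquivPiSubtypeProd, Equiv.coe_fn_symm_mk, dif_neg c.2,
      Subtype.coe_eta]
  have hfst : ∀ (g : A → Cantor), (S g).1 = fun b : {a : A // a ∈ B} => g ↑b := fun g => rfl
  have hsnd : ∀ (g : A → Cantor), (S g).2 = fun c : {a : A // ¬ a ∈ B} => g ↑c := fun g => rfl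
  have hBproj : ∀ (x : {a : A // a ∈ B} → Cantor) (e2 : {a : A // ¬ a ∈ B} → Cantor),
      (fun b : {a : A // a ∈ B} => S.symm (x, e2) ↑b) = x := by
    intro x e2
    funext b
    exact hproj x e2 b
  -- membership lemmas
  have hmemP : ∀ (x : {a : A // a ∈ B} → Cantor), x ∈ PB → ∀ (e2 : _),
      S.symm (x, e2) ∈ {g : A → Cantor | (fun b : B => g b) ∈ PB} := by
    intro x hx e2
    show (fun b : B => S.symm (x, e2) ↑b) ∈ PB
    rw [hBproj x e2]
    exact hx
  have hmemK : ∀ (x : {a : A // a ∈ B} → Cantor), x ∈ KB → ∀ (e2 : _),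
      S.symm (x, e2) ∈ {g : A → Cantor | (fun b : B => g b) ∈ KB} := by
    intro x hx e2
    show (fun b : B => S.symm (x, e2) ↑b) ∈ KB
    rw [hBproj x e2]
    exact hx
  -- base space and closed subset
  set Q : Set (({a : A // a ∈ B} → Cantor) × (ι → Bool)) := Prod.fst ⁻¹' PB with hQ
  have hQclosed : IsClosed Q := hPB.preimage continuous_fst
  have hsep : BoolSep ((({a : A // a ∈ B} → Cantor)) × (ι → Bool)) :=
    boolSep_prod (boolSep_pi (boolSep_pi boolSep_bool)) (boolSep_pi boolSep_bool)
  -- the fiberwise data coming from f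
  set G : ↥Q → (ι → Bool) := fun q =>
    ρ ((S ↑(f ⟨S.symm (q.1.1, ρ.symm q.1.2), hmemP q.1.1 q.2 _⟩)).2) with hG
  set G' : ↥Q → (ι → Bool) := fun q =>
    ρ ((S ↑(f.symm ⟨S.symm (↑(fB ⟨q.1.1, q.2⟩), ρ.symm q.1.2),
      hmemK ↑(fB ⟨q.1.1, q.2⟩) (fB ⟨q.1.1, q.2⟩).2 _⟩)).2) with hG'
  have hGc : Continuous G := by
    apply ρ.continuous.comp
    apply continuous_snd.comp
    apply S.continuous.comp
    apply continuous_subtype_val.comp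
    apply f.continuous.comp
    apply Continuous.subtype_mk
    exact S.symm.continuous.comp
      (Continuous.prodMk (continuous_fst.comp continuous_subtype_val)
        (ρ.symm.continuous.comp (continuous_snd.comp continuous_subtype_val)))
  have hG'c : Continuous G' := by
    apply ρ.continuous.comp
    apply continuous_snd.comp
    apply S.continuous.comp
    apply continuous_subtype_val.comp
    apply f.symm.continuous.comp
    apply Continuous.subtype_mk
    refine S.symm.continuous.comp (Continuous.prodMk ?_
      (ρ.symm.continuous.comp (continuous_snd.comp continuous_subtype_val)))
    exact continuous_subtype_val.comp (fB.continuous.comp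
      (Continuous.subtype_mk (continuous_fst.comp continuous_subtype_val) _))
  -- extend the data continuously to everything
  obtain ⟨uext, huc, huq⟩ := exists_pi_extension hsep hQclosed G hGc
  obtain ⟨vext, hvc, hvq⟩ := exists_pi_extension hsep hQclosed G' hG'c
  have hkeyA : ∀ (x : {a : A // a ∈ B} → Cantor), x ∈ PB → ∀ (e : ι → Bool),
      vext (x, uext (x, e)) = e := by
    intro x hx e
    have h1 : uext (x, e) = G ⟨(x, e), hx⟩ := huq ⟨(x, e), hx⟩
    have h2 : vext (x, uext (x, e)) = G' ⟨(x, uext (x, e)), hx⟩ := hvq ⟨(x, uext (x, e)), hx⟩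
    rw [h2]
    set pP : ↥{g : A → Cantor | (fun b : B => g b) ∈ PB} :=
      ⟨S.symm (x, ρ.symm e), hmemP x hx _⟩ with hpP
    have hGval : G ⟨(x, e), hx⟩ = ρ ((S ↑(f pP)).2) := rfl
    have hweq : (⟨fun b : B => (pP : A → Cantor) ↑b, pP.2⟩ : ↥PB) = ⟨x, hx⟩ :=
      Subtype.ext (hBproj x _)
    have hargfst : (S ↑(f pP)).1 = ↑(fB ⟨x, hx⟩) := by
      calc (S ↑(f pP)).1
          = ↑(fB ⟨fun b : B => (pP : A → Cantor) ↑b, pP.2⟩) := hcomm pP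
        _ = ↑(fB ⟨x, hx⟩) := by rw [hweq]
    have hK1 : (⟨S.symm (↑(fB ⟨x, hx⟩), ρ.symm (uext (x, e))),
        hmemK ↑(fB ⟨x, hx⟩) (fB ⟨x, hx⟩).2 _⟩ :
        ↥{g : A → Cantor | (fun b : B => g b) ∈ KB}) = f pP := by
      apply Subtype.ext
      show S.symm (↑(fB ⟨x, hx⟩), ρ.symm (uext (x, e))) = ↑(f pP)
      rw [h1, hGval, ρ.symm_apply_apply, ← hargfst, Prod.mk.eta]
      exact S.symm_apply_apply _
    show ρ ((S ↑(f.symm ⟨S.symm (↑(fB ⟨x, hx⟩), ρ.symm (uext (x, e))),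
      hmemK ↑(fB ⟨x, hx⟩) (fB ⟨x, hx⟩).2 _⟩)).2) = e
    rw [hK1, f.symm_apply_apply]
    show ρ ((S (S.symm (x, ρ.symm e))).2) = e
    rw [S.apply_symm_apply]
    exact ρ.apply_symm_apply e
  have hkeyB : ∀ (x : {a : A // a ∈ B} → Cantor), x ∈ PB → ∀ (m : ι → Bool),
      uext (x, vext (x, m)) = m := by
    intro x hx m
    have h1 : vext (x, m) = G' ⟨(x, m), hx⟩ := hvq ⟨(x, m), hx⟩
    have h2 : uext (x, vext (x, m)) = G ⟨(x, vext (x, m)), hx⟩ := huq ⟨(x, vext (x, m)), hx⟩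
    rw [h2]
    set kk : ↥{g : A → Cantor | (fun b : B => g b) ∈ KB} :=
      ⟨S.symm (↑(fB ⟨x, hx⟩), ρ.symm m), hmemK ↑(fB ⟨x, hx⟩) (fB ⟨x, hx⟩).2 _⟩ with hkk
    have hG'val : G' ⟨(x, m), hx⟩ = ρ ((S ↑(f.symm kk)).2) := rfl
    have hfst2 : (S ↑(f.symm kk)).1 = x := by
      have hc : (fun b : B => ((f (f.symm kk) : ↥{g : A → Cantor |
          (fun b : B => g b) ∈ KB}) : A → Cantor) ↑b)
          = ↑(fB ⟨fun b : B => ((f.symm kk : A → Cantor)) ↑b, (f.symm kk).2⟩) :=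
        hcomm (f.symm kk)
      rw [f.apply_symm_apply] at hc
      have hkB : (fun b : B => (kk : A → Cantor) ↑b) = ↑(fB ⟨x, hx⟩) := hBproj _ _
      rw [hkB] at hc
      have hinj : (⟨fun b : B => ((f.symm kk : A → Cantor)) ↑b, (f.symm kk).2⟩ : ↥PB)
          = ⟨x, hx⟩ := by
        apply fB.toEquiv.injective
        apply Subtype.ext
        exact hc.symm
      exact congrArg Subtype.val hinj
    have hP2 : (⟨S.symm (x, ρ.symm (vext (x, m))), hmemP x hx _⟩ :
        ↥{g : A → Cantor | (fun b : B => g b) ∈ PB}) = f.symm kk := by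
      apply Subtype.ext
      show S.symm (x, ρ.symm (vext (x, m))) = ↑(f.symm kk)
      rw [h1, hG'val, ρ.symm_apply_apply, ← hfst2, Prod.mk.eta]
      exact S.symm_apply_apply _
    show ρ ((S ↑(f ⟨S.symm (x, ρ.symm (vext (x, m))), hmemP x hx _⟩)).2) = m
    rw [hP2, f.apply_symm_apply]
    show ρ ((S (S.symm (↑(fB ⟨x, hx⟩), ρ.symm m))).2) = m
    rw [S.apply_symm_apply]
    exact ρ.apply_symm_apply m
  obtain ⟨Ψ, Ψ', hΨc, hΨc', hΨi1, hΨi2, hΨm, hΨm'⟩ :=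
    skew_extend PB uext vext huc hvc hkeyA hkeyB
  set T : (({a : A // a ∈ B} → Cantor) × (ι → Bool)) ≃ₜ
      (({a : A // a ∈ B} → Cantor) × (ι → Bool)) :=
    { toFun := fun z => (FB z.1, Ψ z)
      invFun := fun w => (FB.symm w.1, Ψ' (FB.symm w.1, w.2))
      left_inv := by
        rintro ⟨x, e⟩
        show (FB.symm (FB x), Ψ' (FB.symm (FB x), Ψ (x, e))) = (x, e)
        rw [FB.symm_apply_apply]
        exact Prod.ext rfl (hΨi1 (x, e))
      right_inv := by
        rintro ⟨y, m⟩
        show (FB (FB.symm y), Ψ (FB.symm y, Ψ' (FB.symm y, m))) = (y, m)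
        rw [FB.apply_symm_apply]
        exact Prod.ext rfl (hΨi2 (FB.symm y, m))
      continuous_toFun := (FB.continuous.comp continuous_fst).prodMk hΨc
      continuous_invFun := (FB.symm.continuous.comp continuous_fst).prodMk
        (hΨc'.comp ((FB.symm.continuous.comp continuous_fst).prodMk continuous_snd)) }
    with hT
  refine ⟨S.trans ((Homeomorph.prodCongr (Homeomorph.refl _) ρ).trans (T.trans
    ((Homeomorph.prodCongr (Homeomorph.refl _) ρ.symm).trans S.symm))), ?_⟩
  intro p
  show S.symm ((Homeomorph.prodCongr (Homeomorph.refl _) ρ.symm)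
      (T ((Homeomorph.prodCongr (Homeomorph.refl _) ρ) (S ↑p)))) = ↑(f p)
  have hx : (S ↑p).1 ∈ PB := p.2
  have hstep1 : (Homeomorph.prodCongr (Homeomorph.refl
      ({a : A // a ∈ B} → Cantor)) ρ) (S ↑p) = ((S ↑p).1, ρ (S ↑p).2) := rfl
  rw [hstep1]
  have hstep2 : T ((S ↑p).1, ρ (S ↑p).2)
      = (FB (S ↑p).1, Ψ ((S ↑p).1, ρ (S ↑p).2)) := rfl
  rw [hstep2]
  have hΨval : Ψ ((S ↑p).1, ρ (S ↑p).2) = ρ ((S ↑(f p)).2) := by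
    rw [hΨm (S ↑p).1 hx (ρ (S ↑p).2)]
    rw [huq ⟨((S ↑p).1, ρ (S ↑p).2), hx⟩]
    show ρ ((S ↑(f ⟨S.symm ((S ↑p).1, ρ.symm (ρ (S ↑p).2)), hmemP (S ↑p).1 hx _⟩)).2)
      = ρ ((S ↑(f p)).2)
    have hpeq : (⟨S.symm ((S ↑p).1, ρ.symm (ρ (S ↑p).2)), hmemP (S ↑p).1 hx _⟩ :
        ↥{g : A → Cantor | (fun b : B => g b) ∈ PB}) = p := by
      apply Subtype.ext
      show S.symm ((S ↑p).1, ρ.symm (ρ (S ↑p).2)) = ↑p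
      rw [ρ.symm_apply_apply, Prod.mk.eta]
      exact S.symm_apply_apply _
    rw [hpeq]
  have hFBval : FB (S ↑p).1 = (S ↑(f p)).1 := by
    have h1 : FB (S ↑p).1 = ↑(fB ⟨(S ↑p).1, hx⟩) := hFB ⟨(S ↑p).1, hx⟩
    have h2 : (S ↑(f p)).1 = ↑(fB ⟨(S ↑p).1, hx⟩) := hcomm p
    rw [h1, h2]
  rw [hΨval, hFBval]
  show S.symm ((S ↑(f p)).1, ρ.symm (ρ ((S ↑(f p)).2))) = ↑(f p)
  rw [ρ.symm_apply_apply, Prod.mk.eta]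
  exact S.symm_apply_apply _
end CantorComb
end

section
/- Let f be a homeomorphism between two closed nowhere dense subsets P and K of the Cantor set C = {0,1}^ℕ. Then f extends to a homeomorphism of C onto itself. -/
namespace KR

/-- Cylinder of length `n` around `x`. -/
def Cyl (x : Cantor) (n : ℕ) : Set Cantor := {y | ∀ i < n, y i = x i}

lemma self_mem_cyl (x : Cantor) (n : ℕ) : x ∈ Cyl x n := fun _ _ => rfl

lemma isClopen_cyl (x : Cantor) (n : ℕ) : IsClopen (Cyl x n) := by
  have : Cyl x n = ⋂ i ∈ Finset.range n, (fun y : Cantor => y i) ⁻¹' {x i} := by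
    ext y; simp [Cyl]
  rw [this]
  apply Set.Finite.isClopen_biInter (Finset.range n).finite_toSet
  intro i _
  exact (isClopen_discrete {x i}).preimage (continuous_apply i)

/-- Cylinders form a neighbourhood basis. -/
lemma exists_cyl_subset {U : Set Cantor} (hU : IsOpen U) {x : Cantor} (hx : x ∈ U) :
    ∃ n, Cyl x n ⊆ U := by
  have h : U ∈ nhds x := hU.mem_nhds hx
  rw [nhds_pi, Filter.mem_pi] at h
  obtain ⟨I, hI, s, hs, hsub⟩ := h
  obtain ⟨n, hn⟩ := hI.bddAbove
  refine ⟨n + 1, fun y hy => hsub fun i hi => ?_⟩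
  have : y i = x i := hy i (Nat.lt_succ_of_le (hn hi))
  rw [this]
  have := hs i
  rwa [nhds_discrete, Filter.mem_pure] at this

/-- Uniform level for a clopen set. -/
lemma exists_level {U : Set Cantor} (hU : IsClopen U) :
    ∃ L, ∀ x ∈ U, Cyl x L ⊆ U := by
  have hcomp : IsCompact U := hU.isClosed.isCompact
  have hex : ∀ x : Cantor, x ∈ U → ∃ n : ℕ, Cyl x n ⊆ U := fun x hx =>
    exists_cyl_subset hU.isOpen hx
  classical
  choose! n hn using hex
  obtain ⟨t, htU, hcov⟩ := hcomp.elim_nhds_subcover (fun x => Cyl x (n x))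
    (fun x hx => (isClopen_cyl _ _).isOpen.mem_nhds (self_mem_cyl _ _))
  obtain ⟨L, hL⟩ : ∃ L, ∀ x ∈ t, n x ≤ L := ⟨t.sup n, fun x hx => Finset.le_sup hx⟩
  refine ⟨L, fun x hx y hy => ?_⟩
  obtain ⟨z, hz, hxz⟩ : ∃ z ∈ t, x ∈ Cyl z (n z) := by
    simpa using hcov hx
  refine hn z (htU z hz) (fun i hi => ?_)
  have h1 : y i = x i := hy i (lt_of_lt_of_le hi (hL z hz))
  rw [h1]; exact hxz i hi

end KR
namespace KR
open Set

/-- `Small n S`: all elements of `S` agree on coordinates `< n`. -/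
def Small (n : ℕ) (S : Set Cantor) : Prop := ∀ x ∈ S, ∀ y ∈ S, ∀ i < n, x i = y i

lemma Small.mono {n m : ℕ} {S : Set Cantor} (h : Small n S) (hmn : m ≤ n) : Small m S :=
  fun x hx y hy i hi => h x hx y hy i (lt_of_lt_of_le hi hmn)

lemma Small.subset {n : ℕ} {S T : Set Cantor} (h : Small n S) (hT : T ⊆ S) : Small n T :=
  fun x hx y hy i hi => h x (hT hx) y (hT hy) i hi

lemma small_cyl (x : Cantor) (n : ℕ) : Small n (Cyl x n) :=
  fun a ha b hb i hi => (ha i hi).trans (hb i hi).symm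

lemma Small.zero (S : Set Cantor) : Small 0 S := fun _ _ _ _ i hi => absurd hi (Nat.not_lt_zero i)

lemma Small.subset_cyl {n : ℕ} {S : Set Cantor} (h : Small n S) {x : Cantor} (hx : x ∈ S) :
    S ⊆ Cyl x n := fun y hy i hi => h y hy x hx i hi

/-- A pairwise-disjoint list of nonempty sets has pairwise *distinct* disjoint members. -/
lemma pairwise_disjoint_of_ne {l : List (Set Cantor)} (hl : l.Pairwise Disjoint)
    {A B : Set Cantor} (hA : A ∈ l) (hB : B ∈ l) (hAB : A ≠ B) : Disjoint A B :=
  List.Pairwise.forall hl hA hB hAB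

lemma nodup_of_pairwise_disjoint {l : List (Set Cantor)} (hl : l.Pairwise Disjoint)
    (hne : ∀ A ∈ l, A.Nonempty) : l.Nodup := by
  induction l with
  | nil => exact List.nodup_nil
  | cons A l ih =>
    rcases List.pairwise_cons.1 hl with ⟨hAl, hl'⟩
    refine List.nodup_cons.2 ⟨fun hAm => ?_, ih hl' (fun B hB => hne B (List.mem_cons_of_mem _ hB))⟩
    have := hAl A hAm
    rcases hne A List.mem_cons_self with ⟨x, hx⟩
    exact (this.ne_of_mem hx hx) rfl

/-- In a zip against a nodup list, the first component determines the pair. -/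
lemma zip_fst_det {α β : Type*} : ∀ {l : List α} {m : List β}, l.Nodup →
    ∀ p ∈ l.zip m, ∀ q ∈ l.zip m, p.1 = q.1 → p = q := by
  intro l
  induction l with
  | nil => intro m _ p hp; simp at hp
  | cons a l ih =>
    intro m hnd p hp q hq h1
    cases m with
    | nil => simp at hp
    | cons b m =>
      rcases List.nodup_cons.1 hnd with ⟨hal, hl⟩
      simp only [List.zip_cons_cons, List.mem_cons] at hp hq
      rcases hp with hp | hp <;> rcases hq with hq | hq
      · rw [hp, hq]
      · exfalso; apply hal
        have h1' : a = q.1 := by rw [hp] at h1; exact h1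
        rw [h1']; exact (List.of_mem_zip hq).1
      · exfalso; apply hal
        have h1' : p.1 = a := by rw [hq] at h1; exact h1
        rw [← h1']; exact (List.of_mem_zip hp).1
      · exact ih hl p hp q hq h1

lemma zip_snd_det {α β : Type*} {l : List α} {m : List β} (hnd : m.Nodup) :
    ∀ p ∈ l.zip m, ∀ q ∈ l.zip m, p.2 = q.2 → p = q := by
  intro p hp q hq h2
  have hswap : ∀ r : α × β, r ∈ l.zip m → r.swap ∈ m.zip l := by
    intro r hr
    rw [← List.zip_swap]
    exact List.mem_map_of_mem hr
  have hp' := hswap p hp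
  have hq' := hswap q hq
  have := zip_fst_det hnd p.swap hp' q.swap hq' h2
  exact Prod.swap_injective this

end KR
namespace KR
open Set

/-- Every nonempty clopen subset of Cantor space splits into two disjoint nonempty clopens. -/
lemma splitTwo {U : Set Cantor} (hU : IsClopen U) (hne : U.Nonempty) :
    ∃ V₁ V₂ : Set Cantor, IsClopen V₁ ∧ IsClopen V₂ ∧ V₁.Nonempty ∧ V₂.Nonempty ∧
      Disjoint V₁ V₂ ∧ V₁ ∪ V₂ = U := by
  obtain ⟨L, hL⟩ := exists_level hU
  obtain ⟨x, hx⟩ := hne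
  set x' : Cantor := Function.update x L (!x L) with hx'def
  have hx'cyl : x' ∈ Cyl x L := by
    intro i hi
    simp [hx'def, Function.update, (Nat.ne_of_lt hi)]
  have hx'U : x' ∈ U := hL x hx hx'cyl
  refine ⟨U ∩ {y | y L = x L}, U ∩ {y | y L = !x L}, ?_, ?_, ⟨x, hx, rfl⟩, ⟨x', hx'U, ?_⟩, ?_, ?_⟩
  · exact hU.inter ((isClopen_discrete {x L}).preimage (continuous_apply L))
  · exact hU.inter ((isClopen_discrete {!x L}).preimage (continuous_apply L))
  · simp [hx'def, Function.update]
  · rw [Set.disjoint_left]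
    rintro y ⟨-, h1⟩ ⟨-, h2⟩
    simp only [mem_setOf_eq] at h1 h2
    rw [h1] at h2
    exact absurd h2 (by simp)
  · ext y
    constructor
    · rintro (⟨h, -⟩ | ⟨h, -⟩) <;> exact h
    · intro hy
      rcases Bool.eq_or_eq_not (y L) (x L) with h | h
      · exact Or.inl ⟨hy, h⟩
      · exact Or.inr ⟨hy, h⟩

/-- Split a nonempty clopen set into a list of `k` nonempty clopen pieces. -/
lemma matchFree : ∀ (k : ℕ) {V : Set Cantor}, IsClopen V → V.Nonempty →
    ∃ m : List (Set Cantor), m.length = k + 1 ∧ (∀ B ∈ m, B.Nonempty ∧ IsClopen B ∧ B ⊆ V) ∧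
      m.Pairwise Disjoint ∧ (⋃ B ∈ m, B) = V := by
  intro k
  induction k with
  | zero =>
    intro V hV hne
    exact ⟨[V], rfl, by simp [hne, hV], List.pairwise_singleton _ _, by simp⟩
  | succ k ih =>
    intro V hV hne
    obtain ⟨V₁, V₂, hV₁, hV₂, hne₁, hne₂, hdisj, hunion⟩ := splitTwo hV hne
    obtain ⟨m, hlen, hmem, hpw, hu⟩ := ih hV₂ hne₂
    refine ⟨V₁ :: m, by simp [hlen], ?_, ?_, ?_⟩
    · intro B hB
      rcases List.mem_cons.1 hB with h | hB
      · subst h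
        exact ⟨hne₁, hV₁, by rw [← hunion]; exact subset_union_left⟩
      · obtain ⟨h1, h2, h3⟩ := hmem B hB
        exact ⟨h1, h2, h3.trans (by rw [← hunion]; exact subset_union_right)⟩
    · refine List.pairwise_cons.2 ⟨fun B hB => ?_, hpw⟩
      refine hdisj.mono_right ?_
      have : B ⊆ ⋃ B ∈ m, B := fun y hy => Set.mem_biUnion hB hy
      rw [hu] at this
      exact this
    · have h : ⋃ B ∈ (V₁ :: m), B = V₁ ∪ ⋃ B ∈ m, B := by
        ext y
        simp only [Set.mem_iUnion, Set.mem_union, List.mem_cons, exists_prop]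
        constructor
        · rintro ⟨B, (rfl | hB), hy⟩
          · exact Or.inl hy
          · exact Or.inr ⟨B, hB, hy⟩
        · rintro (hy | ⟨B, hB, hy⟩)
          · exact ⟨V₁, Or.inl rfl, hy⟩
          · exact ⟨B, Or.inr hB, hy⟩
      rw [h, hu, hunion]

end KR
namespace KR
open Set

/-- Partition a nonempty clopen set into nonempty clopen pieces that are `Small n`. -/
lemma smallPartition {U : Set Cantor} (hU : IsClopen U) (hne : U.Nonempty) (n : ℕ) :
    ∃ l : List (Set Cantor), l ≠ [] ∧
      (∀ A ∈ l, A.Nonempty ∧ IsClopen A ∧ Small n A ∧ A ⊆ U) ∧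
      l.Pairwise Disjoint ∧ (⋃ A ∈ l, A) = U := by
  classical
  obtain ⟨L₀, hL₀⟩ := exists_level hU
  set L := max L₀ n with hLdef
  set piece : (Fin L → Bool) → Set Cantor :=
    fun s => U ∩ {y | ∀ i : Fin L, y i = s i} with hpiece
  have hmem_piece : ∀ y : Cantor, y ∈ U → y ∈ piece (fun i => y i) := by
    intro y hy; exact ⟨hy, fun i => rfl⟩
  set l : List (Set Cantor) :=
    ((Finset.univ : Finset (Fin L → Bool)).toList.map piece).filter
      (fun A => decide A.Nonempty) with hldef
  have hmem_l : ∀ A, A ∈ l ↔ (∃ s, piece s = A) ∧ A.Nonempty := by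
    intro A
    rw [hldef, List.mem_filter]
    simp [List.mem_map, decide_eq_true_iff]
  refine ⟨l, ?_, ?_, ?_, ?_⟩
  · obtain ⟨x, hx⟩ := hne
    intro hnil
    have : piece (fun i => x i) ∈ l := (hmem_l _).2 ⟨⟨_, rfl⟩, ⟨x, hmem_piece x hx⟩⟩
    rw [hnil] at this
    simp at this
  · intro A hA
    obtain ⟨⟨s, rfl⟩, hAne⟩ := (hmem_l A).1 hA
    refine ⟨hAne, ?_, ?_, Set.inter_subset_left⟩
    · refine hU.inter ?_
      have : {y : Cantor | ∀ i : Fin L, y i = s i} = ⋂ i : Fin L, (fun y : Cantor => y i) ⁻¹' {s i} := by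
        ext y; simp
      rw [this]
      exact isClopen_iInter_of_finite fun i =>
        (isClopen_discrete {s i}).preimage (continuous_apply (i : ℕ))
    · rintro x ⟨-, hx⟩ y ⟨-, hy⟩ i hi
      have hiL : i < L := lt_of_lt_of_le hi (le_max_right _ _)
      exact (hx ⟨i, hiL⟩).trans (hy ⟨i, hiL⟩).symm
  · refine List.Pairwise.sublist List.filter_sublist ?_
    have hnd : (Finset.univ : Finset (Fin L → Bool)).toList.Pairwise (· ≠ ·) :=
      Finset.univ.nodup_toList
    refine List.Pairwise.map (R := (· ≠ ·)) piece ?_ hnd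
    intro s t hst
    rw [Set.disjoint_left]
    rintro y ⟨-, hy1⟩ ⟨-, hy2⟩
    apply hst
    funext i
    exact (hy1 i).symm.trans (hy2 i)
  · ext y
    simp only [Set.mem_iUnion, exists_prop]
    constructor
    · rintro ⟨A, hA, hy⟩
      obtain ⟨⟨s, rfl⟩, -⟩ := (hmem_l A).1 hA
      exact hy.1
    · intro hy
      exact ⟨piece (fun i => y i), (hmem_l _).2 ⟨⟨_, rfl⟩, ⟨y, hmem_piece y hy⟩⟩, hmem_piece y hy⟩

end KR
namespace KR
open Set

/-- Inside any nonempty open set there is a nonempty clopen set avoiding a closed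
nowhere dense set. -/
lemma exists_free_clopen {P : Set Cantor} (hP : IsClosed P) (hPnd : IsNowhereDense P)
    {U : Set Cantor} (hU : IsOpen U) (hne : U.Nonempty) :
    ∃ W, IsClopen W ∧ W.Nonempty ∧ W ⊆ U ∧ W ∩ P = ∅ := by
  have hx : ∃ x ∈ U, x ∉ P := by
    by_contra h
    push_neg at h
    have hsub : U ⊆ P := h
    have : U ⊆ interior (closure P) := by
      rw [hP.closure_eq]
      exact hU.subset_interior_iff.2 hsub
    rw [hPnd] at this
    exact hne.not_subset_empty this
  obtain ⟨x, hxU, hxP⟩ := hx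
  have hop : IsOpen (U ∩ Pᶜ) := hU.inter hP.isOpen_compl
  obtain ⟨m, hm⟩ := exists_cyl_subset hop ⟨hxU, hxP⟩
  refine ⟨Cyl x m, isClopen_cyl x m, ⟨x, self_mem_cyl x m⟩,
    fun y hy => (hm hy).1, ?_⟩
  rw [Set.eq_empty_iff_forall_notMem]
  rintro y ⟨hy1, hy2⟩
  exact (hm hy1).2 hy2

/-- Disjoint closed sets in Cantor space are separated by a clopen set. -/
lemma clopen_separation {C D : Set Cantor} (hC : IsClosed C) (hD : IsClosed D)
    (h : Disjoint C D) : ∃ Z, IsClopen Z ∧ C ⊆ Z ∧ Disjoint Z D := by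
  classical
  have hcomp : IsCompact C := hC.isCompact
  have hex : ∀ x : Cantor, x ∈ C → ∃ m, Cyl x m ⊆ Dᶜ := by
    intro x hx
    exact exists_cyl_subset hD.isOpen_compl (Set.disjoint_left.1 h hx)
  choose! m hm using hex
  obtain ⟨t, htC, hcov⟩ := hcomp.elim_nhds_subcover (fun x => Cyl x (m x))
    (fun x _ => (isClopen_cyl _ _).isOpen.mem_nhds (self_mem_cyl _ _))
  refine ⟨⋃ x ∈ t, Cyl x (m x), ?_, ?_, ?_⟩
  · exact Set.Finite.isClopen_biUnion t.finite_toSet (fun x _ => isClopen_cyl _ _)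
  · intro x hx
    simpa using hcov hx
  · rw [Set.disjoint_left]
    rintro y hy hyD
    simp only [Set.mem_iUnion, exists_prop] at hy
    obtain ⟨x, hxt, hyx⟩ := hy
    exact (hm x (htC x hxt) hyx) hyD

/-- Surround a finite disjoint family of closed sets by a disjoint family of
clopen sets inside a given clopen set. -/
lemma pairing (g : Set Cantor → Set Cantor) :
    ∀ (𝒜 : Set (Set Cantor)), 𝒜.Finite → ∀ (Ω : Set Cantor), IsClopen Ω →
    (∀ A ∈ 𝒜, IsClosed (g A) ∧ g A ⊆ Ω) →
    (𝒜.Pairwise fun A B => Disjoint (g A) (g B)) →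
    ∃ Z : Set Cantor → Set Cantor,
      (∀ A ∈ 𝒜, IsClopen (Z A) ∧ g A ⊆ Z A ∧ Z A ⊆ Ω) ∧
      (𝒜.Pairwise fun A B => Disjoint (Z A) (Z B)) := by
  intro 𝒜 h𝒜
  refine Set.Finite.induction_on 𝒜 h𝒜 ?_ ?_
  · intro Ω _ _ _
    exact ⟨fun _ => ∅, by simp, by simp [Set.pairwise_empty]⟩
  · rintro A 𝒜 hA h𝒜fin ih Ω hΩ hg hdisj
    classical
    have hgA := hg A (Set.mem_insert _ _)
    have hD : IsClosed ((⋃ B ∈ 𝒜, g B) ∪ Ωᶜ) := by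
      refine IsClosed.union ?_ hΩ.isOpen.isClosed_compl
      exact Set.Finite.isClosed_biUnion h𝒜fin (fun B hB => (hg B (Set.mem_insert_of_mem _ hB)).1)
    have hdisjAD : Disjoint (g A) ((⋃ B ∈ 𝒜, g B) ∪ Ωᶜ) := by
      refine Disjoint.union_right ?_ ?_
      · rw [Set.disjoint_left]
        intro x hx hx'
        simp only [Set.mem_iUnion, exists_prop] at hx'
        obtain ⟨B, hB, hxB⟩ := hx'
        have hne : A ≠ B := fun h => hA (h ▸ hB)
        exact Set.disjoint_left.1
          (hdisj (Set.mem_insert _ _) (Set.mem_insert_of_mem _ hB) hne) hx hxB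
      · rw [Set.disjoint_compl_right_iff_subset]
        exact hgA.2
    obtain ⟨ZA, hZAclopen, hgZA, hZAD⟩ := clopen_separation hgA.1 hD hdisjAD
    have hZAΩ : ZA ⊆ Ω := by
      intro x hx
      by_contra hxΩ
      exact Set.disjoint_left.1 hZAD hx (Or.inr hxΩ)
    obtain ⟨Z', hZ'mem, hZ'disj⟩ := ih (Ω \ ZA) (by rw [Set.diff_eq]; exact hΩ.inter hZAclopen.compl)
      (fun B hB => ⟨(hg B (Set.mem_insert_of_mem _ hB)).1, fun x hx =>
        ⟨(hg B (Set.mem_insert_of_mem _ hB)).2 hx,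
         fun hxZA => Set.disjoint_left.1 hZAD hxZA (Or.inl (Set.mem_biUnion hB hx))⟩⟩)
      (hdisj.mono (Set.subset_insert _ _))
    refine ⟨fun X => if X = A then ZA else Z' X, ?_, ?_⟩
    · intro B hB
      rcases Set.mem_insert_iff.1 hB with rfl | hB
      · simp only [if_pos rfl]
        exact ⟨hZAclopen, hgZA, hZAΩ⟩
      · have hBA : B ≠ A := fun h => hA (h ▸ hB)
        simp only [if_neg hBA]
        obtain ⟨h1, h2, h3⟩ := hZ'mem B hB
        exact ⟨h1, h2, h3.trans Set.diff_subset⟩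
    · have key : ∀ B' ∈ 𝒜, Disjoint ZA (Z' B') := by
        intro B' hB'
        rw [Set.disjoint_left]
        intro x hx hx'
        exact ((hZ'mem B' hB').2.2 hx').2 hx
      intro B hB B' hB' hne
      rcases Set.mem_insert_iff.1 hB with hBeq | hBm
      · rcases Set.mem_insert_iff.1 hB' with hB'eq | hB'm
        · exact absurd (hBeq.trans hB'eq.symm) hne
        · have hB'A : B' ≠ A := fun h => hA (h ▸ hB'm)
          simp only [if_pos hBeq, if_neg hB'A]
          exact key B' hB'm
      · rcases Set.mem_insert_iff.1 hB' with hB'eq | hB'm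
        · have hBA : B ≠ A := fun h => hA (h ▸ hBm)
          simp only [if_pos hB'eq, if_neg hBA]
          exact (key B hBm).symm
        · have h1 : B ≠ A := fun h => hA (h ▸ hBm)
          have h2 : B' ≠ A := fun h => hA (h ▸ hB'm)
          simp only [if_neg h1, if_neg h2]
          exact hZ'disj hBm hB'm hne

end KR
namespace KR
open Set

variable (P K : Set Cantor)

/-- `Matched f U V`: a point of `P` lies in `U` iff its image lies in `V`. -/
def Matched (f : P ≃ₜ K) (U V : Set Cantor) : Prop :=
  ∀ p : P, ((p : Cantor) ∈ U ↔ ((f p : K) : Cantor) ∈ V)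

def GoodPair (f : P ≃ₜ K) (q : Set Cantor × Set Cantor) : Prop :=
  IsClopen q.1 ∧ IsClopen q.2 ∧ q.1.Nonempty ∧ q.2.Nonempty ∧ Matched P K f q.1 q.2

lemma Matched.symm {f : P ≃ₜ K} {U V : Set Cantor} (h : Matched P K f U V) :
    Matched K P f.symm V U := by
  intro q
  have := h (f.symm q)
  rw [show f (f.symm q) = q from f.apply_symm_apply q] at this
  exact this.symm

lemma GoodPair.swap {f : P ≃ₜ K} {q : Set Cantor × Set Cantor} (h : GoodPair P K f q) :
    GoodPair K P f.symm q.swap :=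
  ⟨h.2.1, h.1, h.2.2.2.1, h.2.2.1, h.2.2.2.2.symm⟩

/-- Image of the `P`-part of `A` under `f`, as a subset of Cantor space. -/
def Fim (f : P ≃ₜ K) (A : Set Cantor) : Set Cantor :=
  (fun p : P => ((f p : K) : Cantor)) '' {p : P | (p : Cantor) ∈ A}

lemma Fim_isClosed (hP : IsClosed P) (f : P ≃ₜ K) {A : Set Cantor} (hA : IsClosed A) :
    IsClosed (Fim P K f A) := by
  haveI : CompactSpace P := isCompact_iff_compactSpace.mp hP.isCompact
  have hcomp : IsCompact {p : P | (p : Cantor) ∈ A} := by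
    have : IsClosed {p : P | (p : Cantor) ∈ A} := hA.preimage continuous_subtype_val
    exact this.isCompact
  exact (hcomp.image (continuous_subtype_val.comp f.continuous)).isClosed

lemma Fim_disjoint (f : P ≃ₜ K) {A B : Set Cantor} (h : Disjoint A B) :
    Disjoint (Fim P K f A) (Fim P K f B) := by
  rw [Set.disjoint_left]
  rintro c ⟨p, hp, rfl⟩ ⟨p', hp', heq⟩
  have : p' = p := f.injective (Subtype.coe_injective heq)
  rw [this] at hp'
  exact Set.disjoint_left.1 h hp hp'

lemma Fim_nonempty (f : P ≃ₜ K) {A : Set Cantor} (h : (A ∩ P).Nonempty) :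
    (Fim P K f A).Nonempty := by
  obtain ⟨x, hxA, hxP⟩ := h
  exact ⟨_, ⟨⟨x, hxP⟩, hxA, rfl⟩⟩

/-- Zip two free (away from `P` resp. `K`) partitions of the same length. -/
lemma zipFree (f : P ≃ₜ K) (lA lB : List (Set Cantor)) (hlen : lA.length = lB.length)
    (hA : ∀ A ∈ lA, A.Nonempty ∧ IsClopen A ∧ A ∩ P = ∅)
    (hB : ∀ B ∈ lB, B.Nonempty ∧ IsClopen B ∧ B ∩ K = ∅)
    (hpA : lA.Pairwise Disjoint) (hpB : lB.Pairwise Disjoint) :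
    ∃ 𝒮 : Set (Set Cantor × Set Cantor), 𝒮.Finite ∧
      (∀ q ∈ 𝒮, GoodPair P K f q ∧ q.1 ∈ lA ∧ q.2 ∈ lB) ∧
      (𝒮.Pairwise fun p q => Disjoint p.1 q.1 ∧ Disjoint p.2 q.2) ∧
      (⋃ q ∈ 𝒮, q.1) = (⋃ A ∈ lA, A) ∧ (⋃ q ∈ 𝒮, q.2) = (⋃ B ∈ lB, B) := by
  refine ⟨{q | q ∈ lA.zip lB}, (lA.zip lB).finite_toSet, ?_, ?_, ?_, ?_⟩
  · rintro ⟨A, B⟩ hq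
    obtain ⟨hAm, hBm⟩ := List.of_mem_zip hq
    obtain ⟨hAne, hAcl, hAfree⟩ := hA A hAm
    obtain ⟨hBne, hBcl, hBfree⟩ := hB B hBm
    refine ⟨⟨hAcl, hBcl, hAne, hBne, ?_⟩, hAm, hBm⟩
    intro p
    constructor
    · intro hp
      exact absurd (Set.mem_inter hp p.2) (by rw [hAfree]; exact Set.notMem_empty _)
    · intro hp
      exact absurd (Set.mem_inter hp (f p).2) (by rw [hBfree]; exact Set.notMem_empty _)
  · have hndA : lA.Nodup := nodup_of_pairwise_disjoint hpA (fun A hAm => (hA A hAm).1)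
    have hndB : lB.Nodup := nodup_of_pairwise_disjoint hpB (fun B hBm => (hB B hBm).1)
    intro p hp q hq hne
    constructor
    · have h1 : p.1 ≠ q.1 := fun h => hne (zip_fst_det hndA p hp q hq h)
      exact pairwise_disjoint_of_ne hpA (List.of_mem_zip hp).1 (List.of_mem_zip hq).1 h1
    · have h2 : p.2 ≠ q.2 := fun h => hne (zip_snd_det hndB p hp q hq h)
      exact pairwise_disjoint_of_ne hpB (List.of_mem_zip hp).2 (List.of_mem_zip hq).2 h2
  · ext x
    simp only [Set.mem_iUnion, exists_prop, Set.mem_setOf_eq]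
    constructor
    · rintro ⟨q, hq, hx⟩
      exact ⟨q.1, (List.of_mem_zip hq).1, hx⟩
    · rintro ⟨A, hAm, hx⟩
      have : A ∈ (lA.zip lB).map Prod.fst := by
        rw [List.map_fst_zip (le_of_eq hlen)]
        exact hAm
      obtain ⟨q, hq, rfl⟩ := List.mem_map.1 this
      exact ⟨q, hq, hx⟩
  · ext x
    simp only [Set.mem_iUnion, exists_prop, Set.mem_setOf_eq]
    constructor
    · rintro ⟨q, hq, hx⟩
      exact ⟨q.2, (List.of_mem_zip hq).2, hx⟩
    · rintro ⟨B, hBm, hx⟩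
      have : B ∈ (lA.zip lB).map Prod.snd := by
        rw [List.map_snd_zip (le_of_eq hlen.symm)]
        exact hBm
      obtain ⟨q, hq, rfl⟩ := List.mem_map.1 this
      exact ⟨q, hq, hx⟩

end KR
namespace KR
open Set

/-- One-sided refinement step: refine a matched pair into matched pairs whose first
components are `Small n`. -/
lemma halfStep {P K : Set Cantor} (hP : IsClosed P) (hK : IsClosed K)
    (hPnd : IsNowhereDense P) (hKnd : IsNowhereDense K) (f : P ≃ₜ K)
    {U V : Set Cantor} (hgood : GoodPair P K f (U, V)) (n : ℕ) :
    ∃ 𝒮 : Set (Set Cantor × Set Cantor), 𝒮.Finite ∧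
      (∀ q ∈ 𝒮, GoodPair P K f q ∧ Small n q.1 ∧ q.1 ⊆ U ∧ q.2 ⊆ V) ∧
      (𝒮.Pairwise fun p q => Disjoint p.1 q.1 ∧ Disjoint p.2 q.2) ∧
      (⋃ q ∈ 𝒮, q.1) = U ∧ (⋃ q ∈ 𝒮, q.2) = V := by
  classical
  obtain ⟨hUcl, hVcl, hUne, hVne, hmat⟩ := hgood
  simp only at hUcl hVcl hUne hVne hmat
  by_cases hUP : (U ∩ P).Nonempty
  case neg =>
    -- free case
    rw [Set.not_nonempty_iff_eq_empty] at hUP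
    have hVK : V ∩ K = ∅ := by
      rw [Set.eq_empty_iff_forall_notMem]
      rintro k ⟨hkV, hkK⟩
      have h1 : ((f.symm ⟨k, hkK⟩ : P) : Cantor) ∈ U := by
        rw [hmat (f.symm ⟨k, hkK⟩), f.apply_symm_apply]
        exact hkV
      have h2 := (f.symm ⟨k, hkK⟩).2
      rw [Set.eq_empty_iff_forall_notMem] at hUP
      exact hUP _ ⟨h1, h2⟩
    obtain ⟨lA, hlAne, hlAmem, hlApw, hlAu⟩ := smallPartition hUcl hUne n
    obtain ⟨lB, hlBlen, hlBmem, hlBpw, hlBu⟩ :=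
      matchFree (lA.length - 1) hVcl hVne
    have hlen : lA.length = lB.length := by
      rw [hlBlen, Nat.sub_add_cancel]
      exact List.length_pos_iff.2 hlAne
    obtain ⟨𝒮, hfin, hmem, hpw, hu1, hu2⟩ := zipFree P K f lA lB hlen
      (fun A hAm =>
        ⟨(hlAmem A hAm).1, (hlAmem A hAm).2.1, by
          have := (hlAmem A hAm).2.2.2
          rw [Set.eq_empty_iff_forall_notMem]
          rintro x ⟨hx1, hx2⟩
          rw [Set.eq_empty_iff_forall_notMem] at hUP
          exact hUP x ⟨this hx1, hx2⟩⟩)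
      (fun B hBm =>
        ⟨(hlBmem B hBm).1, (hlBmem B hBm).2.1, by
          have := (hlBmem B hBm).2.2
          rw [Set.eq_empty_iff_forall_notMem]
          rintro x ⟨hx1, hx2⟩
          rw [Set.eq_empty_iff_forall_notMem] at hVK
          exact hVK x ⟨this hx1, hx2⟩⟩)
      hlApw hlBpw
    refine ⟨𝒮, hfin, ?_, hpw, by rw [hu1, hlAu], by rw [hu2, hlBu]⟩
    intro q hq
    obtain ⟨hgoodq, hq1, hq2⟩ := hmem q hq
    exact ⟨hgoodq, (hlAmem q.1 hq1).2.2.1, (hlAmem q.1 hq1).2.2.2, (hlBmem q.2 hq2).2.2⟩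
  case pos =>
    -- U meets P
    obtain ⟨W', hW'cl, hW'ne, hW'V, hW'K⟩ := exists_free_clopen hK hKnd hVcl.isOpen hVne
    obtain ⟨W, hWcl, hWne, hWU, hWP⟩ := exists_free_clopen hP hPnd hUcl.isOpen hUne
    obtain ⟨LW, hLW⟩ := exists_level hWcl
    obtain ⟨l, hlne, hlmem, hlpw, hlu⟩ := smallPartition hUcl hUne (max n LW)
    set lP : List (Set Cantor) := l.filter (fun A => decide (A ∩ P).Nonempty) with hlPdef
    set l0 : List (Set Cantor) := l.filter (fun A => !decide (A ∩ P).Nonempty) with hl0def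
    have hmem_lP : ∀ A, A ∈ lP ↔ A ∈ l ∧ (A ∩ P).Nonempty := by
      intro A; rw [hlPdef, List.mem_filter]; simp
    have hmem_l0 : ∀ A, A ∈ l0 ↔ A ∈ l ∧ A ∩ P = ∅ := by
      intro A; rw [hl0def, List.mem_filter]
      simp [Set.not_nonempty_iff_eq_empty]
    have hsplit : ∀ A ∈ l, A ∈ lP ∨ A ∈ l0 := by
      intro A hAm
      by_cases h : (A ∩ P).Nonempty
      · exact Or.inl ((hmem_lP A).2 ⟨hAm, h⟩)
      · exact Or.inr ((hmem_l0 A).2 ⟨hAm, Set.not_nonempty_iff_eq_empty.1 h⟩)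
    -- both lists are nonempty
    have hl0ne : l0 ≠ [] := by
      obtain ⟨x, hxW⟩ := hWne
      have hxU : x ∈ U := hWU hxW
      have : x ∈ ⋃ A ∈ l, A := by rw [hlu]; exact hxU
      simp only [Set.mem_iUnion, exists_prop] at this
      obtain ⟨A, hAm, hxA⟩ := this
      have hsmall : Small LW A := ((hlmem A hAm).2.2.1).mono (le_max_right _ _)
      have hAW : A ⊆ W := (hsmall.subset_cyl hxA).trans (hLW x hxW)
      have : A ∈ l0 := (hmem_l0 A).2 ⟨hAm, by
        rw [Set.eq_empty_iff_forall_notMem]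
        rintro y ⟨hy1, hy2⟩
        rw [Set.eq_empty_iff_forall_notMem] at hWP
        exact hWP y ⟨hAW hy1, hy2⟩⟩
      intro hnil; rw [hnil] at this; simp at this
    have hlPne : lP ≠ [] := by
      obtain ⟨x, hxU, hxP⟩ := hUP
      have : x ∈ ⋃ A ∈ l, A := by rw [hlu]; exact hxU
      simp only [Set.mem_iUnion, exists_prop] at this
      obtain ⟨A, hAm, hxA⟩ := this
      have : A ∈ lP := (hmem_lP A).2 ⟨hAm, ⟨x, hxA, hxP⟩⟩
      intro hnil; rw [hnil] at this; simp at this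
    -- the clopen envelope Ω
    have hΩcl : IsClopen (V \ W') := by rw [Set.diff_eq]; exact hVcl.inter hW'cl.compl
    set 𝒜P : Set (Set Cantor) := {A | A ∈ lP} with h𝒜Pdef
    have h𝒜Pfin : 𝒜P.Finite := lP.finite_toSet
    have hmemU : ∀ A ∈ 𝒜P, A ⊆ U := by
      intro A hAm
      exact (hlmem A ((hmem_lP A).1 hAm).1).2.2.2
    have hFimV : ∀ A ∈ 𝒜P, Fim P K f A ⊆ V \ W' := by
      rintro A hAm c ⟨p, hp, rfl⟩
      refine ⟨(hmat p).1 (hmemU A hAm hp), fun hc => ?_⟩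
      rw [Set.eq_empty_iff_forall_notMem] at hW'K
      exact hW'K _ ⟨hc, (f p).2⟩
    obtain ⟨Z, hZmem, hZdisj⟩ := pairing (Fim P K f) 𝒜P h𝒜Pfin (V \ W') hΩcl
      (fun A hAm => ⟨Fim_isClosed P K hP f (hlmem A ((hmem_lP A).1 hAm).1).2.1.isClosed,
        hFimV A hAm⟩)
      (fun A hAm B hBm hne => Fim_disjoint P K f
        (pairwise_disjoint_of_ne hlpw ((hmem_lP A).1 hAm).1 ((hmem_lP B).1 hBm).1 hne))
    -- the residual part of V
    set V₀ : Set Cantor := V \ ⋃ A ∈ 𝒜P, Z A with hV₀def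
    have hZunion_cl : IsClopen (⋃ A ∈ 𝒜P, Z A) :=
      Set.Finite.isClopen_biUnion h𝒜Pfin (fun A hAm => (hZmem A hAm).1)
    have hV₀cl : IsClopen V₀ := by
      rw [hV₀def, Set.diff_eq]; exact hVcl.inter hZunion_cl.compl
    have hV₀ne : V₀.Nonempty := by
      obtain ⟨w, hw⟩ := hW'ne
      refine ⟨w, hW'V hw, fun hwmem => ?_⟩
      simp only [Set.mem_iUnion, exists_prop] at hwmem
      obtain ⟨A, hAm, hwA⟩ := hwmem
      exact ((hZmem A hAm).2.2 hwA).2 hw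
    have hV₀K : V₀ ∩ K = ∅ := by
      rw [Set.eq_empty_iff_forall_notMem]
      rintro k ⟨⟨hkV, hkZ⟩, hkK⟩
      have h1 : ((f.symm ⟨k, hkK⟩ : P) : Cantor) ∈ U := by
        rw [hmat (f.symm ⟨k, hkK⟩), f.apply_symm_apply]
        exact hkV
      have : ((f.symm ⟨k, hkK⟩ : P) : Cantor) ∈ ⋃ A ∈ l, A := by rw [hlu]; exact h1
      simp only [Set.mem_iUnion, exists_prop] at this
      obtain ⟨B, hBm, hxB⟩ := this
      have hBP : B ∈ 𝒜P := (hmem_lP B).2 ⟨hBm, ⟨_, hxB, (f.symm ⟨k, hkK⟩).2⟩⟩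
      apply hkZ
      refine Set.mem_biUnion hBP ?_
      refine (hZmem B hBP).2.1 ?_
      refine ⟨f.symm ⟨k, hkK⟩, hxB, ?_⟩
      show ((f (f.symm ⟨k, hkK⟩) : K) : Cantor) = k
      rw [f.apply_symm_apply]
    -- pair the free pieces
    obtain ⟨lB0, hlB0len, hlB0mem, hlB0pw, hlB0u⟩ := matchFree (l0.length - 1) hV₀cl hV₀ne
    have hlen0 : l0.length = lB0.length := by
      rw [hlB0len, Nat.sub_add_cancel]
      exact List.length_pos_iff.2 hl0ne
    obtain ⟨𝒮₂, h𝒮₂fin, h𝒮₂mem, h𝒮₂pw, h𝒮₂u1, h𝒮₂u2⟩ := zipFree P K f l0 lB0 hlen0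
      (fun A hAm => ⟨(hlmem A ((hmem_l0 A).1 hAm).1).1,
        (hlmem A ((hmem_l0 A).1 hAm).1).2.1, ((hmem_l0 A).1 hAm).2⟩)
      (fun B hBm => ⟨(hlB0mem B hBm).1, (hlB0mem B hBm).2.1, by
        rw [Set.eq_empty_iff_forall_notMem]
        rintro x ⟨hx1, hx2⟩
        rw [Set.eq_empty_iff_forall_notMem] at hV₀K
        exact hV₀K x ⟨(hlB0mem B hBm).2.2 hx1, hx2⟩⟩)
      (List.Pairwise.sublist List.filter_sublist hlpw) hlB0pw
    -- assemble
    set 𝒮₁ : Set (Set Cantor × Set Cantor) := (fun A => (A, Z A)) '' 𝒜P with h𝒮₁def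
    refine ⟨𝒮₁ ∪ 𝒮₂, (h𝒜Pfin.image _).union h𝒮₂fin, ?_, ?_, ?_, ?_⟩
    · rintro q (hq | hq)
      · obtain ⟨A, hAm, rfl⟩ := hq
        have hAmP : A ∈ lP := hAm
        have hAl : A ∈ l := ((hmem_lP A).1 hAmP).1
        obtain ⟨hAne, hAcl, hAsmall, hAU⟩ := hlmem A hAl
        have hZA := hZmem A hAm
        refine ⟨⟨hAcl, hZA.1, hAne, ?_, ?_⟩, hAsmall.mono (le_max_left _ _), hAU,
          hZA.2.2.trans Set.diff_subset⟩
        · exact (Fim_nonempty P K f ((hmem_lP A).1 hAmP).2).mono hZA.2.1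
        · -- Matched
          intro p
          constructor
          · intro hp
            exact hZA.2.1 ⟨p, hp, rfl⟩
          · intro hp
            have hpV : ((f p : K) : Cantor) ∈ V := (hZA.2.2 hp).1
            have hpU : (p : Cantor) ∈ U := (hmat p).2 hpV
            have : (p : Cantor) ∈ ⋃ B ∈ l, B := by rw [hlu]; exact hpU
            simp only [Set.mem_iUnion, exists_prop] at this
            obtain ⟨B, hBm, hpB⟩ := this
            have hBP : B ∈ 𝒜P := (hmem_lP B).2 ⟨hBm, ⟨_, hpB, p.2⟩⟩
            have hpZB : ((f p : K) : Cantor) ∈ Z B := (hZmem B hBP).2.1 ⟨p, hpB, rfl⟩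
            by_cases hAB : A = B
            · rwa [hAB]
            · exact absurd hpZB (Set.disjoint_left.1 (hZdisj hAm hBP hAB) hp)
      · obtain ⟨hgoodq, hq1, hq2⟩ := h𝒮₂mem q hq
        have hql : q.1 ∈ l := ((hmem_l0 q.1).1 hq1).1
        exact ⟨hgoodq, (hlmem q.1 hql).2.2.1.mono (le_max_left _ _),
          (hlmem q.1 hql).2.2.2, ((hlB0mem q.2 hq2).2.2).trans Set.diff_subset⟩
    · -- pairwise disjointness
      rintro q (hq | hq) q' (hq' | hq') hne
      · obtain ⟨A, hAm, rfl⟩ := hq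
        obtain ⟨A', hA'm, rfl⟩ := hq'
        have hAA' : A ≠ A' := fun h => hne (by rw [h])
        have hAmP : A ∈ lP := hAm
        have hA'mP : A' ∈ lP := hA'm
        exact ⟨pairwise_disjoint_of_ne hlpw ((hmem_lP A).1 hAmP).1 ((hmem_lP A').1 hA'mP).1 hAA',
          hZdisj hAm hA'm hAA'⟩
      · obtain ⟨A, hAm, rfl⟩ := hq
        obtain ⟨-, hq'1, hq'2⟩ := h𝒮₂mem q' hq'
        constructor
        · have hAmP : A ∈ lP := hAm
          have hne1 : A ≠ q'.1 := by
            intro h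
            have h1 := ((hmem_lP A).1 hAmP).2
            have h2 := ((hmem_l0 q'.1).1 hq'1).2
            rw [h] at h1
            exact h1.ne_empty h2
          exact pairwise_disjoint_of_ne hlpw ((hmem_lP A).1 hAmP).1 ((hmem_l0 q'.1).1 hq'1).1 hne1
        · rw [Set.disjoint_left]
          intro x hx hx'
          have hxV₀ : x ∈ V₀ := (hlB0mem q'.2 hq'2).2.2 hx'
          exact hxV₀.2 (Set.mem_biUnion hAm hx)
      · obtain ⟨A', hA'm, rfl⟩ := hq'
        obtain ⟨-, hq1, hq2⟩ := h𝒮₂mem q hq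
        constructor
        · have hA'mP : A' ∈ lP := hA'm
          have hne1 : q.1 ≠ A' := by
            intro h
            have h1 := ((hmem_lP A').1 hA'mP).2
            have h2 := ((hmem_l0 q.1).1 hq1).2
            rw [← h] at h1
            exact h1.ne_empty h2
          exact pairwise_disjoint_of_ne hlpw ((hmem_l0 q.1).1 hq1).1 ((hmem_lP A').1 hA'mP).1 hne1
        · rw [Set.disjoint_left]
          intro x hx hx'
          have hxV₀ : x ∈ V₀ := (hlB0mem q.2 hq2).2.2 hx
          exact hxV₀.2 (Set.mem_biUnion hA'm hx')
      · exact h𝒮₂pw hq hq' hne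
    · -- union of first components
      ext x
      simp only [Set.mem_iUnion, exists_prop, Set.mem_union]
      constructor
      · rintro ⟨q, (hq | hq), hx⟩
        · obtain ⟨A, hAm, rfl⟩ := hq
          exact (hlmem A ((hmem_lP A).1 hAm).1).2.2.2 hx
        · have := (h𝒮₂mem q hq).2.1
          exact (hlmem q.1 ((hmem_l0 q.1).1 this).1).2.2.2 hx
      · intro hx
        have : x ∈ ⋃ A ∈ l, A := by rw [hlu]; exact hx
        simp only [Set.mem_iUnion, exists_prop] at this
        obtain ⟨A, hAm, hxA⟩ := this
        rcases hsplit A hAm with hA | hA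
        · exact ⟨(A, Z A), Or.inl ⟨A, hA, rfl⟩, hxA⟩
        · have : x ∈ ⋃ q ∈ 𝒮₂, q.1 := by
            rw [h𝒮₂u1]
            exact Set.mem_biUnion hA hxA
          simp only [Set.mem_iUnion, exists_prop] at this
          obtain ⟨q, hq, hxq⟩ := this
          exact ⟨q, Or.inr hq, hxq⟩
    · -- union of second components
      ext x
      simp only [Set.mem_iUnion, exists_prop, Set.mem_union]
      constructor
      · rintro ⟨q, (hq | hq), hx⟩
        · obtain ⟨A, hAm, rfl⟩ := hq
          exact ((hZmem A hAm).2.2 hx).1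
        · exact ((hlB0mem q.2 (h𝒮₂mem q hq).2.2).2.2 hx).1
      · intro hxV
        by_cases hxZ : x ∈ ⋃ A ∈ 𝒜P, Z A
        · simp only [Set.mem_iUnion, exists_prop] at hxZ
          obtain ⟨A, hAm, hxA⟩ := hxZ
          exact ⟨(A, Z A), Or.inl ⟨A, hAm, rfl⟩, hxA⟩
        · have hxV₀ : x ∈ V₀ := ⟨hxV, hxZ⟩
          have : x ∈ ⋃ q ∈ 𝒮₂, q.2 := by rw [h𝒮₂u2, hlB0u]; exact hxV₀
          simp only [Set.mem_iUnion, exists_prop] at this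
          obtain ⟨q, hq, hxq⟩ := this
          exact ⟨q, Or.inr hq, hxq⟩

end KR
namespace KR
open Set

def PairwiseDisj (𝒮 : Set (Set Cantor × Set Cantor)) : Prop :=
  𝒮.Pairwise fun p q => Disjoint p.1 q.1 ∧ Disjoint p.2 q.2

/-- Glue refinements of the members of a disjoint family. -/
lemma glue {𝒮 : Set (Set Cantor × Set Cantor)} (hfin : 𝒮.Finite) (hpw : PairwiseDisj 𝒮)
    (T : (Set Cantor × Set Cantor) → Set (Set Cantor × Set Cantor))
    (hT : ∀ q ∈ 𝒮, (T q).Finite ∧ (∀ r ∈ T q, r.1 ⊆ q.1 ∧ r.2 ⊆ q.2) ∧ PairwiseDisj (T q) ∧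
      (⋃ r ∈ T q, r.1) = q.1 ∧ (⋃ r ∈ T q, r.2) = q.2) :
    (⋃ q ∈ 𝒮, T q).Finite ∧ PairwiseDisj (⋃ q ∈ 𝒮, T q) ∧
      (⋃ r ∈ ⋃ q ∈ 𝒮, T q, r.1) = (⋃ q ∈ 𝒮, q.1) ∧
      (⋃ r ∈ ⋃ q ∈ 𝒮, T q, r.2) = (⋃ q ∈ 𝒮, q.2) ∧
      (∀ r ∈ ⋃ q ∈ 𝒮, T q, ∃ q ∈ 𝒮, r ∈ T q) := by
  refine ⟨hfin.biUnion (fun q hq => (hT q hq).1), ?_, ?_, ?_, ?_⟩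
  · intro r hr r' hr' hne
    simp only [Set.mem_iUnion, exists_prop] at hr hr'
    obtain ⟨q, hq, hrq⟩ := hr
    obtain ⟨q', hq', hr'q⟩ := hr'
    by_cases hqq' : q = q'
    · subst hqq'
      exact (hT q hq).2.2.1 hrq hr'q hne
    · have hd := hpw hq hq' hqq'
      exact ⟨hd.1.mono ((hT q hq).2.1 r hrq).1 ((hT q' hq').2.1 r' hr'q).1,
        hd.2.mono ((hT q hq).2.1 r hrq).2 ((hT q' hq').2.1 r' hr'q).2⟩
  · ext x
    simp only [Set.mem_iUnion, exists_prop]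
    constructor
    · rintro ⟨r, ⟨q, hq, hrq⟩, hx⟩
      exact ⟨q, hq, ((hT q hq).2.1 r hrq).1 hx⟩
    · rintro ⟨q, hq, hx⟩
      have : x ∈ ⋃ r ∈ T q, r.1 := by rw [(hT q hq).2.2.2.1]; exact hx
      simp only [Set.mem_iUnion, exists_prop] at this
      obtain ⟨r, hr, hxr⟩ := this
      exact ⟨r, ⟨q, hq, hr⟩, hxr⟩
  · ext x
    simp only [Set.mem_iUnion, exists_prop]
    constructor
    · rintro ⟨r, ⟨q, hq, hrq⟩, hx⟩
      exact ⟨q, hq, ((hT q hq).2.1 r hrq).2 hx⟩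
    · rintro ⟨q, hq, hx⟩
      have : x ∈ ⋃ r ∈ T q, r.2 := by rw [(hT q hq).2.2.2.2]; exact hx
      simp only [Set.mem_iUnion, exists_prop] at this
      obtain ⟨r, hr, hxr⟩ := this
      exact ⟨r, ⟨q, hq, hr⟩, hxr⟩
  · intro r hr
    simp only [Set.mem_iUnion, exists_prop] at hr
    exact hr

/-- Two-sided refinement of a matched pair. -/
lemma fullStep {P K : Set Cantor} (hP : IsClosed P) (hK : IsClosed K)
    (hPnd : IsNowhereDense P) (hKnd : IsNowhereDense K) (f : P ≃ₜ K)
    {q : Set Cantor × Set Cantor} (hgood : GoodPair P K f q) (n : ℕ) :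
    ∃ 𝒮 : Set (Set Cantor × Set Cantor), 𝒮.Finite ∧
      (∀ r ∈ 𝒮, GoodPair P K f r ∧ Small n r.1 ∧ Small n r.2 ∧ r.1 ⊆ q.1 ∧ r.2 ⊆ q.2) ∧
      PairwiseDisj 𝒮 ∧ (⋃ r ∈ 𝒮, r.1) = q.1 ∧ (⋃ r ∈ 𝒮, r.2) = q.2 := by
  classical
  obtain ⟨𝒮₁, h1fin, h1mem, h1pw, h1u1, h1u2⟩ := halfStep hP hK hPnd hKnd f
    (show GoodPair P K f (q.1, q.2) from hgood) n
  have hch : ∀ r ∈ 𝒮₁, ∃ 𝒯 : Set (Set Cantor × Set Cantor), 𝒯.Finite ∧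
      (∀ s ∈ 𝒯, GoodPair K P f.symm s ∧ Small n s.1 ∧ s.1 ⊆ r.2 ∧ s.2 ⊆ r.1) ∧
      PairwiseDisj 𝒯 ∧ (⋃ s ∈ 𝒯, s.1) = r.2 ∧ (⋃ s ∈ 𝒯, s.2) = r.1 := by
    intro r hr
    exact halfStep hK hP hKnd hPnd f.symm
      (show GoodPair K P f.symm (r.2, r.1) from ((h1mem r hr).1).swap) n
  choose! 𝒯 h𝒯 using hch
  set T : (Set Cantor × Set Cantor) → Set (Set Cantor × Set Cantor) :=
    fun r => Prod.swap '' 𝒯 r with hTdef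
  have hTprops : ∀ r ∈ 𝒮₁, (T r).Finite ∧ (∀ s ∈ T r, s.1 ⊆ r.1 ∧ s.2 ⊆ r.2) ∧
      PairwiseDisj (T r) ∧ (⋃ s ∈ T r, s.1) = r.1 ∧ (⋃ s ∈ T r, s.2) = r.2 := by
    intro r hr
    obtain ⟨hfin', hmem', hpw', hu1', hu2'⟩ := h𝒯 r hr
    refine ⟨hfin'.image _, ?_, ?_, ?_, ?_⟩
    · rintro s ⟨t, ht, rfl⟩
      exact ⟨(hmem' t ht).2.2.2, (hmem' t ht).2.2.1⟩
    · rintro s ⟨t, ht, rfl⟩ s' ⟨t', ht', rfl⟩ hne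
      have htt' : t ≠ t' := fun h => hne (by rw [h])
      have hd := hpw' ht ht' htt'
      exact ⟨hd.2, hd.1⟩
    · rw [← hu2']
      ext x
      simp only [Set.mem_iUnion, exists_prop]
      constructor
      · rintro ⟨s, ⟨t, ht, rfl⟩, hx⟩
        exact ⟨t, ht, hx⟩
      · rintro ⟨t, ht, hx⟩
        exact ⟨t.swap, ⟨t, ht, rfl⟩, hx⟩
    · rw [← hu1']
      ext x
      simp only [Set.mem_iUnion, exists_prop]
      constructor
      · rintro ⟨s, ⟨t, ht, rfl⟩, hx⟩
        exact ⟨t, ht, hx⟩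
      · rintro ⟨t, ht, hx⟩
        exact ⟨t.swap, ⟨t, ht, rfl⟩, hx⟩
  obtain ⟨hfin, hpw, hu1, hu2, hpar⟩ := glue h1fin h1pw T hTprops
  refine ⟨⋃ r ∈ 𝒮₁, T r, hfin, ?_, hpw, by rw [hu1, h1u1], by rw [hu2, h1u2]⟩
  intro s hs
  obtain ⟨r, hr, hsr⟩ := hpar s hs
  obtain ⟨t, ht, rfl⟩ := hsr
  obtain ⟨hgoodt, hsmallt, ht1, ht2⟩ := (h𝒯 r hr).2.1 t ht
  have hgoods : GoodPair P K f t.swap := by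
    have := hgoodt.swap
    rwa [Homeomorph.symm_symm] at this
  have hr1 : t.swap.1 ⊆ r.1 := ht2
  have hr2 : t.swap.2 ⊆ r.2 := ht1
  refine ⟨hgoods, ?_, ?_, hr1.trans (h1mem r hr).2.2.1, hr2.trans (h1mem r hr).2.2.2⟩
  · exact ((h1mem r hr).2.1).subset hr1
  · exact hsmallt

def StageOK (P K : Set Cantor) (f : P ≃ₜ K) (n : ℕ)
    (𝒮 : Set (Set Cantor × Set Cantor)) : Prop :=
  𝒮.Finite ∧ (∀ q ∈ 𝒮, GoodPair P K f q ∧ Small n q.1 ∧ Small n q.2) ∧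
    PairwiseDisj 𝒮 ∧ (⋃ q ∈ 𝒮, q.1) = Set.univ ∧ (⋃ q ∈ 𝒮, q.2) = Set.univ

lemma stepEx {P K : Set Cantor} (hP : IsClosed P) (hK : IsClosed K)
    (hPnd : IsNowhereDense P) (hKnd : IsNowhereDense K) (f : P ≃ₜ K)
    {n : ℕ} {𝒮 : Set (Set Cantor × Set Cantor)} (hok : StageOK P K f n 𝒮) :
    ∃ 𝒮', StageOK P K f (n + 1) 𝒮' ∧ ∀ r ∈ 𝒮', ∃ q ∈ 𝒮, r.1 ⊆ q.1 ∧ r.2 ⊆ q.2 := by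
  classical
  obtain ⟨hfin, hmem, hpw, hu1, hu2⟩ := hok
  have hch : ∀ q ∈ 𝒮, ∃ 𝒯 : Set (Set Cantor × Set Cantor), 𝒯.Finite ∧
      (∀ r ∈ 𝒯, GoodPair P K f r ∧ Small (n+1) r.1 ∧ Small (n+1) r.2 ∧ r.1 ⊆ q.1 ∧ r.2 ⊆ q.2) ∧
      PairwiseDisj 𝒯 ∧ (⋃ r ∈ 𝒯, r.1) = q.1 ∧ (⋃ r ∈ 𝒯, r.2) = q.2 :=
    fun q hq => fullStep hP hK hPnd hKnd f (hmem q hq).1 (n + 1)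
  choose! T hT using hch
  obtain ⟨hfin', hpw', hu1', hu2', hpar⟩ := glue hfin hpw T (fun q hq =>
    ⟨(hT q hq).1, fun r hr => ⟨((hT q hq).2.1 r hr).2.2.2.1, ((hT q hq).2.1 r hr).2.2.2.2⟩,
      (hT q hq).2.2.1, (hT q hq).2.2.2.1, (hT q hq).2.2.2.2⟩)
  refine ⟨⋃ q ∈ 𝒮, T q, ⟨hfin', ?_, hpw', by rw [hu1', hu1], by rw [hu2', hu2]⟩, ?_⟩
  · intro r hr
    obtain ⟨q, hq, hrq⟩ := hpar r hr
    exact ⟨((hT q hq).2.1 r hrq).1, ((hT q hq).2.1 r hrq).2.1, ((hT q hq).2.1 r hrq).2.2.1⟩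
  · intro r hr
    obtain ⟨q, hq, hrq⟩ := hpar r hr
    exact ⟨q, hq, ((hT q hq).2.1 r hrq).2.2.2.1, ((hT q hq).2.1 r hrq).2.2.2.2⟩

end KR
namespace KR
open Set

/-- An abstract system of matched partition refinements. -/
structure LimSys (seq : ℕ → Set (Set Cantor × Set Cantor)) : Prop where
  cov1 : ∀ n x, ∃ q ∈ seq n, x ∈ q.1
  cov2 : ∀ n x, ∃ q ∈ seq n, x ∈ q.2
  good : ∀ n, ∀ q ∈ seq n, IsClopen q.1 ∧ IsClopen q.2 ∧ q.1.Nonempty ∧ q.2.Nonempty ∧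
    Small n q.1 ∧ Small n q.2
  disj : ∀ n, (seq n).Pairwise fun p q => Disjoint p.1 q.1 ∧ Disjoint p.2 q.2
  ref : ∀ n, ∀ q ∈ seq (n + 1), ∃ p ∈ seq n, q.1 ⊆ p.1 ∧ q.2 ⊆ p.2

lemma LimSys.swap {seq : ℕ → Set (Set Cantor × Set Cantor)} (h : LimSys seq) :
    LimSys (fun n => Prod.swap '' seq n) := by
  constructor
  · intro n x
    obtain ⟨q, hq, hx⟩ := h.cov2 n x
    exact ⟨q.swap, ⟨q, hq, rfl⟩, hx⟩
  · intro n x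
    obtain ⟨q, hq, hx⟩ := h.cov1 n x
    exact ⟨q.swap, ⟨q, hq, rfl⟩, hx⟩
  · rintro n q ⟨p, hp, rfl⟩
    obtain ⟨h1, h2, h3, h4, h5, h6⟩ := h.good n p hp
    exact ⟨h2, h1, h4, h3, h6, h5⟩
  · rintro n q ⟨p, hp, rfl⟩ q' ⟨p', hp', rfl⟩ hne
    have hpp' : p ≠ p' := fun he => hne (by rw [he])
    exact ⟨(h.disj n hp hp' hpp').2, (h.disj n hp hp' hpp').1⟩
  · rintro n q ⟨p, hp, rfl⟩
    obtain ⟨r, hr, h1, h2⟩ := h.ref n p hp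
    exact ⟨r.swap, ⟨r, hr, rfl⟩, h2, h1⟩

variable {seq : ℕ → Set (Set Cantor × Set Cantor)}

lemma LimSys.uniq (h : LimSys seq) {n : ℕ} {q q' : Set Cantor × Set Cantor} {x : Cantor}
    (hq : q ∈ seq n) (hq' : q' ∈ seq n) (hx : x ∈ q.1) (hx' : x ∈ q'.1) : q = q' := by
  by_contra hne
  exact Set.disjoint_left.1 (h.disj n hq hq' hne).1 hx hx'

/-- The pair of stage `n` whose first component contains `x`. -/
noncomputable def pickPair (h : LimSys seq) (n : ℕ) (x : Cantor) : Set Cantor × Set Cantor :=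
  (h.cov1 n x).choose

lemma pickPair_mem (h : LimSys seq) (n : ℕ) (x : Cantor) : pickPair h n x ∈ seq n :=
  (h.cov1 n x).choose_spec.1

lemma mem_pickPair (h : LimSys seq) (n : ℕ) (x : Cantor) : x ∈ (pickPair h n x).1 :=
  (h.cov1 n x).choose_spec.2

lemma pickPair_succ_subset (h : LimSys seq) (n : ℕ) (x : Cantor) :
    (pickPair h (n + 1) x).2 ⊆ (pickPair h n x).2 := by
  obtain ⟨p, hp, h1, h2⟩ := h.ref n _ (pickPair_mem h (n + 1) x)
  have : p = pickPair h n x :=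
    h.uniq hp (pickPair_mem h n x) (h1 (mem_pickPair h (n + 1) x)) (mem_pickPair h n x)
  rw [← this]
  exact h2

lemma pickPair_iInter_nonempty (h : LimSys seq) (x : Cantor) :
    (⋂ n, (pickPair h n x).2).Nonempty := by
  refine IsCompact.nonempty_iInter_of_sequence_nonempty_isCompact_isClosed _
    (fun n => pickPair_succ_subset h n x)
    (fun n => (h.good n _ (pickPair_mem h n x)).2.2.2.1)
    ((h.good 0 _ (pickPair_mem h 0 x)).2.1.isClosed.isCompact)
    (fun n => (h.good n _ (pickPair_mem h n x)).2.1.isClosed)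

/-- The limit map of a system of matched refinements. -/
noncomputable def limF (seq : ℕ → Set (Set Cantor × Set Cantor)) (h : LimSys seq)
    (x : Cantor) : Cantor :=
  (pickPair_iInter_nonempty h x).choose

lemma limF_mem (h : LimSys seq) (x : Cantor) (n : ℕ) : limF seq h x ∈ (pickPair h n x).2 := by
  have := (pickPair_iInter_nonempty h x).choose_spec
  rw [Set.mem_iInter] at this
  exact this n

lemma limF_mem' (h : LimSys seq) {x : Cantor} {n : ℕ} {q : Set Cantor × Set Cantor}
    (hq : q ∈ seq n) (hx : x ∈ q.1) : limF seq h x ∈ q.2 := by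
  have : q = pickPair h n x := h.uniq hq (pickPair_mem h n x) hx (mem_pickPair h n x)
  rw [this]
  exact limF_mem h x n

lemma limF_unique (h : LimSys seq) {x y : Cantor}
    (hy : ∀ n, ∃ q ∈ seq n, x ∈ q.1 ∧ y ∈ q.2) : limF seq h x = y := by
  funext i
  obtain ⟨q, hq, hx, hyq⟩ := hy (i + 1)
  have h1 : limF seq h x ∈ q.2 := limF_mem' h hq hx
  exact (h.good (i + 1) q hq).2.2.2.2.2 _ h1 _ hyq i (Nat.lt_succ_self i)

lemma limF_continuous (h : LimSys seq) : Continuous (limF seq h) := by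
  rw [continuous_iff_continuousAt]
  intro x
  rw [ContinuousAt, tendsto_pi_nhds]
  intro i
  have hev : ∀ᶠ y in nhds x, limF seq h y i = limF seq h x i := by
    refine Filter.eventually_of_mem
      (((h.good (i+1) _ (pickPair_mem h (i+1) x)).1.isOpen).mem_nhds (mem_pickPair h (i+1) x))
      ?_
    intro y hy
    have h1 : limF seq h y ∈ (pickPair h (i+1) x).2 :=
      limF_mem' h (pickPair_mem h (i+1) x) hy
    have h2 : limF seq h x ∈ (pickPair h (i+1) x).2 := limF_mem h x (i+1)
    exact (h.good (i+1) _ (pickPair_mem h (i+1) x)).2.2.2.2.2 _ h1 _ h2 i (Nat.lt_succ_self i)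
  exact Filter.Tendsto.congr' (hev.mono fun y hy => hy.symm) tendsto_const_nhds

lemma limF_inv {seq' : ℕ → Set (Set Cantor × Set Cantor)} (h : LimSys seq) (h' : LimSys seq')
    (hsw : ∀ n, seq' n = Prod.swap '' seq n) (x : Cantor) :
    limF seq h (limF seq' h' x) = x := by
  refine limF_unique h (fun n => ?_)
  have hr : pickPair h' n x ∈ seq' n := pickPair_mem h' n x
  rw [hsw n] at hr
  obtain ⟨q, hq, hqe⟩ := hr
  refine ⟨q, hq, ?_, ?_⟩
  · have := limF_mem h' x n
    rw [← hqe] at this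
    exact this
  · have := mem_pickPair h' n x
    rw [← hqe] at this
    exact this

end KR
namespace KR
open Set

lemma stage0 (P K : Set Cantor) (f : P ≃ₜ K) :
    StageOK P K f 0 {((Set.univ : Set Cantor), (Set.univ : Set Cantor))} := by
  refine ⟨Set.finite_singleton _, ?_, Set.pairwise_singleton _ _, by simp, by simp⟩
  rintro q hq
  rw [Set.mem_singleton_iff] at hq
  subst hq
  exact ⟨⟨isClopen_univ, isClopen_univ, Set.univ_nonempty, Set.univ_nonempty,
    fun p => by simp⟩, Small.zero _, Small.zero _⟩

noncomputable def buildP {P K : Set Cantor} (hP : IsClosed P) (hK : IsClosed K)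
    (hPnd : IsNowhereDense P) (hKnd : IsNowhereDense K) (f : P ≃ₜ K) :
    (n : ℕ) → {𝒮 : Set (Set Cantor × Set Cantor) // StageOK P K f n 𝒮}
  | 0 => ⟨_, stage0 P K f⟩
  | n + 1 => ⟨(stepEx hP hK hPnd hKnd f (buildP hP hK hPnd hKnd f n).2).choose,
      (stepEx hP hK hPnd hKnd f (buildP hP hK hPnd hKnd f n).2).choose_spec.1⟩

lemma buildP_limSys {P K : Set Cantor} (hP : IsClosed P) (hK : IsClosed K)
    (hPnd : IsNowhereDense P) (hKnd : IsNowhereDense K) (f : P ≃ₜ K) :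
    LimSys (fun n => (buildP hP hK hPnd hKnd f n).1) := by
  set seq := fun n => (buildP hP hK hPnd hKnd f n).1 with hseq
  have hok : ∀ n, StageOK P K f n (seq n) := fun n => (buildP hP hK hPnd hKnd f n).2
  constructor
  · intro n x
    have := (hok n).2.2.2.1
    have hx : x ∈ ⋃ q ∈ seq n, q.1 := by rw [this]; trivial
    simpa using hx
  · intro n x
    have := (hok n).2.2.2.2
    have hx : x ∈ ⋃ q ∈ seq n, q.2 := by rw [this]; trivial
    simpa using hx
  · intro n q hq
    obtain ⟨⟨h1, h2, h3, h4, -⟩, h5, h6⟩ := (hok n).2.1 q hq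
    exact ⟨h1, h2, h3, h4, h5, h6⟩
  · intro n
    exact (hok n).2.2.1
  · intro n q hq
    exact (stepEx hP hK hPnd hKnd f (buildP hP hK hPnd hKnd f n).2).choose_spec.2 q hq

end KR

theorem knaster_reichbach_cantor
    (P K : Set Cantor) (hP : IsClosed P) (hK : IsClosed K)
    (hPnd : IsNowhereDense P) (hKnd : IsNowhereDense K)
    (f : P ≃ₜ K) :
    ∃ F : Cantor ≃ₜ Cantor, ∀ p : P, F (p : Cantor) = (f p : Cantor) := by
  classical
  set seq := fun n => (KR.buildP hP hK hPnd hKnd f n).1 with hseqdef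
  have hok : ∀ n, KR.StageOK P K f n (seq n) := fun n => (KR.buildP hP hK hPnd hKnd f n).2
  have hsys : KR.LimSys seq := KR.buildP_limSys hP hK hPnd hKnd f
  set seq' := fun n => Prod.swap '' seq n with hseq'def
  have hsys' : KR.LimSys seq' := hsys.swap
  have hsw : ∀ n, seq' n = Prod.swap '' seq n := fun n => rfl
  have hsw' : ∀ n, seq n = Prod.swap '' seq' n := by
    intro n
    rw [hsw n, Set.image_image]
    simp
  refine ⟨⟨⟨KR.limF seq hsys, KR.limF seq' hsys', ?_, ?_⟩,
    KR.limF_continuous hsys, KR.limF_continuous hsys'⟩, ?_⟩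
  · intro x
    exact KR.limF_inv hsys' hsys hsw' x
  · intro x
    exact KR.limF_inv hsys hsys' hsw x
  · intro p
    refine KR.limF_unique hsys (fun n => ?_)
    obtain ⟨q, hq, hxq⟩ := hsys.cov1 n (p : Cantor)
    refine ⟨q, hq, hxq, ?_⟩
    have hmat := ((hok n).2.1 q hq).1.2.2.2.2
    exact (hmat p).1 hxq
end

section
/- Let P and K be closed subsets of the Cantor cube D^τ = {0,1}^τ (τ an infinite cardinal) both of topological weight strictly less than τ. Then every homeomorphism f : P → K extends to a homeomorphism of D^τ onto itself. -/
open Cardinal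

universe u

/-- The weight of a topological space: the least cardinality of a basis. -/
noncomputable def tweight (X : Type u) [t : TopologicalSpace X] : Cardinal.{u} :=
  ⨅ b : {b : Set (Set X) // TopologicalSpace.IsTopologicalBasis b}, #b.1

open Set TopologicalSpace

/-- Finite coordinate separation of disjoint compact subsets of a Cantor cube. -/
lemma finsep {ι : Type*} {S T : Set (ι → Bool)} (hS : IsCompact S) (hT : IsCompact T)
    (hd : Disjoint S T) :
    ∃ t : Finset ι, ∀ x ∈ S, ∀ y ∈ T, ∃ a ∈ t, x a ≠ y a := by
  classical
  set U : ι → Set ((ι → Bool) × (ι → Bool)) := fun a => {p | p.1 a ≠ p.2 a} with hU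
  have hUo : ∀ a, IsOpen (U a) := by
    intro a
    have hc : Continuous fun p : (ι → Bool) × (ι → Bool) => (p.1 a, p.2 a) :=
      ((continuous_apply a).comp continuous_fst).prodMk ((continuous_apply a).comp continuous_snd)
    exact (isOpen_discrete {q : Bool × Bool | q.1 ≠ q.2}).preimage hc
  have hcov : S ×ˢ T ⊆ ⋃ a, U a := by
    rintro ⟨x, y⟩ ⟨hx, hy⟩
    have hxy : x ≠ y := fun h => (hd.ne_of_mem hx hy) h
    obtain ⟨a, ha⟩ := Function.ne_iff.mp hxy
    exact mem_iUnion.mpr ⟨a, ha⟩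
  obtain ⟨t, ht⟩ := (hS.prod hT).elim_finite_subcover U hUo hcov
  refine ⟨t, fun x hx y hy => ?_⟩
  have := ht (Set.mk_mem_prod hx hy)
  simpa [U] using this

/-- Clopen separation in the Cantor cube. -/
lemma clopensep {ι : Type*} {S T : Set (ι → Bool)} (hS : IsCompact S) (hT : IsCompact T)
    (hd : Disjoint S T) :
    ∃ U : Set (ι → Bool), IsClopen U ∧ S ⊆ U ∧ Disjoint U T := by
  obtain ⟨t, ht⟩ := finsep hS hT hd
  set π : (ι → Bool) → (t → Bool) := fun x a => x a.1 with hπ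
  have hπc : Continuous π := continuous_pi fun a => continuous_apply _
  refine ⟨π ⁻¹' (π '' S), ⟨(isClosed_discrete _).preimage hπc, (isOpen_discrete _).preimage hπc⟩,
    subset_preimage_image π S, ?_⟩
  rw [Set.disjoint_left]
  rintro y ⟨x, hxS, hxy⟩ hyT
  obtain ⟨a, hat, hne⟩ := ht x hxS y hyT
  exact hne (congrFun hxy ⟨a, hat⟩)

/-- Continuous extension of Bool-valued (vector) maps from closed subsets of the cube. -/
lemma extend_cont {ι : Type*} {Q : Set (ι → Bool)} (hQ : IsClosed Q) {C : Type*}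
    {g : Q → C → Bool} (hg : Continuous g) :
    ∃ G : (ι → Bool) → C → Bool, Continuous G ∧ ∀ q : Q, G ↑q = g q := by
  classical
  have hsep : ∀ c : C, ∃ U : Set (ι → Bool), IsClopen U ∧
      (Subtype.val '' ((fun q => g q c) ⁻¹' {true})) ⊆ U ∧
      Disjoint U (Subtype.val '' ((fun q => g q c) ⁻¹' {false})) := by
    intro c
    have hgc : Continuous fun q => g q c := (continuous_apply c).comp hg
    have h1 : IsClosed (Subtype.val '' ((fun q => g q c) ⁻¹' {true})) :=
      hQ.isClosedEmbedding_subtypeVal.isClosedMap _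
        ((isClosed_discrete _).preimage hgc)
    have h2 : IsClosed (Subtype.val '' ((fun q => g q c) ⁻¹' {false})) :=
      hQ.isClosedEmbedding_subtypeVal.isClosedMap _
        ((isClosed_discrete _).preimage hgc)
    refine clopensep h1.isCompact h2.isCompact ?_
    rw [Set.disjoint_left]
    rintro x ⟨q, hq, rfl⟩ ⟨q', hq', hqq'⟩
    have : q = q' := Subtype.ext hqq'.symm
    subst this
    simp only [mem_preimage, mem_singleton_iff] at hq hq'
    rw [hq] at hq'; exact Bool.noConfusion hq'
  choose U hUclopen hUsub hUdisj using hsep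
  refine ⟨fun x c => (U c).boolIndicator x, ?_, ?_⟩
  · exact continuous_pi fun c => (continuous_boolIndicator_iff_isClopen _).mpr (hUclopen c)
  · intro q
    funext c
    cases hgc : g q c with
    | true =>
      have : (q : ι → Bool) ∈ U c := hUsub c ⟨q, by simp [hgc], rfl⟩
      simpa [hgc] using ((U c).mem_iff_boolIndicator _).mp this
    | false =>
      have hmem : (q : ι → Bool) ∈ Subtype.val '' ((fun q => g q c) ⁻¹' {false}) :=
        ⟨q, by simp [hgc], rfl⟩
      have : (q : ι → Bool) ∉ U c := fun h => (hUdisj c).ne_of_mem h hmem rfl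
      simpa [hgc] using ((U c).notMem_iff_boolIndicator _).mp this

/-- Shear homeomorphism of `Y × (C → Bool)` along a continuous map `G`. -/
def shear {Y : Type*} [TopologicalSpace Y] {C : Type*} (G : Y → C → Bool) (hG : Continuous G) :
    (Y × (C → Bool)) ≃ₜ (Y × (C → Bool)) where
  toFun p := (p.1, fun c => xor (p.2 c) (G p.1 c))
  invFun p := (p.1, fun c => xor (p.2 c) (G p.1 c))
  left_inv p := by
    refine Prod.ext rfl (funext fun c => ?_)
    simp
  right_inv p := by
    refine Prod.ext rfl (funext fun c => ?_)
    simp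
  continuous_toFun := by
    refine continuous_fst.prodMk (continuous_pi fun c => ?_)
    have h1 : Continuous fun p : Y × (C → Bool) => (p.2 c, G p.1 c) :=
      ((continuous_apply c).comp continuous_snd).prodMk
        ((continuous_apply c).comp (hG.comp continuous_fst))
    exact (continuous_of_discreteTopology (f := fun q : Bool × Bool => xor q.1 q.2)).comp h1
  continuous_invFun := by
    refine continuous_fst.prodMk (continuous_pi fun c => ?_)
    have h1 : Continuous fun p : Y × (C → Bool) => (p.2 c, G p.1 c) :=
      ((continuous_apply c).comp continuous_snd).prodMk
        ((continuous_apply c).comp (hG.comp continuous_fst))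
    exact (continuous_of_discreteTopology (f := fun q : Bool × Bool => xor q.1 q.2)).comp h1

@[simp] lemma shear_apply {Y : Type*} [TopologicalSpace Y] {C : Type*} (G : Y → C → Bool)
    (hG : Continuous G) (p : Y × (C → Bool)) :
    shear G hG p = (p.1, fun c => xor (p.2 c) (G p.1 c)) := rfl

@[simp] lemma shear_symm_apply {Y : Type*} [TopologicalSpace Y] {C : Type*} (G : Y → C → Bool)
    (hG : Continuous G) (p : Y × (C → Bool)) :
    (shear G hG).symm p = (p.1, fun c => xor (p.2 c) (G p.1 c)) := rfl

lemma exists_small_sep {A : Type u} (hA : ℵ₀ ≤ #A) (P : Set (A → Bool)) (hP : IsClosed P)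
    (hw : tweight P < #A) :
    ∃ B : Set A, #B < #A ∧ ∀ x ∈ P, ∀ y ∈ P, (∀ a ∈ B, x a = y a) → x = y := by
  classical
  haveI : Nonempty {b : Set (Set ↥P) // IsTopologicalBasis b} :=
    ⟨⟨{s | IsOpen s}, isTopologicalBasis_opens⟩⟩
  obtain ⟨b, hb⟩ := Set.mem_range.mp
    (ciInf_mem (fun b : {b : Set (Set ↥P) // IsTopologicalBasis b} => #b.1))
  have hbw : #b.1 < #A := by
    rw [hb]; exact hw
  have hPc : IsCompact P := hP.isCompact
  haveI : CompactSpace ↥P := isCompact_iff_compactSpace.mp hPc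
  have emb := hP.isClosedEmbedding_subtypeVal
  set I := ↥b.1 × ↥b.1 with hI
  have hcomp : ∀ s : Set ↥P, IsCompact (closure (Subtype.val '' s)) :=
    fun s => isClosed_closure.isCompact
  set Sfin : I → Finset A := fun i =>
    if h : Disjoint (closure (Subtype.val '' (i.1 : Set ↥P)))
        (closure (Subtype.val '' (i.2 : Set ↥P)))
    then (finsep (hcomp _) (hcomp _) h).choose else ∅ with hSfin
  have hSspec : ∀ i : I, ∀ h : Disjoint (closure (Subtype.val '' (i.1 : Set ↥P)))
      (closure (Subtype.val '' (i.2 : Set ↥P))),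
      ∀ x ∈ closure (Subtype.val '' (i.1 : Set ↥P)),
      ∀ y ∈ closure (Subtype.val '' (i.2 : Set ↥P)), ∃ a ∈ Sfin i, x a ≠ y a := by
    intro i h x hx y hy
    have := (finsep (hcomp (i.1 : Set ↥P)) (hcomp (i.2 : Set ↥P)) h).choose_spec x hx y hy
    simpa [hSfin, dif_pos h] using this
  refine ⟨⋃ i : I, (↑(Sfin i) : Set A), ?_, ?_⟩
  · -- cardinality
    rcases lt_or_ge (#b.1) ℵ₀ with hfin | hinf
    · haveI : Finite ↥b.1 := lt_aleph0_iff_finite.mp hfin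
      haveI : Finite I := inferInstance
      have : (⋃ i : I, (↑(Sfin i) : Set A)).Finite :=
        Set.finite_iUnion fun i => (Sfin i).finite_toSet
      exact this.lt_aleph0.trans_le hA
    · have h1 : #(⋃ i : I, (↑(Sfin i) : Set A)) ≤ #I * ⨆ i, #(↑(Sfin i) : Set A) :=
        mk_iUnion_le _
      have h2 : (⨆ i, #(↑(Sfin i) : Set A)) ≤ ℵ₀ :=
        ciSup_le' fun i => ((Sfin i).finite_toSet.lt_aleph0).le
      have h3 : #I = #b.1 * #b.1 := by
        simp [hI]
      have h4 : #I * ℵ₀ = #b.1 := by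
        rw [h3, Cardinal.mul_eq_self hinf, Cardinal.mul_eq_max hinf le_rfl,
          max_eq_left hinf]
      calc #(⋃ i : I, (↑(Sfin i) : Set A)) ≤ #I * ⨆ i, #(↑(Sfin i) : Set A) := h1
        _ ≤ #I * ℵ₀ := mul_le_mul' le_rfl h2
        _ = #b.1 := h4
        _ < #A := hbw
  · -- separation
    intro x hx y hy hxy
    by_contra hne
    set px : ↥P := ⟨x, hx⟩
    set py : ↥P := ⟨y, hy⟩
    have hpxy : px ≠ py := fun h => hne (congrArg Subtype.val h)
    obtain ⟨O₁, O₂, hO₁, hO₂, hxO, hyO, hdisO⟩ := t2_separation hpxy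
    obtain ⟨C₁, hC₁mem, hC₁closed, hC₁sub⟩ := exists_mem_nhds_isClosed_subset (hO₁.mem_nhds hxO)
    obtain ⟨C₂, hC₂mem, hC₂closed, hC₂sub⟩ := exists_mem_nhds_isClosed_subset (hO₂.mem_nhds hyO)
    obtain ⟨U, hUb, hxU, hUC⟩ := b.2.mem_nhds_iff.mp hC₁mem
    obtain ⟨V, hVb, hyV, hVC⟩ := b.2.mem_nhds_iff.mp hC₂mem
    have hclU : closure U ⊆ O₁ := (closure_minimal hUC hC₁closed).trans hC₁sub
    have hclV : closure V ⊆ O₂ := (closure_minimal hVC hC₂closed).trans hC₂sub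
    have hdis : Disjoint (closure U) (closure V) := hdisO.mono hclU hclV
    have hdisamb : Disjoint (closure (Subtype.val '' U)) (closure (Subtype.val '' V)) := by
      rw [emb.closure_image_eq, emb.closure_image_eq]
      exact Set.disjoint_image_of_injective Subtype.val_injective hdis
    set i : I := (⟨U, hUb⟩, ⟨V, hVb⟩)
    have hxcl : x ∈ closure (Subtype.val '' U) := subset_closure ⟨px, hxU, rfl⟩
    have hycl : y ∈ closure (Subtype.val '' V) := subset_closure ⟨py, hyV, rfl⟩
    obtain ⟨a, haS, hane⟩ := hSspec i hdisamb x hxcl y hycl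
    exact hane (hxy a (Set.mem_iUnion.mpr ⟨i, haS⟩))

lemma extend_from_proj {A : Type u} {B : Set A} {P : Set (A → Bool)} (hP : IsClosed P)
    (hsep : ∀ x ∈ P, ∀ y ∈ P, (∀ a ∈ B, x a = y a) → x = y)
    {C : Type*} (g : ↥P → C → Bool) (hg : Continuous g) :
    ∃ G : ({a // a ∈ B} → Bool) → C → Bool, Continuous G ∧
      ∀ q : ↥P, G (fun j => (q : A → Bool) j.1) = g q := by
  classical
  set r : (A → Bool) → ({a // a ∈ B} → Bool) := fun x j => x j.1 with hr
  have hrc : Continuous r := continuous_pi fun j => continuous_apply _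
  haveI : CompactSpace ↥P := isCompact_iff_compactSpace.mp hP.isCompact
  set PB : Set ({a // a ∈ B} → Bool) := r '' P with hPB
  have hPBc : IsCompact PB := hP.isCompact.image hrc
  have hPBclosed : IsClosed PB := hPBc.isClosed
  have hinj : ∀ q q' : ↥P, r ↑q = r ↑q' → q = q' := by
    intro q q' h
    exact Subtype.ext (hsep _ q.2 _ q'.2 fun a ha => congrFun h ⟨a, ha⟩)
  set e : ↥P → ↥PB := fun q => ⟨r ↑q, ⟨↑q, q.2, rfl⟩⟩ with he
  have hbij : Function.Bijective e := by
    constructor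
    · intro q q' h
      exact hinj q q' (congrArg Subtype.val h)
    · rintro ⟨u, x, hx, rfl⟩
      exact ⟨⟨x, hx⟩, rfl⟩
  have hec : Continuous e :=
    Continuous.subtype_mk (hrc.comp continuous_subtype_val) _
  let E : ↥P ≃ₜ ↥PB :=
    Continuous.homeoOfEquivCompactToT2 (f := Equiv.ofBijective e hbij) hec
  have hg' : Continuous fun u : ↥PB => g (E.symm u) := hg.comp E.symm.continuous
  obtain ⟨G, hGc, hGe⟩ := extend_cont hPBclosed hg'
  refine ⟨G, hGc, fun q => ?_⟩
  have h1 : G ↑(E q) = g (E.symm (E q)) := hGe (E q)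
  rw [E.symm_apply_apply] at h1
  exact h1

theorem extend_homeo_small_weight
    {A : Type u} (hA : ℵ₀ ≤ #A)
    (P K : Set (A → Bool)) (hP : IsClosed P) (hK : IsClosed K)
    (hwP : tweight P < #A) (hwK : tweight K < #A)
    (f : P ≃ₜ K) :
    ∃ F : (A → Bool) ≃ₜ (A → Bool), ∀ p : P, F (p : A → Bool) = (f p : A → Bool) := by
  classical
  obtain ⟨BP, hBPcard, hsepP0⟩ := exists_small_sep hA P hP hwP
  obtain ⟨BK, hBKcard, hsepK0⟩ := exists_small_sep hA K hK hwK
  set B : Set A := BP ∪ BK with hBdef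
  have hsepP : ∀ x ∈ P, ∀ y ∈ P, (∀ a ∈ B, x a = y a) → x = y :=
    fun x hx y hy h => hsepP0 x hx y hy fun a ha => h a (Or.inl ha)
  have hsepK : ∀ x ∈ K, ∀ y ∈ K, (∀ a ∈ B, x a = y a) → x = y :=
    fun x hx y hy h => hsepK0 x hx y hy fun a ha => h a (Or.inr ha)
  have hBcard : #B < #A :=
    (Cardinal.mk_union_le _ _).trans_lt (Cardinal.add_lt_of_lt hA hBPcard hBKcard)
  -- the two halves
  let Y := ({a // a ∈ B} → Bool)
  let Z := ({a // ¬ a ∈ B} → Bool)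
  let Φ : (A → Bool) ≃ₜ Y × Z :=
    Homeomorph.piEquivPiSubtypeProd (fun a => a ∈ B) (fun _ => Bool)
  let r : (A → Bool) → Y := fun x j => x j.1
  let s2 : (A → Bool) → Z := fun x j => x j.1
  have hΦ : ∀ x, Φ x = (r x, s2 x) := fun x => rfl
  -- straightening data
  obtain ⟨GP, hGPc, hGPe⟩ := extend_from_proj hP hsepP
    (g := fun q : ↥P => (fun j => (q : A → Bool) j.1 : Z))
    (continuous_pi fun j => (continuous_apply j.1).comp continuous_subtype_val)
  obtain ⟨GK, hGKc, hGKe⟩ := extend_from_proj hK hsepK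
    (g := fun q : ↥K => (fun j => (q : A → Bool) j.1 : Z))
    (continuous_pi fun j => (continuous_apply j.1).comp continuous_subtype_val)
  -- Klee extension data
  have hrc : Continuous r := continuous_pi fun j => continuous_apply _
  obtain ⟨FB, hFBc, hFBe⟩ := extend_from_proj hP hsepP
    (g := fun q : ↥P => r ↑(f q))
    ((hrc.comp continuous_subtype_val).comp f.continuous)
  obtain ⟨FB', hFB'c, hFB'e⟩ := extend_from_proj hK hsepK
    (g := fun u : ↥K => r ↑(f.symm u))
    ((hrc.comp continuous_subtype_val).comp f.symm.continuous)
  -- cardinal splitting of the complement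
  have hsum : #({a // a ∈ B}) + #({a // ¬ a ∈ B}) = #A := Cardinal.mk_sum_compl B
  have hle : #({a // ¬ a ∈ B}) ≤ #A := Cardinal.mk_subtype_le _
  have hcompl : #({a // ¬ a ∈ B}) = #A := by
    rcases hle.lt_or_eq with h | h
    · exact absurd hsum (Cardinal.add_lt_of_lt hA hBcard h).ne
    · exact h
  have hinfc : ℵ₀ ≤ #({a // ¬ a ∈ B}) := hcompl ▸ hA
  have hBle : #({a // a ∈ B}) ≤ #({a // ¬ a ∈ B}) := by rw [hcompl]; exact hBcard.le
  have hsumZ : #({a // a ∈ B} ⊕ {a // ¬ a ∈ B}) = #({a // ¬ a ∈ B}) := by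
    rw [Cardinal.mk_sum, Cardinal.lift_id, Cardinal.lift_id,
      Cardinal.add_eq_right hinfc hBle]
  obtain ⟨e⟩ := Cardinal.eq.mp hsumZ
  let ζ : Z ≃ₜ Y × Z :=
    (Homeomorph.piCongrLeft (Y := fun _ => Bool) e).symm.trans
      Homeomorph.sumArrowHomeomorphProdArrow
  have hζ0 : ζ (fun _ => false) = (fun _ => false, fun _ => false) := by
    refine Prod.ext (funext fun j => ?_) (funext fun j => ?_) <;>
      simp [ζ, Homeomorph.sumArrowHomeomorphProdArrow, Equiv.sumArrowEquivProdArrow,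
        Homeomorph.piCongrLeft, Equiv.piCongrLeft, Equiv.piCongrLeft']
  have hζ0' : ζ.symm (fun _ => false, fun _ => false) = (fun _ => false) := by
    rw [← hζ0, Homeomorph.symm_apply_apply]
  -- the Klee homeomorphism on Y × Y
  let Hk : (Y × Y) ≃ₜ (Y × Y) :=
    (shear FB hFBc).trans ((Homeomorph.prodComm Y Y).trans (shear FB' hFB'c))
  have hHk : ∀ q : ↥P, Hk (r ↑q, fun _ => false) = (r ↑(f q), fun _ => false) := by
    intro q
    have h1 : shear FB hFBc (r ↑q, fun _ => false) = (r ↑q, r ↑(f q)) := by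
      rw [shear_apply]
      refine Prod.ext rfl (funext fun c => ?_)
      have : FB (r ↑q) = r ↑(f q) := hFBe q
      rw [this]
      simp
    have h2 : FB' (r ↑(f q)) = r ↑q := by
      have := hFB'e (f q)
      rw [f.symm_apply_apply] at this
      exact this
    show (shear FB' hFB'c) ((Homeomorph.prodComm Y Y) ((shear FB hFBc) (r ↑q, fun _ => false)))
      = (r ↑(f q), fun _ => false)
    rw [h1]
    show (shear FB' hFB'c) (r ↑(f q), r ↑q) = (r ↑(f q), fun _ => false)
    rw [shear_apply]
    refine Prod.ext rfl (funext fun c => ?_)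
    rw [h2]
    simp
  -- middle homeomorphism on Y × Z
  let M : (Y × Z) ≃ₜ (Y × Z) :=
    ((Homeomorph.refl Y).prodCongr ζ).trans
      (((Homeomorph.prodAssoc Y Y Z).symm).trans
        ((Hk.prodCongr (Homeomorph.refl Z)).trans
          ((Homeomorph.prodAssoc Y Y Z).trans
            ((Homeomorph.refl Y).prodCongr ζ.symm))))
  have hM : ∀ q : ↥P, M (r ↑q, fun _ => false) = (r ↑(f q), fun _ => false) := by
    intro q
    show ((Homeomorph.refl Y).prodCongr ζ.symm)
        ((Homeomorph.prodAssoc Y Y Z)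
          ((Hk.prodCongr (Homeomorph.refl Z))
            ((Homeomorph.prodAssoc Y Y Z).symm
              (((Homeomorph.refl Y).prodCongr ζ) (r ↑q, fun _ => false)))))
      = (r ↑(f q), fun _ => false)
    have s1 : ((Homeomorph.refl Y).prodCongr ζ) (r ↑q, fun _ => false)
        = (r ↑q, (fun _ => false, fun _ => false)) := by
      simp [Homeomorph.prodCongr, hζ0]
    rw [s1]
    have s2' : (Homeomorph.prodAssoc Y Y Z).symm (r ↑q, (fun _ => false, fun _ => false))
        = ((r ↑q, fun _ => false), fun _ => false) := rfl
    rw [s2']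
    have s3 : (Hk.prodCongr (Homeomorph.refl Z)) ((r ↑q, fun _ => false), fun _ => false)
        = ((r ↑(f q), fun _ => false), (fun _ => false : Z)) := by
      simp [Homeomorph.prodCongr, hHk q]
    rw [s3]
    have s4 : (Homeomorph.prodAssoc Y Y Z) ((r ↑(f q), fun _ => false), (fun _ => false : Z))
        = (r ↑(f q), ((fun _ => false : Y), (fun _ => false : Z))) := rfl
    rw [s4]
    simp [Homeomorph.prodCongr, hζ0']
  -- assemble
  refine ⟨Φ.trans ((shear GP hGPc).trans (M.trans ((shear GK hGKc).symm.trans Φ.symm))), ?_⟩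
  intro q
  show Φ.symm ((shear GK hGKc).symm (M ((shear GP hGPc) (Φ ↑q)))) = ↑(f q)
  have t1 : (shear GP hGPc) (Φ ↑q) = (r ↑q, fun _ => false) := by
    rw [hΦ, shear_apply]
    refine Prod.ext rfl (funext fun c => ?_)
    have : GP (r ↑q) = s2 ↑q := hGPe q
    rw [this]
    simp [s2]
  rw [t1, hM q]
  have t2 : (shear GK hGKc).symm (r ↑(f q), fun _ => false) = Φ ↑(f q) := by
    rw [shear_symm_apply, hΦ]
    refine Prod.ext rfl (funext fun c => ?_)
    have : GK (r ↑(f q)) = s2 ↑(f q) := hGKe (f q)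
    rw [this]
    simp [s2]
  rw [t2, Φ.symm_apply_apply]
end
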